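/- arXiv:math/0703022 — 6 statements merged into one kernel-verified Lean document; each statement's English description precedes it below -/
import Mathlib

section
/- Assume N and {X_i} are independent, the tail of N is of consistent variation, E[X_1^r] < ∞ for some r > 1, E[N] = ∞, and there exists q with 1 ≤ q < r such that limsup_{x→∞} E[N·1(N ≤ x)] / (x^q P[N > x]) < ∞. Then P[S_N > x] ~ P[N > x/μ] as x → ∞. -/
set_option maxHeartbeats 1000000

open MeasureTheory ProbabilityTheory Filter Topology Real Finset

namespace RSTail

variable {Ω : Type*} [MeasureSpace Ω] [IsProbabilityMeasure (ℙ : Measure Ω)]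

lemma tail_pos {N : Ω → ℕ} (hN : Measurable N)
    (hNinf : ¬ Integrable (fun ω => (N ω : ℝ)) ℙ) (x : ℝ) :
    0 < (ℙ {ω | x < (N ω : ℝ)}).toReal := by
  have hne : ℙ {ω | x < (N ω : ℝ)} ≠ 0 := by
    intro h0
    apply hNinf
    have hae : ∀ᵐ ω ∂ℙ, (N ω : ℝ) ≤ x := by
      rw [ae_iff]
      simpa [not_le] using h0
    refine ⟨(measurable_from_top.comp hN : Measurable fun ω => (N ω : ℝ)).aestronglyMeasurable, ?_⟩
    refine (hasFiniteIntegral_const (max x 0)).mono' ?_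
    filter_upwards [hae] with ω hω
    rw [Real.norm_eq_abs, abs_of_nonneg (Nat.cast_nonneg _)]
    exact le_trans hω (le_max_left _ _)
  exact ENNReal.toReal_pos hne (measure_ne_top _ _)

lemma trunc_mean_ge {N : Ω → ℕ} (hN : Measurable N) {x : ℝ} {m : ℕ} (hm : (m : ℝ) ≤ x) :
    ∑ n ∈ Finset.range (m + 1), (n : ℝ) * (ℙ {ω | N ω = n}).toReal
      ≤ ∫ ω, (if (N ω : ℝ) ≤ x then (N ω : ℝ) else 0) ∂ℙ := by
  classical
  have hNr : Measurable fun ω => (N ω : ℝ) := measurable_from_top.comp hN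
  have hfmeas : Measurable fun ω => (if (N ω : ℝ) ≤ x then (N ω : ℝ) else 0) :=
    Measurable.ite (measurableSet_le hNr measurable_const) hNr measurable_const
  have hfint : Integrable (fun ω => (if (N ω : ℝ) ≤ x then (N ω : ℝ) else 0)) ℙ := by
    refine ⟨hfmeas.aestronglyMeasurable, ?_⟩
    refine (hasFiniteIntegral_const (max x 0)).mono' ?_
    refine ae_of_all _ fun ω => ?_
    rw [Real.norm_eq_abs]
    by_cases h : (N ω : ℝ) ≤ x
    · simp only [h, if_true]
      rw [abs_of_nonneg (Nat.cast_nonneg _)]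
      exact le_trans h (le_max_left _ _)
    · simp only [h, if_false, abs_zero]
      exact le_max_right _ _
  have hgint : ∀ n : ℕ, Integrable
      (fun ω => Set.indicator {ω' | N ω' = n} (fun _ => (n:ℝ)) ω) ℙ :=
    fun n => (integrable_const _).indicator (hN (measurableSet_singleton n))
  have hgsum : Integrable
      (fun ω => ∑ n ∈ Finset.range (m+1),
        Set.indicator {ω' | N ω' = n} (fun _ => (n:ℝ)) ω) ℙ :=
    integrable_finset_sum _ (fun n _ => hgint n)
  have hmono : ∀ ω, (∑ n ∈ Finset.range (m+1),
      Set.indicator {ω' | N ω' = n} (fun _ => (n:ℝ)) ω)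
      ≤ (if (N ω : ℝ) ≤ x then (N ω : ℝ) else 0) := by
    intro ω
    have hsum_eq : (∑ n ∈ Finset.range (m+1),
        Set.indicator {ω' | N ω' = n} (fun _ => (n:ℝ)) ω)
        = if N ω ∈ Finset.range (m+1) then ((N ω : ℕ) : ℝ) else 0 := by
      rw [← Finset.sum_ite_eq (Finset.range (m+1)) (N ω) (fun n => (n:ℝ))]
      apply Finset.sum_congr rfl
      intro n _
      rw [Set.indicator_apply]
      simp only [Set.mem_setOf_eq]
    rw [hsum_eq]
    by_cases h : N ω ∈ Finset.range (m+1)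
    · simp only [h, if_true]
      have hNx : (N ω : ℝ) ≤ x := by
        have : N ω ≤ m := Nat.lt_succ_iff.mp (Finset.mem_range.mp h)
        calc (N ω : ℝ) ≤ (m : ℝ) := Nat.cast_le.mpr this
          _ ≤ x := hm
      simp [hNx]
    · simp only [h, if_false]
      by_cases h2 : (N ω : ℝ) ≤ x
      · simp only [h2, if_true]; positivity
      · simp [h2]
  have hint_eq : ∫ ω, (∑ n ∈ Finset.range (m+1),
      Set.indicator {ω' | N ω' = n} (fun _ => (n:ℝ)) ω) ∂ℙ
      = ∑ n ∈ Finset.range (m+1), (n : ℝ) * (ℙ {ω | N ω = n}).toReal := by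
    rw [integral_finset_sum _ (fun n _ => hgint n)]
    apply Finset.sum_congr rfl
    intro n _
    have hseq : {ω' | N ω' = n} = N ⁻¹' {n} := rfl
    rw [hseq, integral_indicator_const _ (hN (measurableSet_singleton n))]
    simp [mul_comm, Measure.real]
  calc ∑ n ∈ Finset.range (m + 1), (n : ℝ) * (ℙ {ω | N ω = n}).toReal
      = ∫ ω, (∑ n ∈ Finset.range (m+1),
          Set.indicator {ω' | N ω' = n} (fun _ => (n:ℝ)) ω) ∂ℙ := hint_eq.symm
    _ ≤ _ := integral_mono hgsum hfint hmono

lemma indep_event {N : Ω → ℕ} (hN : Measurable N) {X : ℕ → Ω → ℝ} (hX : ∀ i, Measurable (X i))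
    (hindep : IndepFun N (fun ω i => X i ω) ℙ) (x : ℝ) (n : ℕ) :
    ℙ ({ω | N ω = n} ∩ {ω | x < ∑ i ∈ Finset.range n, X i ω})
      = ℙ {ω | N ω = n} * ℙ {ω | x < ∑ i ∈ Finset.range n, X i ω} := by
  have hBmeas : MeasurableSet {f : ℕ → ℝ | x < ∑ i ∈ Finset.range n, f i} :=
    measurableSet_lt measurable_const (Finset.measurable_sum _ fun i _ => measurable_pi_apply i)
  exact hindep.measure_inter_preimage_eq_mul {n} {f : ℕ → ℝ | x < ∑ i ∈ Finset.range n, f i}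
    (measurableSet_singleton n) hBmeas

lemma sum_meas {X : ℕ → Ω → ℝ} (hX : ∀ i, Measurable (X i)) (n : ℕ) :
    Measurable (fun ω => ∑ i ∈ Finset.range n, X i ω) :=
  Finset.measurable_sum _ fun i _ => hX i

lemma upper_decomp {N : Ω → ℕ} (hN : Measurable N) {X : ℕ → Ω → ℝ} (hX : ∀ i, Measurable (X i))
    (hindep : IndepFun N (fun ω i => X i ω) ℙ) (x : ℝ) (m : ℕ) :
    (ℙ {ω | x < ∑ i ∈ Finset.range (N ω), X i ω}).toReal ≤
      (ℙ {ω | (m : ℝ) < (N ω : ℝ)}).toReal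
      + ∑ n ∈ Finset.range (m + 1), (ℙ {ω | N ω = n}).toReal *
          (ℙ {ω | x < ∑ i ∈ Finset.range n, X i ω}).toReal := by
  classical
  set E : ℕ → Set Ω := fun n => {ω | N ω = n} ∩ {ω | x < ∑ i ∈ Finset.range n, X i ω} with hE
  have hsub : {ω | x < ∑ i ∈ Finset.range (N ω), X i ω} ⊆
      {ω | (m : ℝ) < (N ω : ℝ)} ∪ ⋃ n ∈ Finset.range (m+1), E n := by
    intro ω hω
    by_cases hn : m < N ω
    · left
      simp only [Set.mem_setOf_eq]
      exact_mod_cast hn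
    · right
      refine Set.mem_biUnion (Finset.mem_range.mpr (Nat.lt_succ_of_le (not_lt.mp hn))) ?_
      exact ⟨rfl, hω⟩
  have hle : ℙ {ω | x < ∑ i ∈ Finset.range (N ω), X i ω}
      ≤ ℙ {ω | (m : ℝ) < (N ω : ℝ)} + ∑ n ∈ Finset.range (m+1), ℙ (E n) := by
    calc ℙ {ω | x < ∑ i ∈ Finset.range (N ω), X i ω}
        ≤ ℙ ({ω | (m : ℝ) < (N ω : ℝ)} ∪ ⋃ n ∈ Finset.range (m+1), E n) := measure_mono hsub
      _ ≤ ℙ {ω | (m : ℝ) < (N ω : ℝ)} + ℙ (⋃ n ∈ Finset.range (m+1), E n) := measure_union_le _ _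
      _ ≤ _ := by
          gcongr
          exact measure_biUnion_finset_le _ _
  have hrhs : (ℙ {ω | (m : ℝ) < (N ω : ℝ)} + ∑ n ∈ Finset.range (m+1), ℙ (E n)).toReal
      = (ℙ {ω | (m : ℝ) < (N ω : ℝ)}).toReal
        + ∑ n ∈ Finset.range (m+1), (ℙ {ω | N ω = n}).toReal *
            (ℙ {ω | x < ∑ i ∈ Finset.range n, X i ω}).toReal := by
    rw [ENNReal.toReal_add (measure_ne_top _ _)]
    · congr 1
      rw [ENNReal.toReal_sum (fun n _ => measure_ne_top _ _)]
      apply Finset.sum_congr rfl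
      intro n _
      rw [hE]
      rw [indep_event hN hX hindep x n, ENNReal.toReal_mul]
    · exact ENNReal.sum_ne_top.mpr fun n _ => measure_ne_top _ _
  calc (ℙ {ω | x < ∑ i ∈ Finset.range (N ω), X i ω}).toReal
      ≤ (ℙ {ω | (m : ℝ) < (N ω : ℝ)} + ∑ n ∈ Finset.range (m+1), ℙ (E n)).toReal := by
        apply ENNReal.toReal_mono _ hle
        exact ENNReal.add_ne_top.mpr ⟨measure_ne_top _ _,
          ENNReal.sum_ne_top.mpr fun n _ => measure_ne_top _ _⟩
    _ = _ := hrhs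

lemma lower_decomp {N : Ω → ℕ} (hN : Measurable N) {X : ℕ → Ω → ℝ} (hX : ∀ i, Measurable (X i))
    (hindep : IndepFun N (fun ω i => X i ω) ℙ) (x : ℝ) (m : ℕ) {ε : ℝ} (hε : ε < 1)
    (h : ∀ n : ℕ, m < n → ENNReal.ofReal (1 - ε) ≤ ℙ {ω | x < ∑ i ∈ Finset.range n, X i ω}) :
    (1 - ε) * (ℙ {ω | (m : ℝ) < (N ω : ℝ)}).toReal ≤
      (ℙ {ω | x < ∑ i ∈ Finset.range (N ω), X i ω}).toReal := by
  classical
  set E : ℕ → Set Ω := fun k =>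
    {ω | N ω = m+1+k} ∩ {ω | x < ∑ i ∈ Finset.range (m+1+k), X i ω} with hE
  have hEmeas : ∀ k, MeasurableSet (E k) := fun k =>
    (hN (measurableSet_singleton _)).inter
      (measurableSet_lt measurable_const (sum_meas hX _))
  have hdisj : Pairwise (Function.onFun Disjoint E) := by
    intro i j hij
    simp only [Function.onFun, hE, Set.disjoint_left]
    rintro ω ⟨h1, -⟩ ⟨h2, -⟩
    simp only [Set.mem_setOf_eq] at h1 h2
    exact hij (by omega : i = j)
  have hNmeas : ∀ k : ℕ, MeasurableSet {ω | N ω = m+1+k} :=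
    fun k => hN (measurableSet_singleton _)
  have hNdisj : Pairwise (Function.onFun Disjoint (fun k => {ω | N ω = m+1+k})) := by
    intro i j hij
    simp only [Function.onFun, Set.disjoint_left]
    rintro ω h1 h2
    simp only [Set.mem_setOf_eq] at h1 h2
    exact hij (by omega : i = j)
  have hUN : (⋃ k, {ω | N ω = m+1+k}) = {ω | (m:ℝ) < (N ω : ℝ)} := by
    ext ω
    simp only [Set.mem_iUnion, Set.mem_setOf_eq]
    constructor
    · rintro ⟨k, hk⟩
      have : m < N ω := by omega
      exact_mod_cast Nat.cast_lt.mpr this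
    · intro hk
      have : m < N ω := by exact_mod_cast hk
      exact ⟨N ω - (m+1), by omega⟩
  have hEsub : (⋃ k, E k) ⊆ {ω | x < ∑ i ∈ Finset.range (N ω), X i ω} := by
    rintro ω hω
    obtain ⟨k, h1, h2⟩ := Set.mem_iUnion.mp hω
    simp only [Set.mem_setOf_eq] at h1 h2 ⊢
    rw [h1]
    exact h2
  have hchain : ENNReal.ofReal (1 - ε) * ℙ {ω | (m:ℝ) < (N ω : ℝ)}
      ≤ ℙ {ω | x < ∑ i ∈ Finset.range (N ω), X i ω} := by
    calc ENNReal.ofReal (1 - ε) * ℙ {ω | (m:ℝ) < (N ω : ℝ)}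
        = ENNReal.ofReal (1 - ε) * ∑' k, ℙ {ω | N ω = m+1+k} := by
          rw [← hUN, measure_iUnion hNdisj hNmeas]
      _ = ∑' k, ENNReal.ofReal (1 - ε) * ℙ {ω | N ω = m+1+k} := ENNReal.tsum_mul_left.symm
      _ ≤ ∑' k, ℙ (E k) := by
          apply ENNReal.tsum_le_tsum
          intro k
          rw [hE]
          rw [indep_event hN hX hindep x (m+1+k),
            mul_comm (ℙ {ω | N ω = m+1+k})]
          exact mul_le_mul_left (h (m+1+k) (by omega)) _
      _ = ℙ (⋃ k, E k) := (measure_iUnion hdisj hEmeas).symm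
      _ ≤ _ := measure_mono hEsub
  have := ENNReal.toReal_mono (measure_ne_top _ _) hchain
  rw [ENNReal.toReal_mul, ENNReal.toReal_ofReal (by linarith)] at this
  exact this

lemma lln_event {X : ℕ → Ω → ℝ} (hX : ∀ i, Measurable (X i))
    (hiid : iIndepFun X ℙ)
    (hid : ∀ i, IdentDistrib (X i) (X 0) ℙ ℙ)
    (hint : Integrable (X 0) ℙ)
    {μ : ℝ} (hμ : μ = ∫ ω, X 0 ω ∂ℙ) (hμpos : 0 < μ)
    {y : ℝ} (hy : y < 1) {ε : ℝ} (hε : 0 < ε) :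
    ∀ᶠ n : ℕ in atTop,
      ℙ {ω | ∑ i ∈ Finset.range n, X i ω ≤ n * (μ * y)} ≤ ENNReal.ofReal ε := by
  have hpair : Pairwise (Function.onFun (IndepFun · · ℙ) X) := fun i j hij => hiid.indepFun hij
  have hslln := strong_law_ae_real X hint hpair hid
  have hslln' : ∀ᵐ ω ∂ℙ, Tendsto (fun n : ℕ => (∑ i ∈ Finset.range n, X i ω) / n)
      atTop (𝓝 μ) := by
    rw [hμ]
    exact hslln
  have hmeas : ∀ n : ℕ, AEStronglyMeasurable
      (fun ω => (∑ i ∈ Finset.range n, X i ω) / (n:ℝ)) ℙ :=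
    fun n => ((Finset.measurable_sum _ fun i _ => hX i).div_const _).aestronglyMeasurable
  have htm : TendstoInMeasure ℙ (fun n ω => (∑ i ∈ Finset.range n, X i ω) / (n:ℝ))
      atTop (fun _ => μ) := tendstoInMeasure_of_tendsto_ae hmeas hslln'
  have hδ : 0 < μ * (1 - y) := mul_pos hμpos (by linarith)
  have h0 := tendstoInMeasure_iff_dist.mp htm (μ * (1 - y)) hδ
  have hev : ∀ᶠ n : ℕ in atTop,
      ℙ {ω | μ * (1-y) ≤ dist ((∑ i ∈ Finset.range n, X i ω) / (n:ℝ)) μ}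
        ≤ ENNReal.ofReal ε := by
    refine h0.eventually (eventually_le_nhds ?_)
    simpa using hε
  filter_upwards [hev, eventually_ge_atTop 1] with n hn hn1
  refine le_trans (measure_mono ?_) hn
  intro ω hω
  simp only [Set.mem_setOf_eq] at hω ⊢
  have hnpos : (0:ℝ) < n := by exact_mod_cast hn1
  have hdiv : (∑ i ∈ Finset.range n, X i ω) / (n:ℝ) ≤ μ * y := by
    rw [div_le_iff₀ hnpos]
    calc (∑ i ∈ Finset.range n, X i ω) ≤ n * (μ * y) := hω
      _ = μ * y * n := by ring
  rw [Real.dist_eq]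
  rw [abs_sub_comm]
  rw [le_abs]
  left
  linarith

lemma cv_get {N : Ω → ℕ} (hN : Measurable N)
    (hNinf : ¬ Integrable (fun ω => (N ω : ℝ)) ℙ)
    (hCV : Tendsto (fun y : ℝ =>
        limsup (fun x : ℝ =>
          (ℙ {ω | x * y < (N ω : ℝ)}).toReal / (ℙ {ω | x < (N ω : ℝ)}).toReal) atTop)
        (𝓝[<] (1 : ℝ)) (𝓝 1)) {ε : ℝ} (hε : 0 < ε) :
    ∃ y : ℝ, 0 < y ∧ y < 1 ∧ ∀ᶠ x in atTop,
      (ℙ {ω | x * y < (N ω : ℝ)}).toReal ≤ (1 + ε) * (ℙ {ω | x < (N ω : ℝ)}).toReal := by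
  have hTpos : ∀ z : ℝ, 0 < (ℙ {ω | z < (N ω : ℝ)}).toReal := by
    intro z
    have hne : ℙ {ω | z < (N ω : ℝ)} ≠ 0 := by
      intro h0
      apply hNinf
      have hae : ∀ᵐ ω ∂ℙ, (N ω : ℝ) ≤ z := by
        rw [ae_iff]
        simpa [not_le] using h0
      refine ⟨(measurable_from_top.comp hN :
        Measurable fun ω => (N ω : ℝ)).aestronglyMeasurable, ?_⟩
      refine (hasFiniteIntegral_const (max z 0)).mono' ?_
      filter_upwards [hae] with ω hω
      rw [Real.norm_eq_abs, abs_of_nonneg (Nat.cast_nonneg _)]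
      exact le_trans hω (le_max_left _ _)
    exact ENNReal.toReal_pos hne (measure_ne_top _ _)
  set g : ℝ → ℝ := fun y => limsup (fun x : ℝ =>
      (ℙ {ω | x * y < (N ω : ℝ)}).toReal / (ℙ {ω | x < (N ω : ℝ)}).toReal) atTop with hgdef
  have h1 : ∀ᶠ y in 𝓝[<] (1:ℝ), g y ∈ Set.Ioo (1/2 : ℝ) (1 + ε/2) := by
    apply hCV
    apply Ioo_mem_nhds <;> linarith
  have h2 : ∀ᶠ y in 𝓝[<] (1:ℝ), 0 < y ∧ y < 1 := by
    have ha : ∀ᶠ y in 𝓝[<] (1:ℝ), 0 < y :=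
      eventually_nhdsWithin_of_eventually_nhds (eventually_gt_nhds one_pos)
    have hb : ∀ᶠ y in 𝓝[<] (1:ℝ), y < 1 :=
      eventually_mem_nhdsWithin.mono fun y hy => hy
    exact ha.and hb
  obtain ⟨y, hgy, hy0, hy1⟩ := (h1.and h2).exists
  refine ⟨y, hy0, hy1, ?_⟩
  set f : ℝ → ℝ := fun x =>
    (ℙ {ω | x * y < (N ω : ℝ)}).toReal / (ℙ {ω | x < (N ω : ℝ)}).toReal with hfdef
  have hbdd : IsBoundedUnder (· ≤ ·) atTop f := by
    by_contra hb
    have hempty : {a : ℝ | ∀ᶠ x in atTop, f x ≤ a} = ∅ := by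
      ext a
      simp only [Set.mem_setOf_eq, Set.mem_empty_iff_false, iff_false]
      intro h
      exact hb ⟨a, eventually_map.mpr h⟩
    have : g y = 0 := by
      show limsup f atTop = 0
      rw [limsup_eq, hempty, Real.sInf_empty]
    rw [this] at hgy
    have := hgy.1
    norm_num at this
  have hlt : ∀ᶠ x in atTop, f x < 1 + ε := by
    refine eventually_lt_of_limsup_lt ?_ hbdd
    calc limsup f atTop = g y := rfl
      _ < 1 + ε := lt_of_lt_of_le hgy.2 (by linarith)
  filter_upwards [hlt] with x hx
  have hT := hTpos x
  rw [hfdef] at hx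
  have := (div_lt_iff₀ hT).mp hx
  linarith

lemma tail_poly_lb {N : Ω → ℕ} (hN : Measurable N)
    (hNinf : ¬ Integrable (fun ω => (N ω : ℝ)) ℙ)
    (hCV : Tendsto (fun y : ℝ =>
        limsup (fun x : ℝ =>
          (ℙ {ω | x * y < (N ω : ℝ)}).toReal / (ℙ {ω | x < (N ω : ℝ)}).toReal) atTop)
        (𝓝[<] (1 : ℝ)) (𝓝 1)) :
    ∃ A : ℝ, 0 < A ∧ ∀ᶠ x in atTop, x ^ (-A) ≤ (ℙ {ω | x < (N ω : ℝ)}).toReal := by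
  set T : ℝ → ℝ := fun z => (ℙ {ω | z < (N ω : ℝ)}).toReal with hTdef
  have hTpos : ∀ z, 0 < T z := tail_pos hN hNinf
  have hTanti : Antitone T := by
    intro z w hzw
    refine ENNReal.toReal_mono (measure_ne_top _ _) (measure_mono ?_)
    intro ω hω; exact lt_of_le_of_lt hzw hω
  obtain ⟨y, hy0, hy1, hyev⟩ := cv_get hN hNinf hCV one_pos
  have hyev' : ∀ᶠ x : ℝ in atTop, T (x * y) ≤ 2 * T x := by
    filter_upwards [hyev] with x hx
    calc T (x*y) ≤ (1+1) * T x := hx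
      _ = 2 * T x := by norm_num
  obtain ⟨x₁, hx₁⟩ := hyev'.exists_forall_of_atTop
  set x₀ : ℝ := max x₁ 1 with hx₀def
  have hx₀1 : (1:ℝ) ≤ x₀ := le_max_right _ _
  have hx₀pos : (0:ℝ) < x₀ := lt_of_lt_of_le one_pos hx₀1
  have hx₀ : ∀ x ≥ x₀, T (x * y) ≤ 2 * T x := fun x hx =>
    hx₁ x (le_trans (le_max_left _ _) hx)
  have hy' : (1:ℝ) < 1/y := by
    rw [lt_div_iff₀ hy0]; linarith
  -- induction
  have hind : ∀ k : ℕ, ∀ x : ℝ, x₀ ≤ x → x * y^k ≤ x₀ → (1/2:ℝ)^k * T x₀ ≤ T x := by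
    intro k
    induction k with
    | zero =>
      intro x hx1 hx2
      simp only [pow_zero, one_mul, mul_one] at hx2 ⊢
      exact hTanti hx2
    | succ k ih =>
      intro x hx1 hx2
      have hkey : T (x * y) ≤ 2 * T x := hx₀ x hx1
      by_cases hxy : x₀ ≤ x * y
      · have hIH : (1/2:ℝ)^k * T x₀ ≤ T (x * y) := by
          apply ih (x*y) hxy
          calc x * y * y^k = x * y^(k+1) := by ring
            _ ≤ x₀ := hx2
        have : (1/2:ℝ)^(k+1) * T x₀ = (1/2) * ((1/2:ℝ)^k * T x₀) := by ring
        rw [this]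
        linarith
      · push_neg at hxy
        have hT1 : T x₀ ≤ T (x * y) := hTanti hxy.le
        have hstep : (1/2:ℝ)^(k+1) * T x₀ ≤ (1/2) * T x₀ := by
          have h1 : (1/2:ℝ)^(k+1) ≤ (1/2:ℝ)^1 :=
            pow_le_pow_of_le_one (by norm_num) (by norm_num) (by omega)
          have := (hTpos x₀).le
          nlinarith
        have : (1/2) * T x₀ ≤ T x := by linarith
        linarith
  set A₀ : ℝ := Real.log 2 / Real.log (1/y) with hA₀def
  have hlog2 : (0:ℝ) < Real.log 2 := Real.log_pos (by norm_num)
  have hlogy : (0:ℝ) < Real.log (1/y) := Real.log_pos hy'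
  have hA₀pos : 0 < A₀ := div_pos hlog2 hlogy
  refine ⟨A₀ + 1, by linarith, ?_⟩
  filter_upwards [eventually_ge_atTop x₀, eventually_ge_atTop (2 / T x₀ + 1)]
    with x hxx₀ hxT
  have hx0 : (0:ℝ) < x := lt_of_lt_of_le hx₀pos hxx₀
  have hz1 : (1:ℝ) ≤ x / x₀ := (one_le_div hx₀pos).mpr hxx₀
  have hz0 : (0:ℝ) < x / x₀ := by linarith
  set k : ℕ := ⌈Real.logb (1/y) (x/x₀)⌉₊ with hkdef
  have hlb_nonneg : 0 ≤ Real.logb (1/y) (x/x₀) := Real.logb_nonneg hy' hz1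
  have hkge : Real.logb (1/y) (x/x₀) ≤ (k:ℝ) := Nat.le_ceil _
  have hkle : (k:ℝ) ≤ Real.logb (1/y) (x/x₀) + 1 := (Nat.ceil_lt_add_one hlb_nonneg).le
  -- x * y^k ≤ x₀
  have hxk : x * y^k ≤ x₀ := by
    have h1 : x / x₀ ≤ (1/y) ^ (k:ℝ) := by
      calc x / x₀ = (1/y) ^ (Real.logb (1/y) (x/x₀)) :=
            (Real.rpow_logb (by positivity) (ne_of_gt hy') hz0).symm
        _ ≤ (1/y) ^ (k:ℝ) := by
            apply Real.rpow_le_rpow_of_exponent_le hy'.le hkge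
    rw [Real.rpow_natCast] at h1
    have h2 : x ≤ x₀ * (1/y)^k := by
      rw [div_le_iff₀ hx₀pos] at h1
      linarith [h1]
    have h3 : (1/y:ℝ)^k * y^k = 1 := by
      rw [← mul_pow]
      rw [one_div_mul_cancel (ne_of_gt hy0), one_pow]
    calc x * y^k ≤ (x₀ * (1/y)^k) * y^k :=
          mul_le_mul_of_nonneg_right h2 (by positivity)
      _ = x₀ * ((1/y)^k * y^k) := by ring
      _ = x₀ := by rw [h3, mul_one]
  have hTk := hind k x hxx₀ hxk
  -- (1/2)^k ≥ (1/2) * x^(-A₀)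
  have hpow : (1/2:ℝ) * x ^ (-A₀) ≤ (1/2:ℝ)^k := by
    have e1 : ((1/2:ℝ))^k = (2:ℝ) ^ (-(k:ℝ)) := by
      rw [Real.rpow_neg (by norm_num : (0:ℝ) ≤ 2), Real.rpow_natCast, one_div, inv_pow]
    have e2 : (2:ℝ) ^ (-(Real.logb (1/y) (x/x₀) + 1)) ≤ (2:ℝ)^(-(k:ℝ)) :=
      Real.rpow_le_rpow_of_exponent_le (by norm_num) (by linarith)
    have e3 : (2:ℝ) ^ (-(Real.logb (1/y) (x/x₀) + 1))
        = (1/2) * (x/x₀) ^ (-A₀) := by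
      rw [show -(Real.logb (1/y) (x/x₀) + 1)
          = -(Real.logb (1/y) (x/x₀)) + (-1) by ring]
      rw [Real.rpow_add (by norm_num : (0:ℝ) < 2), Real.rpow_neg_one]
      rw [Real.rpow_def_of_pos (by norm_num : (0:ℝ) < 2),
        Real.rpow_def_of_pos hz0, Real.logb]
      rw [hA₀def]
      have harg : Real.log 2 * -(Real.log (x/x₀) / Real.log (1/y))
          = Real.log (x/x₀) * -(Real.log 2 / Real.log (1/y)) := by ring
      rw [harg]
      ring
    have e4 : x ^ (-A₀) ≤ (x/x₀) ^ (-A₀) := by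
      rw [Real.rpow_neg hx0.le, Real.rpow_neg hz0.le]
      have hbase : x / x₀ ≤ x := div_le_self hx0.le hx₀1
      have h5 : (x/x₀) ^ A₀ ≤ x ^ A₀ := Real.rpow_le_rpow hz0.le hbase hA₀pos.le
      exact inv_anti₀ (Real.rpow_pos_of_pos hz0 _) h5
    calc (1/2:ℝ) * x ^ (-A₀) ≤ (1/2) * (x/x₀) ^ (-A₀) := by
          apply mul_le_mul_of_nonneg_left e4 (by norm_num)
      _ = (2:ℝ) ^ (-(Real.logb (1/y) (x/x₀) + 1)) := e3.symm
      _ ≤ (2:ℝ)^(-(k:ℝ)) := e2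
      _ = (1/2:ℝ)^k := e1.symm
  calc x ^ (-(A₀+1)) = x ^ (-A₀) * x⁻¹ := by
        rw [show -(A₀+1) = -A₀ + (-1) by ring, Real.rpow_add hx0, Real.rpow_neg_one]
    _ ≤ x ^ (-A₀) * ((1/2) * T x₀) := by
        apply mul_le_mul_of_nonneg_left _ (Real.rpow_pos_of_pos hx0 _).le
        have h2T : 2 / T x₀ ≤ x := by linarith
        have hxinv := one_div_le_one_div_of_le
          (div_pos (by norm_num) (hTpos x₀)) h2T
        rw [one_div_div] at hxinv
        rw [← one_div]
        linarith
    _ = ((1/2) * x ^ (-A₀)) * T x₀ := by ring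
    _ ≤ (1/2:ℝ)^k * T x₀ := mul_le_mul_of_nonneg_right hpow (hTpos x₀).le
    _ ≤ T x := hTk

lemma exp_quad {z w : ℝ} (hz : 0 ≤ z) (hzw : z ≤ w) :
    Real.exp z ≤ 1 + z + z^2 * Real.exp w := by
  have h1 : (1 - z) * Real.exp z ≤ 1 := by
    have h := Real.add_one_le_exp (-z)
    have hprod : Real.exp (-z) * Real.exp z = 1 := by
      rw [← Real.exp_add]; simp
    nlinarith [Real.exp_pos z]
  have h2 : Real.exp z ≤ Real.exp w := Real.exp_le_exp.mpr hzw
  -- e^z ≤ 1 + z e^z ; z e^z ≤ z + z^2 e^z ; z^2 e^z ≤ z^2 e^w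
  nlinarith [mul_le_mul_of_nonneg_left h2 (mul_nonneg hz hz),
    mul_le_mul_of_nonneg_left h1 hz, Real.exp_pos z]

lemma fuk_nagaev {X : ℕ → Ω → ℝ} (hX : ∀ i, Measurable (X i))
    (hiid : iIndepFun X ℙ)
    (hid : ∀ i, IdentDistrib (X i) (X 0) ℙ ℙ)
    (hpos : ∀ i, 0 ≤ᵐ[ℙ] X i)
    (hint : Integrable (X 0) ℙ)
    {μ : ℝ} (hμ : μ = ∫ ω, X 0 ω ∂ℙ) (hμpos : 0 < μ)
    {r : ℝ} (hr : 1 < r)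
    (hmom : Integrable (fun ω => |X 0 ω| ^ r) ℙ)
    {a : ℝ} (ha : 0 < a) (ha1 : a < 1) (B : ℝ) :
    ∃ C : ℝ, 0 < C ∧ ∀ᶠ x : ℝ in atTop, ∀ n : ℕ, (n : ℝ) * μ ≤ (1 - a) * x →
      (ℙ {ω | x < ∑ i ∈ Finset.range n, X i ω}).toReal ≤ C * n / x ^ r + x ^ (-B) := by
  classical
  set p : ℝ := min r 2 with hpdef
  have hp1 : 1 < p := lt_min hr one_lt_two
  have hpr : p ≤ r := min_le_left _ _
  have hp2 : p ≤ 2 := min_le_right _ _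
  set β : ℝ := (p - 1)/2 with hβdef
  have hβ : 0 < β := by rw [hβdef]; linarith
  set Mr : ℝ := ∫ ω, |X 0 ω| ^ r ∂ℙ with hMrdef
  have hMr0 : 0 ≤ Mr := integral_nonneg (fun ω => Real.rpow_nonneg (abs_nonneg _) _)
  set Aq : ℝ := 1 + Mr with hAqdef
  have hAq0 : 0 < Aq := by rw [hAqdef]; linarith
  set K : ℝ := max 1 ((B+1)/(a*β)) with hKdef
  have hK1 : 1 ≤ K := le_max_left _ _
  have hK0 : 0 < K := lt_of_lt_of_le one_pos hK1
  have hKB : B + 1 ≤ a*β*K := by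
    have h := le_max_right 1 ((B+1)/(a*β))
    rw [div_le_iff₀ (by positivity : (0:ℝ) < a*β)] at h
    calc B + 1 ≤ K * (a*β) := h
      _ = a*β*K := by ring
  refine ⟨K^r * (Mr+1), by positivity, ?_⟩
  set D : ℝ := β^2*K^2*K^(p-2)*Aq/μ with hDdef
  have hlim : Tendsto (fun x : ℝ => D * ((Real.log x)^2 * x^(-β))) atTop (𝓝 0) := by
    have h2 := (isLittleO_log_rpow_rpow_atTop 2 hβ).tendsto_div_nhds_zero
    have h1 : Tendsto (fun x : ℝ => (Real.log x)^2 * x^(-β)) atTop (𝓝 0) := by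
      refine h2.congr' ?_
      filter_upwards [eventually_ge_atTop (1:ℝ)] with x hx
      have hx0 : (0:ℝ) < x := by linarith
      rw [show ((2:ℝ)) = ((2:ℕ):ℝ) by norm_num, Real.rpow_natCast,
        Real.rpow_neg hx0.le, div_eq_mul_inv]
    simpa using h1.const_mul D
  have hE := hlim.eventually (eventually_le_nhds one_pos)
  filter_upwards [hE, eventually_ge_atTop (Real.exp 1), eventually_ge_atTop K,
    eventually_ge_atTop (1:ℝ)] with x hEx hxe hxK hx1
  intro n hn
  have hx0 : (0:ℝ) < x := by linarith
  have hlog1 : (1:ℝ) ≤ Real.log x := by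
    rw [Real.le_log_iff_exp_le hx0]
    simpa using hxe
  have hlog0 : (0:ℝ) ≤ Real.log x := by linarith
  set u : ℝ := x / K with hudef
  have hu0 : (0:ℝ) < u := by positivity
  have hu1 : (1:ℝ) ≤ u := by
    rw [hudef, le_div_iff₀ hK0]
    simpa using hxK
  set lam : ℝ := β * K * Real.log x / x with hlamdef
  have hlam0 : (0:ℝ) ≤ lam := by positivity
  have hlamu : lam * u = β * Real.log x := by
    rw [hlamdef, hudef]
    field_simp
  set Y : ℕ → Ω → ℝ := fun i ω => min (X i ω) u with hYdef
  have hYmeas : ∀ i, Measurable (Y i) := fun i => (hX i).min measurable_const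
  have hYle : ∀ i ω, Y i ω ≤ u := fun i ω => min_le_right _ _
  have hYleX : ∀ i ω, Y i ω ≤ X i ω := fun i ω => min_le_left _ _
  have hYpos : ∀ i, 0 ≤ᵐ[ℙ] Y i := fun i =>
    (hpos i).mono fun ω hω => le_min hω hu0.le
  -- event inclusion
  have hsub : {ω | x < ∑ i ∈ Finset.range n, X i ω} ⊆
      (⋃ i ∈ Finset.range n, {ω | u < X i ω}) ∪
        {ω | x ≤ ∑ i ∈ Finset.range n, Y i ω} := by
    intro ω hω
    by_cases hall : ∀ i ∈ Finset.range n, X i ω ≤ u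
    · right
      have hsum : ∑ i ∈ Finset.range n, Y i ω = ∑ i ∈ Finset.range n, X i ω :=
        Finset.sum_congr rfl fun i hi => min_eq_left (hall i hi)
      simp only [Set.mem_setOf_eq] at hω ⊢
      rw [hsum]
      exact hω.le
    · left
      push_neg at hall
      obtain ⟨i, hi, hiu⟩ := hall
      exact Set.mem_biUnion hi hiu
  -- part 1 : truncation error
  have hP1 : (ℙ (⋃ i ∈ Finset.range n, {ω | u < X i ω})).toReal
      ≤ n * (Mr * K^r / x^r) := by
    have hur : (0:ℝ) < u^r := Real.rpow_pos_of_pos hu0 r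
    have hMarkov : (ℙ {ω | u < X 0 ω}).toReal ≤ Mr / u^r := by
      have hsub2 : {ω | u < X 0 ω} ⊆ {ω | u^r ≤ |X 0 ω| ^ r} := by
        intro ω hω
        simp only [Set.mem_setOf_eq] at hω ⊢
        calc u^r ≤ (X 0 ω)^r :=
              Real.rpow_le_rpow hu0.le hω.le (by linarith)
          _ ≤ |X 0 ω|^r :=
              Real.rpow_le_rpow (by linarith) (le_abs_self _) (by linarith)
      have hm := mul_meas_ge_le_integral_of_nonneg
        (ae_of_all _ fun ω => Real.rpow_nonneg (abs_nonneg _) r) hmom (u^r)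
      have hmono2 : (ℙ {ω | u < X 0 ω}).toReal
          ≤ (ℙ {ω | u^r ≤ |X 0 ω|^r}).toReal :=
        ENNReal.toReal_mono (measure_ne_top _ _) (measure_mono hsub2)
      calc (ℙ {ω | u < X 0 ω}).toReal ≤ (ℙ {ω | u^r ≤ |X 0 ω|^r}).toReal := hmono2
        _ ≤ Mr / u^r := by
            rw [le_div_iff₀ hur]
            calc (ℙ {ω | u^r ≤ |X 0 ω|^r}).toReal * u^r
                = u^r * (ℙ {ω | u^r ≤ |X 0 ω|^r}).toReal := by ring
              _ ≤ Mr := hm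
    have hid' : ∀ i, ℙ {ω | u < X i ω} = ℙ {ω | u < X 0 ω} := by
      intro i
      exact (hid i).measure_mem_eq (measurableSet_Ioi : MeasurableSet (Set.Ioi u))
    have huKx : Mr / u^r = Mr * K^r / x^r := by
      rw [hudef, Real.div_rpow hx0.le hK0.le]
      field_simp
    calc (ℙ (⋃ i ∈ Finset.range n, {ω | u < X i ω})).toReal
        ≤ (∑ i ∈ Finset.range n, ℙ {ω | u < X i ω}).toReal :=
          ENNReal.toReal_mono (ENNReal.sum_ne_top.mpr fun i _ => measure_ne_top _ _)
            (measure_biUnion_finset_le _ _)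
      _ = ∑ i ∈ Finset.range n, (ℙ {ω | u < X i ω}).toReal :=
          ENNReal.toReal_sum fun i _ => measure_ne_top _ _
      _ = ∑ i ∈ Finset.range n, (ℙ {ω | u < X 0 ω}).toReal := by
          exact Finset.sum_congr rfl fun i _ => by rw [hid' i]
      _ = n * (ℙ {ω | u < X 0 ω}).toReal := by
          rw [Finset.sum_const, Finset.card_range, nsmul_eq_mul]
      _ ≤ n * (Mr / u^r) := by
          apply mul_le_mul_of_nonneg_left hMarkov (Nat.cast_nonneg n)
      _ = n * (Mr * K^r / x^r) := by rw [huKx]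
  -- part 2 : Chernoff bound for the truncated sum
  have hP2 : (ℙ {ω | x ≤ ∑ i ∈ Finset.range n, Y i ω}).toReal ≤ x ^ (-B) := by
    -- integrability facts
    have hYint : Integrable (Y 0) ℙ := by
      refine ⟨(hYmeas 0).aestronglyMeasurable, ?_⟩
      refine (hasFiniteIntegral_const u).mono' ?_
      filter_upwards [hYpos 0] with ω hω
      rw [Real.norm_eq_abs, abs_of_nonneg hω]
      exact hYle 0 ω
    have hY2int : Integrable (fun ω => (Y 0 ω)^2) ℙ := by
      refine ⟨((hYmeas 0).pow_const 2).aestronglyMeasurable, ?_⟩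
      refine (hasFiniteIntegral_const (u^2)).mono' ?_
      filter_upwards [hYpos 0] with ω hω
      rw [Real.norm_eq_abs, abs_of_nonneg (by positivity)]
      have h1 := hYle 0 ω
      exact pow_le_pow_left₀ hω h1 2
    have hexpYint : Integrable (fun ω => Real.exp (lam * Y 0 ω)) ℙ := by
      refine ⟨(((hYmeas 0).const_mul lam).exp).aestronglyMeasurable, ?_⟩
      refine (hasFiniteIntegral_const (Real.exp (lam * u))).mono' ?_
      refine ae_of_all _ fun ω => ?_
      rw [Real.norm_eq_abs, abs_of_pos (Real.exp_pos _)]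
      exact Real.exp_le_exp.mpr (mul_le_mul_of_nonneg_left (hYle 0 ω) hlam0)
    -- moment bounds
    have hEY : ∫ ω, Y 0 ω ∂ℙ ≤ μ := by
      rw [hμ]
      exact integral_mono hYint hint (fun ω => hYleX 0 ω)
    have hEY0 : 0 ≤ ∫ ω, Y 0 ω ∂ℙ := integral_nonneg_of_ae (hYpos 0)
    have hrhs2int : Integrable (fun ω => u^(2-p) * (1 + |X 0 ω|^r)) ℙ :=
      ((integrable_const 1).add hmom).const_mul _
    have hEY2 : ∫ ω, (Y 0 ω)^2 ∂ℙ ≤ u^(2-p) * Aq := by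
      have hptw : ∀ᵐ ω ∂ℙ, (Y 0 ω)^2 ≤ u^(2-p) * (1 + |X 0 ω|^r) := by
        filter_upwards [hpos 0] with ω hω
        have hup : (1:ℝ) ≤ u^(2-p) := by
          calc (1:ℝ) = 1 ^ (2-p) := (Real.one_rpow _).symm
            _ ≤ u^(2-p) := Real.rpow_le_rpow (by norm_num) hu1 (by linarith)
        have habs : |X 0 ω| = X 0 ω := abs_of_nonneg hω
        by_cases hv : X 0 ω ≤ 1
        · have hY01 : Y 0 ω ≤ 1 := le_trans (hYleX 0 ω) hv
          have hY00 : 0 ≤ Y 0 ω := le_min hω (by linarith)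
          have h1 : (Y 0 ω)^2 ≤ 1 := by nlinarith
          have h2 : (0:ℝ) ≤ |X 0 ω|^r := Real.rpow_nonneg (abs_nonneg _) _
          nlinarith
        · push_neg at hv
          have hY00 : 0 < Y 0 ω := lt_min (by linarith) (by linarith)
          have hYsq : (Y 0 ω)^2 = (Y 0 ω)^((2-p) + p) := by
            rw [show (2-p) + p = ((2:ℕ):ℝ) by push_cast; ring, Real.rpow_natCast]
          rw [hYsq, Real.rpow_add hY00]
          have h1 : (Y 0 ω)^(2-p) ≤ u^(2-p) :=
            Real.rpow_le_rpow hY00.le (hYle 0 ω) (by linarith)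
          have h2 : (Y 0 ω)^p ≤ |X 0 ω|^r := by
            calc (Y 0 ω)^p ≤ (X 0 ω)^p :=
                  Real.rpow_le_rpow hY00.le (hYleX 0 ω) (by linarith)
              _ ≤ (X 0 ω)^r := Real.rpow_le_rpow_of_exponent_le hv.le hpr
              _ = |X 0 ω|^r := by rw [habs]
          calc (Y 0 ω)^(2-p) * (Y 0 ω)^p ≤ u^(2-p) * |X 0 ω|^r := by
                apply mul_le_mul h1 h2 (Real.rpow_nonneg hY00.le _)
                  (Real.rpow_nonneg (by positivity) _)
            _ ≤ u^(2-p) * (1 + |X 0 ω|^r) := by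
                apply mul_le_mul_of_nonneg_left _ (Real.rpow_nonneg hu0.le _)
                have : (0:ℝ) ≤ 1 := by norm_num
                linarith
      calc ∫ ω, (Y 0 ω)^2 ∂ℙ ≤ ∫ ω, u^(2-p) * (1 + |X 0 ω|^r) ∂ℙ :=
            integral_mono_ae hY2int hrhs2int hptw
        _ = u^(2-p) * (1 + Mr) := by
            rw [integral_const_mul, integral_add (integrable_const 1) hmom]
            simp [hMrdef]
        _ = u^(2-p) * Aq := by rw [hAqdef]
    have hEY20 : 0 ≤ ∫ ω, (Y 0 ω)^2 ∂ℙ := integral_nonneg (fun ω => sq_nonneg _)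
    -- mgf bound
    set s : ℝ := lam * μ + lam^2 * Real.exp (lam*u) * (u^(2-p) * Aq) with hsdef
    have hmgf : mgf (Y 0) ℙ lam ≤ Real.exp s := by
      have hptw2 : ∀ᵐ ω ∂ℙ, Real.exp (lam * Y 0 ω)
          ≤ 1 + lam * Y 0 ω + (lam^2 * Real.exp (lam*u)) * (Y 0 ω)^2 := by
        filter_upwards [hYpos 0] with ω hω
        have hz : 0 ≤ lam * Y 0 ω := mul_nonneg hlam0 hω
        have hzw : lam * Y 0 ω ≤ lam * u := mul_le_mul_of_nonneg_left (hYle 0 ω) hlam0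
        have := exp_quad hz hzw
        calc Real.exp (lam * Y 0 ω) ≤ 1 + lam * Y 0 ω + (lam * Y 0 ω)^2 * Real.exp (lam*u) := this
          _ = 1 + lam * Y 0 ω + (lam^2 * Real.exp (lam*u)) * (Y 0 ω)^2 := by ring
      have hrhsint : Integrable
          (fun ω => 1 + lam * Y 0 ω + (lam^2 * Real.exp (lam*u)) * (Y 0 ω)^2) ℙ :=
        ((integrable_const 1).add (hYint.const_mul lam)).add (hY2int.const_mul _)
      have h1 : mgf (Y 0) ℙ lam
          ≤ ∫ ω, (1 + lam * Y 0 ω + (lam^2 * Real.exp (lam*u)) * (Y 0 ω)^2) ∂ℙ :=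
        integral_mono_ae hexpYint hrhsint hptw2
      have h2 : ∫ ω, (1 + lam * Y 0 ω + (lam^2 * Real.exp (lam*u)) * (Y 0 ω)^2) ∂ℙ
          = 1 + lam * (∫ ω, Y 0 ω ∂ℙ) + (lam^2 * Real.exp (lam*u)) * ∫ ω, (Y 0 ω)^2 ∂ℙ := by
        have i1 : Integrable (fun ω => 1 + lam * Y 0 ω) ℙ :=
          (integrable_const 1).add (hYint.const_mul lam)
        have i2 : Integrable (fun ω => (lam^2 * Real.exp (lam*u)) * (Y 0 ω)^2) ℙ :=
          hY2int.const_mul _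
        rw [integral_add i1 i2, integral_add (integrable_const 1) (hYint.const_mul lam),
          integral_const_mul, integral_const_mul]
        simp
      have h3 : 1 + lam * (∫ ω, Y 0 ω ∂ℙ) + (lam^2 * Real.exp (lam*u)) * ∫ ω, (Y 0 ω)^2 ∂ℙ
          ≤ 1 + s := by
        rw [hsdef]
        have t1 : lam * (∫ ω, Y 0 ω ∂ℙ) ≤ lam * μ := mul_le_mul_of_nonneg_left hEY hlam0
        have t2 : (lam^2 * Real.exp (lam*u)) * ∫ ω, (Y 0 ω)^2 ∂ℙ
            ≤ lam^2 * Real.exp (lam*u) * (u^(2-p) * Aq) :=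
          mul_le_mul_of_nonneg_left hEY2 (by positivity)
        linarith
      have h4 : 1 + s ≤ Real.exp s := by
        have := Real.add_one_le_exp s
        linarith
      calc mgf (Y 0) ℙ lam ≤ _ := h1
        _ = _ := h2
        _ ≤ 1 + s := h3
        _ ≤ Real.exp s := h4
    -- Chernoff
    have hYsum_eq : (fun ω => ∑ i ∈ Finset.range n, Y i ω)
        = ∑ i ∈ Finset.range n, Y i := by
      funext ω
      simp
    have hexpsumint : Integrable (fun ω => Real.exp (lam * (∑ i ∈ Finset.range n, Y i ω))) ℙ := by
      refine ⟨((Finset.measurable_sum _ fun i _ => hYmeas i).const_mul lam).exp.aestronglyMeasurable, ?_⟩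
      refine (hasFiniteIntegral_const (Real.exp (lam * (n * u)))).mono' ?_
      refine ae_of_all _ fun ω => ?_
      rw [Real.norm_eq_abs, abs_of_pos (Real.exp_pos _)]
      apply Real.exp_le_exp.mpr
      apply mul_le_mul_of_nonneg_left _ hlam0
      calc ∑ i ∈ Finset.range n, Y i ω ≤ ∑ i ∈ Finset.range n, u :=
            Finset.sum_le_sum fun i _ => hYle i ω
        _ = n * u := by rw [Finset.sum_const, Finset.card_range, nsmul_eq_mul]
    have hcher := measure_ge_le_exp_mul_mgf (μ := ℙ)
      (X := fun ω => ∑ i ∈ Finset.range n, Y i ω) x hlam0 hexpsumint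
    have hYindep : iIndepFun Y ℙ :=
      hiid.comp (fun _ z => min z u) (fun _ => measurable_id.min measurable_const)
    have hmgf_sum : mgf (fun ω => ∑ i ∈ Finset.range n, Y i ω) ℙ lam
        = (mgf (Y 0) ℙ lam)^n := by
      rw [hYsum_eq, hYindep.mgf_sum hYmeas]
      have hmgf_eq : ∀ i, mgf (Y i) ℙ lam = mgf (Y 0) ℙ lam := by
        intro i
        have hd : IdentDistrib (fun ω => Real.exp (lam * Y i ω))
            (fun ω => Real.exp (lam * Y 0 ω)) ℙ ℙ :=
          ((hid i).comp (measurable_id.min measurable_const)).comp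
            ((measurable_id.const_mul lam).exp)
        exact hd.integral_eq
      calc ∏ i ∈ Finset.range n, mgf (Y i) ℙ lam
          = ∏ i ∈ Finset.range n, mgf (Y 0) ℙ lam :=
            Finset.prod_congr rfl fun i _ => hmgf_eq i
        _ = (mgf (Y 0) ℙ lam)^n := by
            rw [Finset.prod_const, Finset.card_range]
    have hmgf_pow : (mgf (Y 0) ℙ lam)^n ≤ Real.exp ((n:ℝ) * s) := by
      calc (mgf (Y 0) ℙ lam)^n ≤ (Real.exp s)^n :=
            pow_le_pow_left₀ (mgf_nonneg) hmgf n
        _ = Real.exp ((n:ℝ) * s) := by rw [← Real.exp_nat_mul]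
    have hchain : (ℙ {ω | x ≤ ∑ i ∈ Finset.range n, Y i ω}).toReal
        ≤ Real.exp (-lam * x + n * s) := by
      calc (ℙ {ω | x ≤ ∑ i ∈ Finset.range n, Y i ω}).toReal
          ≤ Real.exp (-lam * x) * mgf (fun ω => ∑ i ∈ Finset.range n, Y i ω) ℙ lam := hcher
        _ = Real.exp (-lam * x) * (mgf (Y 0) ℙ lam)^n := by rw [hmgf_sum]
        _ ≤ Real.exp (-lam * x) * Real.exp ((n:ℝ) * s) := by
            apply mul_le_mul_of_nonneg_left hmgf_pow (Real.exp_pos _).le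
        _ = Real.exp (-lam * x + n * s) := by rw [← Real.exp_add]
    -- numeric estimate of the exponent
    have hnx : (n:ℝ) ≤ x / μ := by
      rw [le_div_iff₀ hμpos]
      nlinarith
    have hxb : Real.exp (lam * u) = x ^ β := by
      rw [hlamu, Real.rpow_def_of_pos hx0, mul_comm]
    have hQ : (n:ℝ) * (lam^2 * Real.exp (lam*u) * (u^(2-p) * Aq))
        ≤ D * ((Real.log x)^2 * x^(-β)) := by
      have hQ0 : (0:ℝ) ≤ lam^2 * Real.exp (lam*u) * (u^(2-p) * Aq) := by positivity
      have h1 : (n:ℝ) * (lam^2 * Real.exp (lam*u) * (u^(2-p) * Aq))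
          ≤ (x/μ) * (lam^2 * Real.exp (lam*u) * (u^(2-p) * Aq)) :=
        mul_le_mul_of_nonneg_right hnx hQ0
      refine h1.trans (le_of_eq ?_)
      rw [hxb, hlamdef, hudef, hDdef]
      have hKp : (x/K) ^ (2-p) = x^(2-p) * K^(p-2) := by
        rw [Real.div_rpow hx0.le hK0.le]
        rw [show p-2 = -(2-p) by ring, Real.rpow_neg hK0.le]
        rw [div_eq_mul_inv]
      rw [hKp]
      have hxc : x ^ (-β) = x * (x^β * x^(2-p)) / x^2 := by
        rw [show x * (x^β * x^(2-p)) = x^(1:ℝ) * (x^β * x^(2-p)) by rw [Real.rpow_one]]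
        rw [← Real.rpow_add hx0, ← Real.rpow_add hx0]
        rw [show (x:ℝ)^2 = x^((2:ℝ)) by rw [← Real.rpow_natCast x 2]; norm_num]
        rw [← Real.rpow_sub hx0]
        congr 1
        rw [hβdef]; ring
      rw [hxc]
      field_simp
    have hexp_bound : -lam * x + n * s ≤ -(B+1) * Real.log x + 1 := by
      have hlx : lam * x = β * K * Real.log x := by
        rw [hlamdef]; field_simp
      have h2 : (n:ℝ) * (lam * μ) ≤ lam * ((1-a) * x) := by
        rw [show (n:ℝ) * (lam * μ) = lam * ((n:ℝ) * μ) by ring]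
        exact mul_le_mul_of_nonneg_left hn hlam0
      have h3 : lam * ((1-a)*x) = β * K * Real.log x - a * (β * K * Real.log x) := by
        rw [show lam * ((1-a)*x) = lam * x - a * (lam * x) by ring, hlx]
      have h1 : -lam * x + (n:ℝ) * (lam * μ) ≤ -(a * (β * K * Real.log x)) := by
        have hlx' : -lam * x = -(β * K * Real.log x) := by
          rw [show -lam * x = -(lam * x) by ring, hlx]
        rw [hlx']
        linarith [h2.trans_eq h3]
      have h4 : (n:ℝ) * (lam^2 * Real.exp (lam*u) * (u^(2-p) * Aq)) ≤ 1 :=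
        le_trans hQ hEx
      have h5 : -(a * (β * K * Real.log x)) ≤ -(B+1) * Real.log x := by
        have h6 := mul_le_mul_of_nonneg_right hKB hlog0
        have h7 : a * β * K * Real.log x = a * (β * K * Real.log x) := by ring
        have h8 : (B+1) * Real.log x ≤ a * (β * K * Real.log x) := by
          rw [← h7]; exact h6
        linarith
      have hns : (n:ℝ) * s
          = (n:ℝ) * (lam * μ) + (n:ℝ) * (lam^2 * Real.exp (lam*u) * (u^(2-p) * Aq)) := by
        rw [hsdef]; ring
      linarith [hns, h1, h4, h5]
    have hfinal : Real.exp (-(B+1) * Real.log x + 1) ≤ x ^ (-B) := by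
      rw [Real.exp_add]
      have h1 : Real.exp (-(B+1) * Real.log x) = x ^ (-(B+1)) := by
        rw [Real.rpow_def_of_pos hx0, mul_comm]
      rw [h1]
      have h2 : x ^ (-B) = x ^ (-(B+1)) * x := by
        rw [← Real.rpow_add_one (ne_of_gt hx0)]
        congr 1
        ring
      rw [h2]
      exact mul_le_mul_of_nonneg_left hxe (Real.rpow_pos_of_pos hx0 _).le
    calc (ℙ {ω | x ≤ ∑ i ∈ Finset.range n, Y i ω}).toReal
        ≤ Real.exp (-lam * x + n * s) := hchain
      _ ≤ Real.exp (-(B+1) * Real.log x + 1) := Real.exp_le_exp.mpr hexp_bound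
      _ ≤ x ^ (-B) := hfinal
  -- combine
  have hPle : ℙ {ω | x < ∑ i ∈ Finset.range n, X i ω}
      ≤ ℙ (⋃ i ∈ Finset.range n, {ω | u < X i ω})
        + ℙ {ω | x ≤ ∑ i ∈ Finset.range n, Y i ω} :=
    le_trans (measure_mono hsub) (measure_union_le _ _)
  have htr := ENNReal.toReal_mono
    (ENNReal.add_ne_top.mpr ⟨measure_ne_top _ _, measure_ne_top _ _⟩) hPle
  rw [ENNReal.toReal_add (measure_ne_top _ _) (measure_ne_top _ _)] at htr
  have hxr : (0:ℝ) < x^r := Real.rpow_pos_of_pos hx0 r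
  calc (ℙ {ω | x < ∑ i ∈ Finset.range n, X i ω}).toReal
      ≤ (ℙ (⋃ i ∈ Finset.range n, {ω | u < X i ω})).toReal
        + (ℙ {ω | x ≤ ∑ i ∈ Finset.range n, Y i ω}).toReal := htr
    _ ≤ n * (Mr * K^r / x^r) + x ^ (-B) := add_le_add hP1 hP2
    _ ≤ K^r * (Mr+1) * n / x^r + x ^ (-B) := by
        apply add_le_add_left
        have h2 : Mr * K^r ≤ K^r * (Mr+1) := by
          nlinarith [Real.rpow_pos_of_pos hK0 r]
        calc (n:ℝ) * (Mr * K^r / x^r) = (Mr * K^r) * ((n:ℝ) / x^r) := by ring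
          _ ≤ (K^r * (Mr+1)) * ((n:ℝ)/x^r) :=
              mul_le_mul_of_nonneg_right h2 (by positivity)
          _ = K^r * (Mr+1) * (n:ℝ) / x^r := by ring

end RSTail

open RSTail

/-- Theorem 3.2, case `E[N] = ∞` (consistent variation, `N` independent of the `Xᵢ`). -/
theorem random_sum_tail_consistent_variation_indep_infinite_mean
    {Ω : Type*} [MeasureSpace Ω] [IsProbabilityMeasure (ℙ : Measure Ω)]
    (N : Ω → ℕ) (hN : Measurable N)
    (X : ℕ → Ω → ℝ) (hX : ∀ i, Measurable (X i))
    (hiid : iIndepFun X ℙ)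
    (hid : ∀ i, IdentDistrib (X i) (X 0) ℙ ℙ)
    (hpos : ∀ i, 0 ≤ᵐ[ℙ] X i)
    -- `N` is independent of the sequence `{Xᵢ}`
    (hindep : IndepFun N (fun ω i => X i ω) ℙ)
    (hint : Integrable (X 0) ℙ)
    (μ : ℝ) (hμ : μ = ∫ ω, X 0 ω ∂ℙ) (hμpos : 0 < μ)
    (r : ℝ) (hr : 1 < r)
    (hmom : Integrable (fun ω => |X 0 ω| ^ r) ℙ)
    -- E[N] = ∞
    (hNinf : ¬ Integrable (fun ω => (N ω : ℝ)) ℙ)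
    -- the tail of `N` is of consistent variation
    (hCV : Tendsto (fun y : ℝ =>
        limsup (fun x : ℝ =>
          (ℙ {ω | x * y < (N ω : ℝ)}).toReal / (ℙ {ω | x < (N ω : ℝ)}).toReal) atTop)
        (𝓝[<] (1 : ℝ)) (𝓝 1))
    -- there is `1 ≤ q < r` with `limsup_x E[N 1(N ≤ x)] / (x^q P[N > x]) < ∞`
    (q : ℝ) (hq1 : 1 ≤ q) (hqr : q < r)
    (hbound : IsBoundedUnder (· ≤ ·) atTop (fun x : ℝ =>
        (∫ ω, (if (N ω : ℝ) ≤ x then (N ω : ℝ) else 0) ∂ℙ)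
          / (x ^ q * (ℙ {ω | x < (N ω : ℝ)}).toReal))) :
    -- P[S_N > x] ~ P[N > x/μ]
    Tendsto (fun x : ℝ =>
        (ℙ {ω | x < ∑ i ∈ Finset.range (N ω), X i ω}).toReal
          / (ℙ {ω | x / μ < (N ω : ℝ)}).toReal) atTop (𝓝 1) := by

  classical
  set T : ℝ → ℝ := fun z => (ℙ {ω | z < (N ω : ℝ)}).toReal with hTdef
  set S : ℝ → ℝ := fun x => (ℙ {ω | x < ∑ i ∈ Finset.range (N ω), X i ω}).toReal with hSdef
  have hTpos : ∀ z, 0 < T z := tail_pos hN hNinf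
  have hTanti : Antitone T := by
    intro z w hzw
    refine ENNReal.toReal_mono (measure_ne_top _ _) (measure_mono ?_)
    intro ω hω; exact lt_of_le_of_lt hzw hω
  obtain ⟨A, hA, hAev⟩ := tail_poly_lb hN hNinf hCV
  obtain ⟨b₀, hb₀⟩ := hbound
  rw [eventually_map] at hb₀
  set b : ℝ := max b₀ 0 with hbdef
  have hbnn : 0 ≤ b := le_max_right _ _
  have hb : ∀ᶠ z : ℝ in atTop,
      (∫ ω, (if (N ω : ℝ) ≤ z then (N ω : ℝ) else 0) ∂ℙ) ≤ b * (z ^ q * T z) := by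
    filter_upwards [hb₀, eventually_gt_atTop (0:ℝ)] with z hz hz0
    have hden : 0 < z ^ q * T z := mul_pos (rpow_pos_of_pos hz0 q) (hTpos z)
    have h2 := (div_le_iff₀ hden).mp (hz.trans (le_max_left b₀ 0))
    exact h2
  -- central two-sided estimate
  have key : ∀ ε : ℝ, 0 < ε → ε ≤ 1/2 → ∀ᶠ x : ℝ in atTop,
      (1 - ε) / (1 + ε)^3 * T (x / μ) ≤ S x ∧ S x ≤ ((1 + ε)^2 + ε) * T (x / μ) := by
    intro ε hε hε2
    obtain ⟨y, hy0, hy1, hyev⟩ := cv_get hN hNinf hCV hε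
    have hyev' : ∀ c : ℝ, 0 < c → ∀ᶠ x : ℝ in atTop,
        T ((x * c) * y) ≤ (1 + ε) * T (x * c) := by
      intro c hc
      exact (tendsto_id.atTop_mul_const hc).eventually hyev
    obtain ⟨C, hC, hFN⟩ := fuk_nagaev hX hiid hid hpos hint hμ hμpos hr hmom
      (a := 1 - y) (by linarith) (by linarith) (A + 1)
    obtain ⟨n₀, hn₀⟩ := (lln_event hX hiid hid hint hμ hμpos hy1 hε).exists_forall_of_atTop
    have hμ' : (0:ℝ) < 1/μ := by positivity
    -- LOWER BOUND
    have lower : ∀ᶠ x : ℝ in atTop,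
        (1 - ε) / (1 + ε)^3 * T (x / μ) ≤ S x := by
      have hc1 : (0:ℝ) < 1/(y^3*μ) := by positivity
      have hc2 : (0:ℝ) < 1/(y^2*μ) := by positivity
      have hc3 : (0:ℝ) < 1/(y*μ) := by positivity
      have e1 := hyev' _ hc1
      have e2 := hyev' _ hc2
      have e3 := hyev' _ hc3
      filter_upwards [e1, e2, e3, eventually_ge_atTop ((n₀:ℝ) * (y^2*μ) + y^2*μ),
        eventually_ge_atTop ((y^3*μ)/(1-y) + 1), eventually_gt_atTop (0:ℝ)]
        with x h1 h2 h3 hx1 hx2 hx0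
      set m : ℕ := ⌈x / (y^2*μ)⌉₊ with hmdef
      have hxq : (0:ℝ) ≤ x / (y^2*μ) := by positivity
      have hmge : (x / (y^2*μ) : ℝ) ≤ m := Nat.le_ceil _
      have hmle : (m:ℝ) ≤ x / (y^2*μ) + 1 := (Nat.ceil_lt_add_one hxq).le
      have hmn₀ : n₀ ≤ m := by
        have h : (n₀:ℝ) ≤ (m:ℝ) := le_trans (by
          rw [le_div_iff₀ (by positivity)]; nlinarith) hmge
        exact_mod_cast h
      have hev : ∀ n : ℕ, m < n →
          ENNReal.ofReal (1 - ε) ≤ ℙ {ω | x < ∑ i ∈ Finset.range n, X i ω} := by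
        intro n hn
        have hbn := hn₀ n (le_trans hmn₀ hn.le)
        have hsub : {ω | ∑ i ∈ Finset.range n, X i ω ≤ n * (μ * y)}ᶜ
            ⊆ {ω | x < ∑ i ∈ Finset.range n, X i ω} := by
          intro ω hω
          simp only [Set.mem_compl_iff, Set.mem_setOf_eq, not_le] at hω ⊢
          have hmn : (m:ℝ) < (n:ℝ) := by exact_mod_cast hn
          have h1n : x / (y^2*μ) ≤ (n:ℝ) := by linarith [hmge]
          have hxn := (div_le_iff₀ (by positivity : (0:ℝ) < y^2*μ)).mp h1n
          have : x ≤ (n:ℝ) * (μ * y) := by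
            nlinarith [mul_nonneg (mul_nonneg (Nat.cast_nonneg n) hμpos.le) hy0.le, hy1]
          linarith
        calc ENNReal.ofReal (1 - ε)
            ≤ 1 - ENNReal.ofReal ε := by
              rw [← ENNReal.ofReal_one, ← ENNReal.ofReal_sub _ hε.le]
          _ ≤ 1 - ℙ {ω | ∑ i ∈ Finset.range n, X i ω ≤ n * (μ * y)} :=
              tsub_le_tsub_left hbn 1
          _ = ℙ {ω | ∑ i ∈ Finset.range n, X i ω ≤ n * (μ * y)}ᶜ := by
              rw [prob_compl_eq_one_sub]
              exact measurableSet_le (Finset.measurable_sum _ (fun i _ => hX i)) measurable_const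
          _ ≤ _ := measure_mono hsub
      have hmain := lower_decomp hN hX hindep x m (by linarith : ε < 1) hev
      have hTm : T (x * (1/(y^3*μ))) ≤ T (m:ℝ) := by
        apply hTanti
        have h1y : (0:ℝ) < 1 - y := by linarith
        have hxy : y^3*μ ≤ x*(1-y) := by
          have h2' : ((y^3*μ)/(1-y) + 1) * (1-y) = y^3*μ + (1-y) := by field_simp
          nlinarith [mul_le_mul_of_nonneg_right (by linarith : (y^3*μ)/(1-y) + 1 ≤ x) h1y.le]
        have hx2' : x / (y^2*μ) + 1 ≤ x * (1/(y^3*μ)) := by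
          have heq : x * (1/(y^3*μ)) - x / (y^2*μ) = x*(1-y)/(y^3*μ) := by
            field_simp
          have hone : (1:ℝ) ≤ x*(1-y)/(y^3*μ) := by
            rw [le_div_iff₀ (by positivity)]
            linarith
          linarith
        linarith [hmle]
      have hchain : T (x / μ) ≤ (1+ε)^3 * T (x * (1/(y^3*μ))) := by
        have k1 : (x * (1/(y^3*μ))) * y = x * (1/(y^2*μ)) := by
          field_simp
        have k2 : (x * (1/(y^2*μ))) * y = x * (1/(y*μ)) := by
          field_simp
        have k3 : (x * (1/(y*μ))) * y = x / μ := by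
          field_simp
        rw [k1] at h1; rw [k2] at h2; rw [k3] at h3
        calc T (x/μ) ≤ (1+ε) * T (x*(1/(y*μ))) := h3
          _ ≤ (1+ε) * ((1+ε) * T (x*(1/(y^2*μ)))) :=
              mul_le_mul_of_nonneg_left h2 (by linarith)
          _ ≤ (1+ε) * ((1+ε) * ((1+ε) * T (x*(1/(y^3*μ))))) := by
              apply mul_le_mul_of_nonneg_left _ (by linarith : (0:ℝ) ≤ 1+ε)
              exact mul_le_mul_of_nonneg_left h1 (by linarith)
          _ = (1+ε)^3 * T (x*(1/(y^3*μ))) := by ring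
      calc (1 - ε) / (1 + ε)^3 * T (x / μ)
          ≤ (1 - ε) / (1 + ε)^3 * ((1+ε)^3 * T (x * (1/(y^3*μ)))) := by
            apply mul_le_mul_of_nonneg_left hchain
              (div_nonneg (by linarith) (by positivity))
        _ = (1 - ε) * T (x * (1/(y^3*μ))) := by
            have h3ne : ((1:ℝ)+ε)^3 ≠ 0 := by positivity
            field_simp
        _ ≤ (1 - ε) * T (m:ℝ) := mul_le_mul_of_nonneg_left hTm (by linarith)
        _ ≤ S x := hmain
    -- UPPER BOUND
    have upper : ∀ᶠ x : ℝ in atTop,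
        S x ≤ ((1 + ε)^2 + ε) * T (x / μ) := by
      have e1 := hyev' _ hμ'
      have e2 := hyev' _ (mul_pos hμ' hy0)
      have hbx := (tendsto_id.atTop_mul_const (mul_pos hy0 hμ')).eventually hb
      have hAx := (tendsto_id.atTop_mul_const hμ').eventually hAev
      have hterm1 : Tendsto
          (fun x : ℝ => (C * b * (y*(1/μ))^q * (1+ε)) * x ^ (q - r)) atTop (𝓝 0) := by
        have h0 : Tendsto (fun x : ℝ => x ^ (q - r)) atTop (𝓝 0) := by
          have := tendsto_rpow_neg_atTop (show (0:ℝ) < r - q by linarith)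
          convert this using 2 with x
          rw [neg_sub]
        simpa using h0.const_mul (C * b * (y*(1/μ))^q * (1+ε))
      have hterm1' := hterm1.eventually (eventually_le_nhds (show (0:ℝ) < ε/2 by positivity))
      filter_upwards [hFN, e1, e2, hbx, hAx, hterm1',
        eventually_ge_atTop (1:ℝ),
        eventually_ge_atTop (μ/(y*(1-y)) + 1),
        eventually_ge_atTop (2 / (ε * (1/μ)^(-A)) + 1)]
        with x hFNx h1 h2 hbx' hAx' ht1 hx1 hxm hxA
      have hx0 : (0:ℝ) < x := by linarith
      set m : ℕ := ⌊x * (y * (1/μ))⌋₊ with hmdef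
      have hm_le : (m:ℝ) ≤ x * (y * (1/μ)) := Nat.floor_le (by positivity)
      have hm_ge : x * (y * (1/μ)) - 1 ≤ (m:ℝ) := (Nat.sub_one_lt_floor _).le
      have hdecomp := upper_decomp hN hX hindep x m
      have hxμ : x * (1/μ) = x / μ := by ring
      -- first term
      have hfirst : T (m:ℝ) ≤ (1+ε)^2 * T (x / μ) := by
        have k1 : (x * (1/μ)) * y = x * (1/μ*y) := by ring
        rw [k1] at h1
        rw [hxμ] at h1
        -- h1 : T (x * (1/μ*y)) ≤ (1+ε) * T (x/μ)
        -- h2 : T ((x * (1/μ*y)) * y) ≤ (1+ε) * T (x * (1/μ*y))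
        have hTm2 : T (m:ℝ) ≤ T ((x * (1/μ*y)) * y) := by
          apply hTanti
          have h1y : (0:ℝ) < 1 - y := by linarith
          have heq : x * (y*(1/μ)) - x * (1/μ*y) * y = x * (y*(1-y))/μ := by
            field_simp
          have hone : (1:ℝ) ≤ x * (y*(1-y))/μ := by
            rw [le_div_iff₀ hμpos]
            have hmm := mul_le_mul_of_nonneg_right
              (by linarith : μ/(y*(1-y)) ≤ x) (by positivity : (0:ℝ) ≤ y*(1-y))
            have heq2 : μ/(y*(1-y)) * (y*(1-y)) = μ := by field_simp
            nlinarith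
          linarith [hm_ge]
        calc T (m:ℝ) ≤ T ((x * (1/μ*y)) * y) := hTm2
          _ ≤ (1+ε) * T (x * (1/μ*y)) := h2
          _ ≤ (1+ε) * ((1+ε) * T (x/μ)) := by
              apply mul_le_mul_of_nonneg_left h1 (by linarith)
          _ = (1+ε)^2 * T (x/μ) := by ring
      -- second term
      have hsecond : ∑ n ∈ Finset.range (m + 1), (ℙ {ω | N ω = n}).toReal *
          (ℙ {ω | x < ∑ i ∈ Finset.range n, X i ω}).toReal ≤ ε * T (x / μ) := by
        have hstep1 : ∀ n ∈ Finset.range (m+1),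
            (ℙ {ω | N ω = n}).toReal * (ℙ {ω | x < ∑ i ∈ Finset.range n, X i ω}).toReal
            ≤ (ℙ {ω | N ω = n}).toReal * (C * n / x ^ r + x ^ (-(A+1))) := by
          intro n hn
          apply mul_le_mul_of_nonneg_left _ ENNReal.toReal_nonneg
          apply hFNx
          have hnm : (n:ℝ) ≤ (m:ℝ) := by
            exact_mod_cast Nat.lt_succ_iff.mp (Finset.mem_range.mp hn)
          have : (n:ℝ) ≤ x * (y * (1/μ)) := hnm.trans hm_le
          calc (n:ℝ) * μ ≤ (x * (y * (1/μ))) * μ := by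
                apply mul_le_mul_of_nonneg_right this hμpos.le
            _ = (1 - (1-y)) * x := by field_simp; ring
        have hsumprob : ∑ n ∈ Finset.range (m+1), (ℙ {ω | N ω = n}).toReal ≤ 1 := by
          rw [← ENNReal.toReal_sum (fun _ _ => measure_ne_top _ _)]
          have hle : ∑ n ∈ Finset.range (m+1), ℙ {ω | N ω = n} ≤ 1 := by
            have hd : (↑(Finset.range (m+1)) : Set ℕ).PairwiseDisjoint
                (fun n => {ω | N ω = n}) := by
              intro i _ j _ hij
              simp only [Function.onFun, Set.disjoint_left]
              intro ω h1 h2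
              exact hij (by rw [← h1, ← h2])
            rw [← measure_biUnion_finset hd (fun n _ => hN (measurableSet_singleton n))]
            exact prob_le_one
          simpa using ENNReal.toReal_mono (by simp : (1:ENNReal) ≠ ⊤) hle
        have hsumn : ∑ n ∈ Finset.range (m+1), (n:ℝ) * (ℙ {ω | N ω = n}).toReal
            ≤ b * ((x * (y*(1/μ))) ^ q * T (x * (y*(1/μ)))) := by
          refine le_trans (trunc_mean_ge hN hm_le) hbx'
        have hTz : T (x * (y*(1/μ))) ≤ (1+ε) * T (x/μ) := by
          have k1 : (x * (1/μ)) * y = x * (y*(1/μ)) := by ring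
          rw [k1, hxμ] at h1
          exact h1
        have hzq : (x * (y*(1/μ))) ^ q = x ^ q * (y*(1/μ)) ^ q :=
          mul_rpow hx0.le (by positivity)
        have hxqr : x ^ q / x ^ r = x ^ (q - r) := by
          rw [← rpow_sub hx0]
        have hsum2 : ∑ n ∈ Finset.range (m+1), (ℙ {ω | N ω = n}).toReal *
            (C * n / x ^ r + x ^ (-(A+1)))
            = (C / x ^ r) * (∑ n ∈ Finset.range (m+1), (n:ℝ) * (ℙ {ω | N ω = n}).toReal)
              + x ^ (-(A+1)) * (∑ n ∈ Finset.range (m+1), (ℙ {ω | N ω = n}).toReal)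
             := by
          rw [Finset.mul_sum, Finset.mul_sum, ← Finset.sum_add_distrib]
          apply Finset.sum_congr rfl
          intro n _
          ring
        have hxr : (0:ℝ) < x ^ r := rpow_pos_of_pos hx0 r
        have hT1 : (C / x ^ r) * (∑ n ∈ Finset.range (m+1), (n:ℝ) * (ℙ {ω | N ω = n}).toReal)
            ≤ (ε/2) * T (x/μ) := by
          have h1' : (C / x ^ r) * (∑ n ∈ Finset.range (m+1), (n:ℝ) * (ℙ {ω | N ω = n}).toReal)
              ≤ (C / x ^ r) * (b * ((x * (y*(1/μ))) ^ q * T (x * (y*(1/μ))))) := by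
            apply mul_le_mul_of_nonneg_left hsumn (by positivity)
          have h2' : (C / x ^ r) * (b * ((x * (y*(1/μ))) ^ q * T (x * (y*(1/μ)))))
              ≤ (C * b * (y*(1/μ))^q * (1+ε)) * x ^ (q-r) * T (x/μ) := by
            rw [hzq]
            have hTz' := hTz
            have hnn1 : (0:ℝ) ≤ C / x ^ r := by positivity
            have hnn2 : (0:ℝ) ≤ x ^ q := (rpow_pos_of_pos hx0 q).le
            have hnn3 : (0:ℝ) ≤ (y*(1/μ))^q := (rpow_pos_of_pos (by positivity) q).le
            have hres : (C / x ^ r) * (b * ((x ^ q * (y*(1/μ)) ^ q) * T (x * (y*(1/μ)))))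
                ≤ (C / x ^ r) * (b * ((x ^ q * (y*(1/μ)) ^ q) * ((1+ε) * T (x/μ)))) := by
              apply mul_le_mul_of_nonneg_left _ hnn1
              apply mul_le_mul_of_nonneg_left _ hbnn
              apply mul_le_mul_of_nonneg_left hTz (by positivity)
            refine hres.trans (le_of_eq ?_)
            rw [← hxqr]
            field_simp
          refine (h1'.trans h2').trans ?_
          apply mul_le_mul_of_nonneg_right _ (hTpos (x/μ)).le
          exact ht1
        have hT2 : x ^ (-(A+1)) * (∑ n ∈ Finset.range (m+1), (ℙ {ω | N ω = n}).toReal)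
            ≤ (ε/2) * T (x/μ) := by
          have hstep : x ^ (-(A+1)) ≤ (ε/2) * T (x/μ) := by
            have hAx'' : (x * (1/μ)) ^ (-A) ≤ T (x/μ) := by rw [← hxμ]; exact hAx'
            have hsplit : (x * (1/μ)) ^ (-A) = x ^ (-A) * (1/μ) ^ (-A) :=
              mul_rpow hx0.le (by positivity)
            have hxa : x ^ (-(A+1)) = x ^ (-A) * x⁻¹ := by
              rw [show -(A+1) = -A + (-1) by ring, rpow_add hx0, rpow_neg_one]
            rw [hxa]
            have hinv : x⁻¹ ≤ (ε/2) * (1/μ)^(-A) := by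
              have hc : (0:ℝ) < (1/μ)^(-A) := rpow_pos_of_pos (by positivity) _
              have h2x : 2/(ε * (1/μ)^(-A)) ≤ x := by linarith
              have hxx := one_div_le_one_div_of_le (by positivity) h2x
              rw [one_div_div] at hxx
              rw [← one_div]
              linarith [hxx]
            calc x ^ (-A) * x⁻¹ ≤ x ^ (-A) * ((ε/2) * (1/μ)^(-A)) := by
                  apply mul_le_mul_of_nonneg_left hinv (rpow_pos_of_pos hx0 _).le
              _ = (ε/2) * (x ^ (-A) * (1/μ)^(-A)) := by ring
              _ = (ε/2) * (x * (1/μ)) ^ (-A) := by rw [hsplit]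
              _ ≤ (ε/2) * T (x/μ) := by
                  apply mul_le_mul_of_nonneg_left hAx'' (by positivity)
          calc x ^ (-(A+1)) * (∑ n ∈ Finset.range (m+1), (ℙ {ω | N ω = n}).toReal)
              ≤ x ^ (-(A+1)) * 1 := by
                apply mul_le_mul_of_nonneg_left hsumprob (rpow_pos_of_pos hx0 _).le
            _ = x ^ (-(A+1)) := mul_one _
            _ ≤ (ε/2) * T (x/μ) := hstep
        calc ∑ n ∈ Finset.range (m + 1), (ℙ {ω | N ω = n}).toReal *
              (ℙ {ω | x < ∑ i ∈ Finset.range n, X i ω}).toReal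
            ≤ ∑ n ∈ Finset.range (m+1), (ℙ {ω | N ω = n}).toReal *
              (C * n / x ^ r + x ^ (-(A+1))) := Finset.sum_le_sum hstep1
          _ = _ := hsum2
          _ ≤ (ε/2) * T (x/μ) + (ε/2) * T (x/μ) := add_le_add hT1 hT2
          _ = ε * T (x/μ) := by ring
      calc S x ≤ T (m:ℝ) + ∑ n ∈ Finset.range (m + 1), (ℙ {ω | N ω = n}).toReal *
            (ℙ {ω | x < ∑ i ∈ Finset.range n, X i ω}).toReal := hdecomp
        _ ≤ (1+ε)^2 * T (x/μ) + ε * T (x/μ) := add_le_add hfirst hsecond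
        _ = ((1+ε)^2 + ε) * T (x/μ) := by ring
    filter_upwards [lower, upper] with x h1 h2 using ⟨h1, h2⟩
  -- conclude
  rw [tendsto_order]
  constructor
  · intro l hl
    have hε : (0:ℝ) < min (1/2) ((1 - l)/10) := lt_min (by norm_num) (by linarith)
    set ε : ℝ := min (1/2) ((1 - l)/10) with hεdef
    have hε2 : ε ≤ 1/2 := min_le_left _ _
    have hεl : ε ≤ (1-l)/10 := min_le_right _ _
    filter_upwards [key ε hε hε2] with x hx
    obtain ⟨h1, -⟩ := hx
    have hT := hTpos (x/μ)
    have hlc : l < (1 - ε) / (1 + ε)^3 := by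
      rw [lt_div_iff₀ (by positivity)]
      rcases le_or_gt l 0 with hl0 | hl0
      · have h0 : l * (1+ε)^3 ≤ 0 :=
          mul_nonpos_iff.mpr (Or.inr ⟨hl0, by positivity⟩)
        linarith
      · have hcube : (1+ε)^3 ≤ 1+7*ε := by nlinarith [sq_nonneg ε]
        have hmul : l * (1+ε)^3 ≤ l * (1+7*ε) :=
          mul_le_mul_of_nonneg_left hcube hl0.le
        have hl10 : l ≤ 1 - 10*ε := by linarith
        nlinarith [mul_le_mul_of_nonneg_right hl10 (show (0:ℝ) ≤ 1+7*ε by linarith)]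
    rw [lt_div_iff₀ hT]
    calc l * T (x/μ) < ((1 - ε) / (1 + ε)^3) * T (x/μ) :=
          mul_lt_mul_of_pos_right hlc hT
      _ ≤ S x := h1
  · intro u hu
    have hε : (0:ℝ) < min (1/2) ((u - 1)/10) := lt_min (by norm_num) (by linarith)
    set ε : ℝ := min (1/2) ((u - 1)/10) with hεdef
    have hε2 : ε ≤ 1/2 := min_le_left _ _
    have hεu : ε ≤ (u-1)/10 := min_le_right _ _
    filter_upwards [key ε hε hε2] with x hx
    obtain ⟨-, h2⟩ := hx
    have hT := hTpos (x/μ)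
    have huc : (1 + ε)^2 + ε < u := by nlinarith [sq_nonneg ε]
    rw [div_lt_iff₀ hT]
    calc S x ≤ ((1 + ε)^2 + ε) * T (x/μ) := h2
      _ < u * T (x/μ) := mul_lt_mul_of_pos_right huc hT
end

section
/- If E[e^{γX_1}] < ∞ for some γ > 0 and the distribution of N is in the Gumbel max-domain of attraction with auxiliary function a satisfying a(x)/x^{2/3} → ∞ as x → ∞, then P[S_N > x] ~ P[N > x/μ] as x → ∞, with no independence assumption between N and the X_i. -/
/-!
Write `m = x / μ` and `F m = P[N > m]`. The Gumbel condition and `F → 0` force `a(m) ≤ m`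
eventually. Up to the events `{S_n ≤ x}` with `n = ⌈m + ε a(m)⌉` and `{S_n ≥ x}` with
`n = ⌊m - ε a(m)⌋`, the event `{S_N > x}` contains `{N > m + ε a(m)}` and is contained in
`{N > m - ε a(m)}`. Since `mgf X₁ t ≤ exp (t μ + c t²)` near `0`, Chernoff bounds make these
deviations of order `ε a(m)` cost at most `exp (-D a(m)² / m)`.

This error is negligible against `F m`: along `x ↦ x + a(x)` the tail `F` loses at most a factor
`e⁻²` per step (the Gumbel ratio at `y = 1` tends to `e⁻¹`), and `a(x) ≥ x^{2/3}` means that `m`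
is reached within `O(m^{1/3})` steps, so `F m ≥ C exp (-8 m^{1/3})`, whereas
`a(m)² / m ≫ m^{1/3}`. Dividing by `F m`, the ratio is squeezed between quantities tending to
`e^{∓ε}`, and `ε → 0` gives the limit `1`.
-/

open MeasureTheory ProbabilityTheory Filter Topology

open Real Finset

lemma exp_le_one_add_add_sq_mul_exp_abs (v : ℝ) : exp v ≤ 1 + v + v ^ 2 * exp |v| := by
  have h₁ : exp v * (1 - v) ≤ 1 := by
    have := mul_le_mul_of_nonneg_left (add_one_le_exp (-v)) (exp_pos v).le
    rw [← exp_add, add_neg_cancel, exp_zero] at this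
    linarith
  have h₂ := add_one_le_exp v
  rcases le_total 0 v with hv | hv
  · rw [abs_of_nonneg hv]; nlinarith
  · rw [abs_of_nonpos hv]; nlinarith [one_le_exp (neg_nonneg.2 hv)]

lemma exp_mul_le_one_add_add_sq_mul {γ t y : ℝ} (hγ : 0 < γ) (hy : 0 ≤ y) (ht : |t| ≤ γ / 2) :
    exp (t * y) ≤ 1 + t * y + t ^ 2 * (8 / γ ^ 2 * exp (γ * y)) := by
  have habs : |t * y| ≤ γ * y / 2 := by
    rw [abs_mul, abs_of_nonneg hy]; nlinarith
  have hsq : y ^ 2 ≤ 8 / γ ^ 2 * exp (γ * y / 2) := by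
    have h := pow_div_factorial_le_exp (γ * y / 2) (by positivity) 2
    rw [Nat.factorial_two, Nat.cast_ofNat] at h
    rw [div_mul_eq_mul_div, le_div_iff₀ (by positivity)]
    nlinarith
  calc exp (t * y) ≤ 1 + t * y + (t * y) ^ 2 * exp |t * y| := exp_le_one_add_add_sq_mul_exp_abs _
    _ ≤ 1 + t * y + t ^ 2 * (8 / γ ^ 2 * exp (γ * y / 2) * exp (γ * y / 2)) := by
        rw [mul_pow, mul_assoc]; gcongr
    _ = 1 + t * y + t ^ 2 * (8 / γ ^ 2 * exp (γ * y)) := by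
        rw [mul_assoc, ← exp_add, add_halves]

lemma integrable_exp_mul_of_abs_le {Ω : Type*} [MeasurableSpace Ω] {P : Measure Ω}
    [IsFiniteMeasure P] {Y : Ω → ℝ} {γ t : ℝ} (hY : 0 ≤ᵐ[P] Y) (hYm : AEMeasurable Y P)
    (hexp : Integrable (fun ω => exp (γ * Y ω)) P) (ht : |t| ≤ γ) :
    Integrable (fun ω => exp (t * Y ω)) P := by
  have hneg : Integrable (fun ω => exp (-γ * Y ω)) P := by
    refine (integrable_const (1 : ℝ)).mono' (hYm.const_mul _).exp.aestronglyMeasurable ?_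
    filter_upwards [hY] with ω hω
    rw [norm_of_nonneg (exp_pos _).le, exp_le_one_iff]
    exact mul_nonpos_of_nonpos_of_nonneg (by linarith [abs_nonneg t]) hω
  exact integrable_exp_mul_of_le_of_le hneg hexp (neg_le_of_abs_le ht) (le_of_abs_le ht)

lemma mgf_le_exp_mul_add_mul_sq {Ω : Type*} [MeasurableSpace Ω] {P : Measure Ω}
    [IsProbabilityMeasure P] {Y : Ω → ℝ} {γ t : ℝ} (hγ : 0 < γ) (hY : 0 ≤ᵐ[P] Y)
    (hint : Integrable Y P) (hexp : Integrable (fun ω => exp (γ * Y ω)) P) (ht : |t| ≤ γ / 2) :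
    mgf Y P t ≤ exp (t * ∫ ω, Y ω ∂P + 8 / γ ^ 2 * (∫ ω, exp (γ * Y ω) ∂P) * t ^ 2) := by
  have hlin : Integrable (fun ω => 1 + t * Y ω) P := (integrable_const 1).add (hint.const_mul t)
  have hquad : Integrable (fun ω => t ^ 2 * (8 / γ ^ 2 * exp (γ * Y ω))) P :=
    (hexp.const_mul _).const_mul _
  calc mgf Y P t ≤ ∫ ω, 1 + t * Y ω + t ^ 2 * (8 / γ ^ 2 * exp (γ * Y ω)) ∂P :=
        integral_mono_ae (integrable_exp_mul_of_abs_le hY hint.aemeasurable hexp (by linarith))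
          (hlin.add hquad) (hY.mono fun ω hω => exp_mul_le_one_add_add_sq_mul hγ hω ht)
    _ = 1 + (t * ∫ ω, Y ω ∂P + 8 / γ ^ 2 * (∫ ω, exp (γ * Y ω) ∂P) * t ^ 2) := by
        rw [integral_add hlin hquad, integral_add (integrable_const 1) (hint.const_mul t),
          integral_const_mul, integral_const_mul, integral_const_mul]
        simp only [integral_const, probReal_univ, smul_eq_mul, mul_one]
        ring
    _ ≤ _ := (add_comm _ _).trans_le (add_one_le_exp _)

lemma neg_mul_add_mul_sq_le {c M n h : ℝ} (hc : 0 < c) (hM : 0 < M) (hn : n ≤ M) :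
    -(h / (2 * c * M)) * h + n * (c * (h / (2 * c * M)) ^ 2) ≤ -(h ^ 2 / (4 * c * M)) := by
  have hle : n * (c * (h / (2 * c * M)) ^ 2) ≤ M * (c * (h / (2 * c * M)) ^ 2) := by
    gcongr
  have heq : -(h / (2 * c * M)) * h + M * (c * (h / (2 * c * M)) ^ 2) = -(h ^ 2 / (4 * c * M)) := by
    field_simp; ring
  linarith

section IidSums

variable {Ω : Type*} [MeasurableSpace Ω] {P : Measure Ω} {X : ℕ → Ω → ℝ} {N : Ω → ℕ}
  {μ c r : ℝ}

lemma mgf_sum_range_le (hX : ∀ i, Measurable (X i)) (hindep : iIndepFun X P)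
    (hid : ∀ i, IdentDistrib (X i) (X 0) P P)
    (hmgf : ∀ t, |t| ≤ r → mgf (X 0) P t ≤ exp (t * μ + c * t ^ 2)) (n : ℕ) {t : ℝ}
    (ht : |t| ≤ r) :
    mgf (∑ i ∈ range n, X i) P t ≤ exp (n * (t * μ + c * t ^ 2)) := by
  rw [hindep.mgf_sum hX, prod_congr rfl fun i _ => mgf_congr_of_identDistrib _ _ (hid i) t,
    prod_const, card_range, exp_nat_mul]
  exact pow_le_pow_left₀ mgf_nonneg (hmgf t ht) n

variable [IsFiniteMeasure P]

lemma integrable_exp_mul_sum_range (hX : ∀ i, Measurable (X i)) (hindep : iIndepFun X P)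
    (hid : ∀ i, IdentDistrib (X i) (X 0) P P) (n : ℕ) {t : ℝ}
    (hexp : Integrable (fun ω => exp (t * X 0 ω)) P) :
    Integrable (fun ω => exp (t * (∑ i ∈ range n, X i) ω)) P :=
  hindep.integrable_exp_mul_sum hX fun i _ =>
    ((hid i).comp (measurable_const_mul t).exp).integrable_iff.2 hexp

lemma measureReal_lt_sum_range_le (hpos : ∀ᵐ ω ∂P, ∀ i, 0 ≤ X i ω) (n : ℕ) (x : ℝ) :
    P.real {ω | x < ∑ i ∈ range (N ω), X i ω} ≤
      P.real {ω | n < N ω} + P.real {ω | x ≤ ∑ i ∈ range n, X i ω} := by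
  refine (ENNReal.toReal_mono (measure_ne_top _ _) (measure_mono_ae ?_)).trans
    (measureReal_union_le _ _)
  filter_upwards [hpos] with ω hω hlt
  by_cases hN : n < N ω
  · exact Or.inl hN
  · exact Or.inr (hlt.le.trans (sum_le_sum_of_subset_of_nonneg
      (range_subset_range.2 (not_lt.1 hN)) fun i _ _ => hω i))

lemma measureReal_le_le_lt_sum_range (hpos : ∀ᵐ ω ∂P, ∀ i, 0 ≤ X i ω) (n : ℕ) (x : ℝ) :
    P.real {ω | n ≤ N ω} ≤
      P.real {ω | x < ∑ i ∈ range (N ω), X i ω} + P.real {ω | ∑ i ∈ range n, X i ω ≤ x} := by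
  refine (ENNReal.toReal_mono (measure_ne_top _ _) (measure_mono_ae ?_)).trans
    (measureReal_union_le _ _)
  filter_upwards [hpos] with ω hω hle
  by_cases hx : ∑ i ∈ range n, X i ω ≤ x
  · exact Or.inr hx
  · exact Or.inl ((not_le.1 hx).trans_le (sum_le_sum_of_subset_of_nonneg
      (range_subset_range.2 hle) fun i _ _ => hω i))

variable (hX : ∀ i, Measurable (X i)) (hindep : iIndepFun X P)
    (hid : ∀ i, IdentDistrib (X i) (X 0) P P)
    (hexp : ∀ t, |t| ≤ r → Integrable (fun ω => exp (t * X 0 ω)) P)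
    (hmgf : ∀ t, |t| ≤ r → mgf (X 0) P t ≤ exp (t * μ + c * t ^ 2))

include hX hindep hid hexp hmgf

lemma measureReal_mul_add_le_sum_range_le {n : ℕ} {h M : ℝ} (hc : 0 < c) (hh : 0 ≤ h)
    (hM : 0 < M) (hn : (n : ℝ) ≤ M) (hhr : h ≤ 2 * c * M * r) :
    P.real {ω | μ * n + h ≤ ∑ i ∈ range n, X i ω} ≤ exp (-(h ^ 2 / (4 * c * M))) := by
  set t := h / (2 * c * M)
  have ht : |t| ≤ r := by
    rw [abs_of_nonneg (by positivity), div_le_iff₀ (by positivity)]; linarith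
  simp_rw [← Finset.sum_apply]
  calc _ ≤ exp (-t * (μ * n + h)) * mgf (∑ i ∈ range n, X i) P t :=
        measure_ge_le_exp_mul_mgf _ (by positivity)
          (integrable_exp_mul_sum_range hX hindep hid n (hexp t ht))
    _ ≤ exp (-t * (μ * n + h)) * exp (n * (t * μ + c * t ^ 2)) := by
        gcongr; exact mgf_sum_range_le hX hindep hid hmgf n ht
    _ = exp (-t * h + n * (c * t ^ 2)) := by rw [← exp_add]; ring_nf
    _ ≤ _ := exp_le_exp.2 (neg_mul_add_mul_sq_le hc hM hn)

lemma measureReal_sum_range_le_mul_sub_le {n : ℕ} {h M : ℝ} (hc : 0 < c) (hh : 0 ≤ h)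
    (hM : 0 < M) (hn : (n : ℝ) ≤ M) (hhr : h ≤ 2 * c * M * r) :
    P.real {ω | ∑ i ∈ range n, X i ω ≤ μ * n - h} ≤ exp (-(h ^ 2 / (4 * c * M))) := by
  set t := h / (2 * c * M)
  have ht : |-t| ≤ r := by
    rw [abs_neg, abs_of_nonneg (by positivity), div_le_iff₀ (by positivity)]; linarith
  simp_rw [← Finset.sum_apply]
  calc _ ≤ exp (- -t * (μ * n - h)) * mgf (∑ i ∈ range n, X i) P (-t) :=
        measure_le_le_exp_mul_mgf _ (by simp only [t, Left.neg_nonpos_iff]; positivity)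
          (integrable_exp_mul_sum_range hX hindep hid n (hexp _ ht))
    _ ≤ exp (- -t * (μ * n - h)) * exp (n * (-t * μ + c * (-t) ^ 2)) := by
        gcongr; exact mgf_sum_range_le hX hindep hid hmgf n ht
    _ = exp (-t * h + n * (c * t ^ 2)) := by rw [← exp_add]; ring_nf
    _ ≤ _ := exp_le_exp.2 (neg_mul_add_mul_sq_le hc hM hn)

/- The Chernoff bounds are used with `M = 3 m`, which exceeds both `⌊m - δ⌋₊` and `⌈m + δ⌉₊`. -/
lemma measureReal_mul_lt_sum_range_le_add_exp (hpos : ∀ᵐ ω ∂P, ∀ i, 0 ≤ X i ω) {m δ : ℝ}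
    (hμ : 0 ≤ μ) (hc : 0 < c) (hm : 1 ≤ m) (hδ : 0 ≤ δ) (hδm : δ ≤ m)
    (hδr : μ * δ ≤ 6 * c * m * r) :
    P.real {ω | μ * m < ∑ i ∈ range (N ω), X i ω} ≤
      P.real {ω | m - δ < N ω} + exp (-((μ * δ) ^ 2 / (4 * c * (3 * m)))) := by
  set n := ⌊m - δ⌋₊
  have hn : (n : ℝ) ≤ m - δ := Nat.floor_le (by linarith)
  have hsets : {ω | n < N ω} = {ω | m - δ < N ω} := by
    ext ω; exact Nat.floor_lt (by linarith)
  have hdev : P.real {ω | μ * m ≤ ∑ i ∈ range n, X i ω} ≤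
      P.real {ω | μ * n + μ * δ ≤ ∑ i ∈ range n, X i ω} :=
    measureReal_mono <| Set.ofPred_subset_ofPred.2 fun ω hω =>
      (by nlinarith : μ * n + μ * δ ≤ μ * m).trans hω
  have hchernoff := measureReal_mul_add_le_sum_range_le hX hindep hid hexp hmgf hc
    (by positivity : 0 ≤ μ * δ) (by positivity : (0 : ℝ) < 3 * m) (by linarith) (by linarith)
  have hsplit := measureReal_lt_sum_range_le (N := N) hpos n (μ * m)
  rw [hsets] at hsplit
  linarith

lemma measureReal_add_lt_le_add_exp (hpos : ∀ᵐ ω ∂P, ∀ i, 0 ≤ X i ω) {m δ : ℝ} (hμ : 0 ≤ μ)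
    (hc : 0 < c) (hm : 1 ≤ m) (hδ : 0 ≤ δ) (hδm : δ ≤ m) (hδr : μ * δ ≤ 6 * c * m * r) :
    P.real {ω | m + δ < N ω} ≤
      P.real {ω | μ * m < ∑ i ∈ range (N ω), X i ω} +
        exp (-((μ * δ) ^ 2 / (4 * c * (3 * m)))) := by
  set n := ⌈m + δ⌉₊
  have hn : m + δ ≤ n := Nat.le_ceil _
  have hn' : (n : ℝ) < m + δ + 1 := Nat.ceil_lt_add_one (by linarith)
  have htail : P.real {ω | m + δ < N ω} ≤ P.real {ω | n ≤ N ω} :=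
    measureReal_mono <| Set.ofPred_subset_ofPred.2 fun ω hω => Nat.ceil_le.2 hω.le
  have hdev : P.real {ω | ∑ i ∈ range n, X i ω ≤ μ * m} ≤
      P.real {ω | ∑ i ∈ range n, X i ω ≤ μ * n - μ * δ} :=
    measureReal_mono <| Set.ofPred_subset_ofPred.2 fun ω hω =>
      hω.trans (by nlinarith : μ * m ≤ μ * n - μ * δ)
  have hchernoff := measureReal_sum_range_le_mul_sub_le hX hindep hid hexp hmgf hc
    (by positivity : 0 ≤ μ * δ) (by positivity : (0 : ℝ) < 3 * m) (by linarith) (by linarith)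
  linarith [measureReal_le_le_lt_sum_range (N := N) hpos n (μ * m)]

lemma eventually_measureReal_mul_lt_sum_range_squeeze (hpos : ∀ᵐ ω ∂P, ∀ i, 0 ≤ X i ω)
    {a : ℝ → ℝ} (ha : ∀ᶠ m in atTop, 0 ≤ a m ∧ a m ≤ m) (hμ : 0 ≤ μ) (hc : 0 < c) {ε : ℝ}
    (hε₀ : 0 ≤ ε) (hε₁ : ε ≤ 1) (hεr : μ * ε ≤ 6 * c * r) :
    ∀ᶠ m in atTop,
      P.real {ω | m + ε * a m < N ω} - exp (-((μ * (ε * a m)) ^ 2 / (4 * c * (3 * m)))) ≤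
          P.real {ω | μ * m < ∑ i ∈ range (N ω), X i ω} ∧
        P.real {ω | μ * m < ∑ i ∈ range (N ω), X i ω} ≤
          P.real {ω | m - ε * a m < N ω} + exp (-((μ * (ε * a m)) ^ 2 / (4 * c * (3 * m)))) := by
  filter_upwards [ha, eventually_ge_atTop 1] with m ⟨ha₀, ham⟩ hm
  have hδ : 0 ≤ ε * a m := by positivity
  have hδm : ε * a m ≤ m := by nlinarith
  have hδr : μ * (ε * a m) ≤ 6 * c * m * r := by
    have hr : 0 ≤ 6 * c * r := (mul_nonneg hμ hε₀).trans hεr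
    nlinarith [mul_le_mul_of_nonneg_right hεr ha₀, mul_le_mul_of_nonneg_left ham hr]
  exact ⟨sub_le_iff_le_add.2 <|
      measureReal_add_lt_le_add_exp hX hindep hid hexp hmgf hpos hμ hc hm hδ hδm hδr,
    measureReal_mul_lt_sum_range_le_add_exp hX hindep hid hexp hmgf hpos hμ hc hm hδ hδm hδr⟩

end IidSums

lemma tendsto_measureReal_lt_atTop {Ω : Type*} [MeasurableSpace Ω] {P : Measure Ω}
    [IsFiniteMeasure P] {Y : Ω → ℝ} (hY : Measurable Y) :
    Tendsto (fun x : ℝ => P.real {ω | x < Y ω}) atTop (𝓝 0) := by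
  have hanti : Antitone fun x : ℝ => {ω | x < Y ω} := fun x y hxy ω (hω : y < Y ω) =>
    hxy.trans_lt hω
  have hempty : ⋂ x : ℝ, {ω | x < Y ω} = ∅ :=
    Set.eq_empty_of_forall_notMem fun ω hω => (lt_irrefl (Y ω)) (Set.mem_iInter.1 hω (Y ω))
  have h := tendsto_measure_iInter_atTop (μ := P)
    (fun _ => (measurableSet_lt measurable_const hY).nullMeasurableSet) hanti
    ⟨0, measure_ne_top _ _⟩
  rw [hempty, measure_empty] at h
  exact (ENNReal.tendsto_toReal ENNReal.zero_ne_top).comp h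

lemma tendsto_of_eventually_squeeze {α ι : Type*} {l : Filter α} {p : Filter ι} [p.NeBot]
    {R : α → ℝ} {L U : ι → ℝ} {b : ℝ} (hL : Tendsto L p (𝓝 b)) (hU : Tendsto U p (𝓝 b))
    (h : ∀ᶠ i in p, ∃ lo up : α → ℝ, Tendsto lo l (𝓝 (L i)) ∧ Tendsto up l (𝓝 (U i)) ∧
      ∀ᶠ x in l, lo x ≤ R x ∧ R x ≤ up x) :
    Tendsto R l (𝓝 b) := by
  refine tendsto_order.2 ⟨fun b' hb' => ?_, fun b' hb' => ?_⟩
  · obtain ⟨i, ⟨lo, up, hlo, -, hR⟩, hi⟩ := (h.and (hL.eventually (eventually_gt_nhds hb'))).exists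
    filter_upwards [hlo.eventually (eventually_gt_nhds hi), hR] with x h₁ h₂ using h₁.trans_le h₂.1
  · obtain ⟨i, ⟨lo, up, -, hup, hR⟩, hi⟩ := (h.and (hU.eventually (eventually_lt_nhds hb'))).exists
    filter_upwards [hup.eventually (eventually_lt_nhds hi), hR] with x h₁ h₂ using h₂.2.trans_lt h₁

lemma rpow_one_third_pow_three {m : ℝ} (hm : 0 ≤ m) : (m ^ (1 / 3 : ℝ)) ^ 3 = m := by
  rw [← rpow_natCast, ← rpow_mul hm]; norm_num

lemma rpow_one_third_sq {m : ℝ} (hm : 0 ≤ m) : (m ^ (1 / 3 : ℝ)) ^ 2 = m ^ ((2 : ℝ) / 3) := by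
  rw [← rpow_natCast, ← rpow_mul hm]; norm_num

lemma add_quarter_pow_three_le {s k : ℝ} (hs : 1 ≤ s) (hk : 0 ≤ k) (hks : k ^ 3 ≤ s) :
    (k + 1 / 4) ^ 3 ≤ s + s ^ ((2 : ℝ) / 3) := by
  set u := s ^ (1 / 3 : ℝ)
  have hu₃ : u ^ 3 = s := rpow_one_third_pow_three (by linarith)
  have hu₁ : 1 ≤ u := one_le_rpow hs (by norm_num)
  have hku : k ≤ u := (pow_le_pow_iff_left₀ hk (by linarith) three_ne_zero).1 (hu₃ ▸ hks)
  calc (k + 1 / 4) ^ 3 ≤ (u + 1 / 4) ^ 3 := by gcongr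
    _ ≤ u ^ 3 + u ^ 2 := by nlinarith
    _ = s + s ^ ((2 : ℝ) / 3) := by rw [hu₃, rpow_one_third_sq (by linarith)]

lemma eventually_rpow_le_of_tendsto_div_atTop {a : ℝ → ℝ} {p : ℝ}
    (ha : Tendsto (fun x => a x / x ^ p) atTop atTop) : ∀ᶠ x in atTop, x ^ p ≤ a x := by
  filter_upwards [ha.eventually_ge_atTop 1, eventually_gt_atTop 0] with x hx hx₀
  rwa [le_div_iff₀ (rpow_pos_of_pos hx₀ _), one_mul] at hx

section GumbelTail

variable {F a : ℝ → ℝ}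

lemma le_iterate_add_and_pow_three_le {x₁ : ℝ} (hx₁ : 1 ≤ x₁)
    (ha : ∀ x ≥ x₁, x ^ ((2 : ℝ) / 3) ≤ a x) (j : ℕ) :
    x₁ ≤ (fun x => x + a x)^[j] x₁ ∧ ((j : ℝ) / 4) ^ 3 ≤ (fun x => x + a x)^[j] x₁ := by
  induction j with
  | zero => simp only [Function.iterate_zero_apply, CharP.cast_eq_zero]; constructor <;> linarith
  | succ j ih =>
    rw [Function.iterate_succ_apply']
    set s := (fun x => x + a x)^[j] x₁
    have has := ha s ih.1
    have hs₀ : 0 ≤ s ^ ((2 : ℝ) / 3) := rpow_nonneg (by linarith) _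
    have hstep := add_quarter_pow_three_le (hx₁.trans ih.1) (by positivity) ih.2
    refine ⟨by linarith, ?_⟩
    rw [Nat.cast_succ, add_div]
    linarith

lemma exp_neg_two_mul_le_iterate_add {x₁ : ℝ}
    (hstep : ∀ x ≥ x₁, exp (-2) * F x ≤ F (x + a x))
    (hs : ∀ j : ℕ, x₁ ≤ (fun x => x + a x)^[j] x₁) (j : ℕ) :
    exp (-2 * j) * F x₁ ≤ F ((fun x => x + a x)^[j] x₁) := by
  induction j with
  | zero => simp
  | succ j ih =>
    rw [Function.iterate_succ_apply']
    calc exp (-2 * ↑(j + 1)) * F x₁ = exp (-2) * (exp (-2 * j) * F x₁) := by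
          rw [← mul_assoc, ← exp_add]; push_cast; ring_nf
      _ ≤ exp (-2) * F ((fun x => x + a x)^[j] x₁) := by gcongr
      _ ≤ _ := hstep _ (hs j)

lemma exists_mul_exp_neg_rpow_le (hF : Antitone F) (hpos : ∀ᶠ x in atTop, 0 < F x)
    (hstep : ∀ᶠ x in atTop, exp (-2) * F x ≤ F (x + a x))
    (ha : ∀ᶠ x in atTop, x ^ ((2 : ℝ) / 3) ≤ a x) :
    ∃ C > 0, ∀ᶠ m in atTop, C * exp (-8 * m ^ (1 / 3 : ℝ)) ≤ F m := by
  obtain ⟨x₀, hx₀⟩ := eventually_atTop.1 (hpos.and (hstep.and ha))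
  set x₁ := max x₀ 1
  have hx₁ : ∀ x ≥ x₁, 0 < F x ∧ exp (-2) * F x ≤ F (x + a x) ∧ x ^ ((2 : ℝ) / 3) ≤ a x :=
    fun x hx => hx₀ x (le_of_max_le_left hx)
  have hchain := le_iterate_add_and_pow_three_le (le_max_right x₀ 1) fun x hx => (hx₁ x hx).2.2
  refine ⟨exp (-2) * F x₁, mul_pos (exp_pos _) (hx₁ x₁ le_rfl).1, ?_⟩
  filter_upwards [eventually_ge_atTop x₁] with m hm
  have hm₀ : 0 ≤ m := (zero_le_one.trans (le_max_right x₀ 1)).trans hm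
  set j := ⌈4 * m ^ (1 / 3 : ℝ)⌉₊
  have hj : 4 * m ^ (1 / 3 : ℝ) ≤ j := Nat.le_ceil _
  have hj' : (j : ℝ) < 4 * m ^ (1 / 3 : ℝ) + 1 := Nat.ceil_lt_add_one (by positivity)
  have hmj : m ≤ (fun x => x + a x)^[j] x₁ :=
    calc m = (m ^ (1 / 3 : ℝ)) ^ 3 := (rpow_one_third_pow_three hm₀).symm
      _ ≤ ((j : ℝ) / 4) ^ 3 := by gcongr; linarith
      _ ≤ _ := (hchain j).2
  have hFx₁ := (hx₁ x₁ le_rfl).1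
  calc exp (-2) * F x₁ * exp (-8 * m ^ (1 / 3 : ℝ)) ≤ exp (-2 * j) * F x₁ := by
        rw [mul_right_comm, ← exp_add]; gcongr; linarith
    _ ≤ F ((fun x => x + a x)^[j] x₁) :=
        exp_neg_two_mul_le_iterate_add (fun x hx => (hx₁ x hx).2.1) (fun j => (hchain j).1) j
    _ ≤ F m := hF hmj

lemma tendsto_exp_neg_mul_sq_div_div_of_mul_exp_neg_rpow_le {C K D : ℝ} (hC : 0 < C) (hD : 0 < D)
    (hF : ∀ᶠ m in atTop, C * exp (-K * m ^ (1 / 3 : ℝ)) ≤ F m)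
    (haux : Tendsto (fun x => a x / x ^ ((2 : ℝ) / 3)) atTop atTop) :
    Tendsto (fun m => exp (-(D * a m ^ 2 / m)) / F m) atTop (𝓝 0) := by
  set g := fun m => a m / m ^ ((2 : ℝ) / 3)
  have hexponent : Tendsto (fun m => m ^ (1 / 3 : ℝ) * (D * g m ^ 2 - K)) atTop atTop :=
    (tendsto_rpow_atTop (by norm_num)).atTop_mul_atTop₀ <| tendsto_atTop_add_const_right _ _ <|
      ((tendsto_pow_atTop two_ne_zero).comp haux).const_mul_atTop hD
  have hlim :
      Tendsto (fun m => C⁻¹ * exp (-(m ^ (1 / 3 : ℝ) * (D * g m ^ 2 - K)))) atTop (𝓝 0) := by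
    simpa using (tendsto_exp_neg_atTop_nhds_zero.comp hexponent).const_mul C⁻¹
  refine squeeze_zero' ?_ ?_ hlim
  · filter_upwards [hF] with m hm using
      div_nonneg (exp_pos _).le
        ((by positivity : (0 : ℝ) ≤ C * exp (-K * m ^ (1 / 3 : ℝ))).trans hm)
  · filter_upwards [hF, eventually_gt_atTop 0] with m hm hm₀
    have hsq : D * a m ^ 2 / m = m ^ (1 / 3 : ℝ) * (D * g m ^ 2) := by
      have hu : 0 < m ^ (1 / 3 : ℝ) := rpow_pos_of_pos hm₀ _
      have hm₃ := rpow_one_third_pow_three hm₀.le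
      simp only [g]
      rw [← rpow_one_third_sq hm₀.le]
      generalize a m = A
      generalize m ^ (1 / 3 : ℝ) = u at hu hm₃
      subst hm₃
      field_simp
    rw [div_le_iff₀ ((by positivity : (0 : ℝ) < C * exp (-K * m ^ (1 / 3 : ℝ))).trans_le hm)]
    calc exp (-(D * a m ^ 2 / m))
        = C⁻¹ * exp (-(m ^ (1 / 3 : ℝ) * (D * g m ^ 2 - K))) *
            (C * exp (-K * m ^ (1 / 3 : ℝ))) := by
          rw [mul_mul_mul_comm, inv_mul_cancel₀ hC.ne', one_mul, ← exp_add, hsq]; ring_nf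
      _ ≤ _ := by gcongr

def IsGumbelAuxFun (F a : ℝ → ℝ) : Prop :=
  ∀ y : ℝ, Tendsto (fun x => F (x + y * a x) / F x) atTop (𝓝 (exp (-y)))

namespace IsGumbelAuxFun

lemma eventually_ne_zero (h : IsGumbelAuxFun F a) : ∀ᶠ x in atTop, F x ≠ 0 := by
  have h₀ := h 0
  simp only [zero_mul, add_zero, neg_zero, exp_zero] at h₀
  filter_upwards [h₀.eventually_ne one_ne_zero] with x hx hFx
  simp [hFx] at hx

lemma eventually_pos (h : IsGumbelAuxFun F a) (hF : Antitone F)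
    (hF₀ : Tendsto F atTop (𝓝 0)) : ∀ᶠ x in atTop, 0 < F x := by
  filter_upwards [h.eventually_ne_zero] with x hx using (hF.le_of_tendsto hF₀ x).lt_of_ne' hx

lemma eventually_le_self (h : IsGumbelAuxFun F a) (hF : Antitone F)
    (hF₀ : Tendsto F atTop (𝓝 0)) : ∀ᶠ x in atTop, a x ≤ x := by
  obtain ⟨x₀, hFx₀, hx₀⟩ := ((h.eventually_pos hF hF₀).and (eventually_ge_atTop 0)).exists
  have hratio := (h (-1)).eventually (eventually_lt_nhds (lt_add_one (exp (-(-1)))))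
  have hsmall := hF₀.eventually
    (eventually_lt_nhds (div_pos hFx₀ (by positivity : 0 < exp (-(-1)) + 1)))
  filter_upwards [hratio, hsmall, h.eventually_pos hF hF₀] with x hr hs hp
  -- if `a x > x`, then `F (x - a x) ≥ F x₀` while `F x → 0`, so the ratio at `y = -1` blows up
  by_contra! hax
  have hmono : F x₀ ≤ F (x + -1 * a x) := hF (by linarith)
  rw [div_lt_iff₀ hp] at hr
  rw [lt_div_iff₀ (by positivity)] at hs
  linarith

lemma eventually_exp_neg_two_mul_le (h : IsGumbelAuxFun F a) (hpos : ∀ᶠ x in atTop, 0 < F x) :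
    ∀ᶠ x in atTop, exp (-2) * F x ≤ F (x + a x) := by
  have h₁ := (h 1).eventually (eventually_gt_nhds (exp_lt_exp.2 (by norm_num : (-2 : ℝ) < -1)))
  filter_upwards [h₁, hpos] with x hx hp
  rw [one_mul, lt_div_iff₀ hp] at hx
  exact hx.le

lemma eventually_nonneg_and_le_self (h : IsGumbelAuxFun F a) (hF : Antitone F)
    (hF₀ : Tendsto F atTop (𝓝 0)) (haux : Tendsto (fun x => a x / x ^ ((2 : ℝ) / 3)) atTop atTop) :
    ∀ᶠ x in atTop, 0 ≤ a x ∧ a x ≤ x := by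
  filter_upwards [eventually_rpow_le_of_tendsto_div_atTop haux, h.eventually_le_self hF hF₀,
    eventually_ge_atTop 0] with x h₁ h₂ h₃
  exact ⟨(rpow_nonneg h₃ _).trans h₁, h₂⟩

lemma tendsto_exp_neg_mul_sq_div_div_zero {D : ℝ} (h : IsGumbelAuxFun F a) (hF : Antitone F)
    (hF₀ : Tendsto F atTop (𝓝 0)) (haux : Tendsto (fun x => a x / x ^ ((2 : ℝ) / 3)) atTop atTop)
    (hD : 0 < D) :
    Tendsto (fun m => exp (-(D * a m ^ 2 / m)) / F m) atTop (𝓝 0) := by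
  have hpos := h.eventually_pos hF hF₀
  obtain ⟨C, hC, hlow⟩ := exists_mul_exp_neg_rpow_le hF hpos (h.eventually_exp_neg_two_mul_le hpos)
    (eventually_rpow_le_of_tendsto_div_atTop haux)
  exact tendsto_exp_neg_mul_sq_div_div_of_mul_exp_neg_rpow_le hC hD hlow haux

lemma tendsto_div_of_squeeze {S : ℝ → ℝ} (h : IsGumbelAuxFun F a)
    (hpos : ∀ᶠ x in atTop, 0 < F x)
    (hS : ∀ᶠ ε in 𝓝[>] 0, ∃ E : ℝ → ℝ, Tendsto (fun m => E m / F m) atTop (𝓝 0) ∧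
      ∀ᶠ m in atTop, F (m + ε * a m) - E m ≤ S m ∧ S m ≤ F (m - ε * a m) + E m) :
    Tendsto (fun m => S m / F m) atTop (𝓝 1) := by
  have hexp : ∀ f : ℝ → ℝ, Continuous f → f 0 = 0 → Tendsto (fun ε => exp (f ε)) (𝓝[>] 0) (𝓝 1) :=
    fun f hf hf₀ => by
      simpa [hf₀, Function.comp_def] using
        ((continuous_exp.comp hf).tendsto 0).mono_left nhdsWithin_le_nhds
  refine tendsto_of_eventually_squeeze (L := fun ε => exp (-ε)) (U := exp)
    (hexp _ continuous_neg neg_zero) (hexp _ continuous_id rfl) ?_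
  filter_upwards [hS] with ε ⟨E, hE, hSE⟩
  refine ⟨fun m => F (m + ε * a m) / F m - E m / F m, fun m => F (m - ε * a m) / F m + E m / F m,
    by simpa using (h ε).sub hE, by simpa [sub_eq_add_neg] using (h (-ε)).add hE, ?_⟩
  filter_upwards [hSE, hpos] with m ⟨h₁, h₂⟩ hp
  rw [← sub_div, ← add_div]
  exact ⟨div_le_div_of_nonneg_right h₁ hp.le, div_le_div_of_nonneg_right h₂ hp.le⟩

end IsGumbelAuxFun

end GumbelTail

theorem random_sum_tail_gumbel_general
    {Ω : Type*} [MeasureSpace Ω] [IsProbabilityMeasure (ℙ : Measure Ω)]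
    (N : Ω → ℕ) (hN : Measurable N)
    (X : ℕ → Ω → ℝ) (hX : ∀ i, Measurable (X i))
    (hiid : iIndepFun X ℙ)
    (hid : ∀ i, IdentDistrib (X i) (X 0) ℙ ℙ)
    (hpos : ∀ i, 0 ≤ᵐ[ℙ] X i)
    (hint : Integrable (X 0) ℙ)
    (μ : ℝ) (hμ : μ = ∫ ω, X 0 ω ∂ℙ) (hμpos : 0 < μ)
    -- E[e^{γ X₁}] < ∞ for some γ > 0
    (γ : ℝ) (hγ : 0 < γ)
    (hexpmom : Integrable (fun ω => Real.exp (γ * X 0 ω)) ℙ)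
    -- `N` is in the Gumbel domain of attraction with auxiliary function `a`
    (a : ℝ → ℝ)
    (hGumbel : ∀ y : ℝ, Tendsto (fun x : ℝ =>
        (ℙ {ω | x + y * a x < (N ω : ℝ)}).toReal / (ℙ {ω | x < (N ω : ℝ)}).toReal)
        atTop (𝓝 (Real.exp (-y))))
    -- a(x)/x^{2/3} → ∞
    (haux : Tendsto (fun x : ℝ => a x / x ^ ((2 : ℝ) / 3)) atTop atTop) :
    -- P[S_N > x] ~ P[N > x/μ]
    Tendsto (fun x : ℝ =>
        (ℙ {ω | x < ∑ i ∈ Finset.range (N ω), X i ω}).toReal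
          / (ℙ {ω | x / μ < (N ω : ℝ)}).toReal) atTop (𝓝 1) := by
  set F : ℝ → ℝ := fun x => (ℙ : Measure Ω).real {ω | x < (N ω : ℝ)}
  have hF : Antitone F := fun x y hxy =>
    measureReal_mono <| Set.ofPred_subset_ofPred.2 fun ω hω => hxy.trans_lt hω
  have hF₀ : Tendsto F atTop (𝓝 0) := tendsto_measureReal_lt_atTop (measurable_from_nat.comp hN)
  have hG : IsGumbelAuxFun F a := hGumbel
  set c := 8 / γ ^ 2 * ∫ ω, exp (γ * X 0 ω)
  have hc : 0 < c := by have := integral_exp_pos hexpmom; positivity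
  have hexp t (ht : |t| ≤ γ / 2) := integrable_exp_mul_of_abs_le (hpos 0) (hX 0).aemeasurable
    hexpmom (ht.trans (by linarith))
  have hmgf t (ht : |t| ≤ γ / 2) : mgf (X 0) ℙ t ≤ exp (t * μ + c * t ^ 2) :=
    hμ ▸ mgf_le_exp_mul_add_mul_sq hγ (hpos 0) hint hexpmom ht
  refine ((hG.tendsto_div_of_squeeze (S := fun m => (ℙ : Measure Ω).real
    {ω | μ * m < ∑ i ∈ Finset.range (N ω), X i ω}) (hG.eventually_pos hF hF₀) ?_).comp
      (tendsto_id.atTop_div_const hμpos)).congr fun x => by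
        simp [F, measureReal_def, mul_div_cancel₀ x hμpos.ne']
  filter_upwards [Ioo_mem_nhdsGT (lt_min one_pos (by positivity : 0 < 3 * c * γ / μ))]
    with ε ⟨hε₀, hε⟩
  rw [lt_min_iff, lt_div_iff₀ hμpos] at hε
  refine ⟨fun m => exp (-((μ * (ε * a m)) ^ 2 / (4 * c * (3 * m)))), ?_,
    eventually_measureReal_mul_lt_sum_range_squeeze hX hiid hid hexp hmgf (ae_all_iff.2 hpos)
      (hG.eventually_nonneg_and_le_self hF hF₀ haux) hμpos.le hc hε₀.le hε.1.le (by linarith)⟩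
  convert hG.tendsto_exp_neg_mul_sq_div_div_zero hF hF₀ haux (D := (μ * ε) ^ 2 / (12 * c))
    (by positivity) using 4 with m
  ring

/-- Theorem 4.1 (Gumbel domain of attraction, `a(x)/x^{2/3} → ∞`,
arbitrary dependence between `N` and the `Xᵢ`). -/
theorem random_sum_tail_gumbel
    {Ω : Type*} [MeasureSpace Ω] [IsProbabilityMeasure (ℙ : Measure Ω)]
    (N : Ω → ℕ) (hN : Measurable N)
    (X : ℕ → Ω → ℝ) (hX : ∀ i, Measurable (X i))
    (hiid : iIndepFun X ℙ)
    (hid : ∀ i, IdentDistrib (X i) (X 0) ℙ ℙ)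
    (hpos : ∀ i, 0 ≤ᵐ[ℙ] X i)
    (hint : Integrable (X 0) ℙ)
    (μ : ℝ) (hμ : μ = ∫ ω, X 0 ω ∂ℙ) (hμpos : 0 < μ)
    -- E[e^{γ X₁}] < ∞ for some γ > 0
    (γ : ℝ) (hγ : 0 < γ)
    (hexpmom : Integrable (fun ω => Real.exp (γ * X 0 ω)) ℙ)
    -- `N` is in the Gumbel domain of attraction with auxiliary function `a`
    (a : ℝ → ℝ) (ha : ∀ᶠ x in atTop, 0 < a x)
    (hGumbel : ∀ y : ℝ, Tendsto (fun x : ℝ =>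
        (ℙ {ω | x + y * a x < (N ω : ℝ)}).toReal / (ℙ {ω | x < (N ω : ℝ)}).toReal)
        atTop (𝓝 (Real.exp (-y))))
    -- a(x)/x^{2/3} → ∞
    (haux : Tendsto (fun x : ℝ => a x / x ^ ((2 : ℝ) / 3)) atTop atTop) :
    -- P[S_N > x] ~ P[N > x/μ]
    Tendsto (fun x : ℝ =>
        (ℙ {ω | x < ∑ i ∈ Finset.range (N ω), X i ω}).toReal
          / (ℙ {ω | x / μ < (N ω : ℝ)}).toReal) atTop (𝓝 1) :=
  random_sum_tail_gumbel_general N hN X hX hiid hid hpos hint μ hμ hμpos γ hγ hexpmom a hGumbel haux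
end

section
/- If E[X_1^r] < ∞ for some r > 1, then for each γ > 0 and q > 0 there exist positive constants v and C, not depending on x or n, such that for all x ≥ γn and all integers n ≥ 1, P[S_n − nμ > x] ≤ n·P[X_1 − μ > vx] + C·x^{−q}. -/
open MeasureTheory ProbabilityTheory Filter Topology

/-! Truncate every summand at `t = μ + v x`. If some `Xᵢ` exceeds `t`, a union bound gives
`n P[X₁ - μ > v x]`; otherwise the truncated sum exceeds `nμ + x`, and the Chernoff bound with
`h = q log x / x` applies, chosen so that `e^{-hx} = x^{-q}`. For `0 ≤ Y ≤ t` one has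
`E e^{hY} ≤ exp (h E Y + h² e^{ht} E Y²)`, and with `s = min r 2` truncation gives
`E Y² ≤ t^{2-s} E |X|^s`. The choice `v = (s - 1) / (2q)` makes `e^{ht} ≤ e^{qμ} x^{(s-1)/2}`,
so, as `n ≤ x / γ`, the exponent `n h² e^{ht} t^{2-s} E |X|^s = O(log² x · x^{-(s-1)/2})` stays
bounded. -/

open Real Finset

lemma Real.exp_le_one_add_add_sq_mul_exp {u c : ℝ} (hu : 0 ≤ u) (huc : u ≤ c) :
    exp u ≤ 1 + u + u ^ 2 * exp c := by
  have hsub : exp u - 1 ≤ u * exp u := by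
    have := mul_le_mul_of_nonneg_right (add_one_le_exp (-u)) (exp_pos u).le
    rw [exp_neg, inv_mul_cancel₀ (exp_pos u).ne'] at this
    nlinarith
  nlinarith [mul_le_mul_of_nonneg_left hsub hu,
    mul_le_mul_of_nonneg_left (exp_le_exp.mpr huc) (sq_nonneg u)]

lemma Real.sq_le_rpow_sub_mul_rpow {y t z s : ℝ} (hy : 0 ≤ y) (hyt : y ≤ t) (hyz : y ≤ z)
    (hs0 : 0 ≤ s) (hs2 : s ≤ 2) : y ^ 2 ≤ t ^ (2 - s) * z ^ s :=
  calc y ^ 2 = y ^ (2 - s) * y ^ s := by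
        rw [← rpow_add' hy (by norm_num), sub_add_cancel, rpow_two]
    _ ≤ t ^ (2 - s) * z ^ s :=
        mul_le_mul (rpow_le_rpow hy hyt (by linarith)) (rpow_le_rpow hy hyz hs0)
          (rpow_nonneg hy _) (rpow_nonneg (hy.trans hyt) _)

lemma Real.sq_log_le_rpow {x a : ℝ} (hx : 1 ≤ x) (ha : 0 < a) :
    log x ^ 2 ≤ (2 / a) ^ 2 * x ^ a := by
  have hlog := log_le_rpow_div (zero_le_one.trans hx) (half_pos ha)
  calc log x ^ 2 ≤ (x ^ (a / 2) / (a / 2)) ^ 2 := pow_le_pow_left₀ (log_nonneg hx) hlog 2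
    _ = (2 / a) ^ 2 * x ^ a := by
        rw [div_pow, ← rpow_natCast, ← rpow_mul (by linarith)]
        push_cast
        field_simp

section

variable {Ω : Type*} {m : MeasurableSpace Ω} {P : Measure Ω}

lemma mgf_le_exp_of_nonneg_of_le [IsProbabilityMeasure P] {Y : Ω → ℝ} {t h : ℝ}
    (hY : AEMeasurable Y P) (h0 : 0 ≤ᵐ[P] Y) (hle : ∀ᵐ ω ∂P, Y ω ≤ t) (hh : 0 ≤ h) :
    mgf Y P h ≤ exp (h * ∫ ω, Y ω ∂P + h ^ 2 * exp (h * t) * ∫ ω, Y ω ^ 2 ∂P) := by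
  have hbdd : ∀ᵐ ω ∂P, ‖Y ω‖ ≤ t := by
    filter_upwards [h0, hle] with ω h0 hle
    rwa [norm_of_nonneg h0]
  have hYint : Integrable Y P := Integrable.of_bound hY.aestronglyMeasurable t hbdd
  have hY2int : Integrable (fun ω => Y ω ^ 2) P := by
    refine Integrable.of_bound (hY.pow_const 2).aestronglyMeasurable (t ^ 2) ?_
    filter_upwards [h0, hle] with ω h0 hle
    rw [norm_of_nonneg (by positivity)]
    exact pow_le_pow_left₀ h0 hle 2
  have hlin : Integrable (fun ω => 1 + h * Y ω) P := (integrable_const 1).add (hYint.const_mul h)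
  calc mgf Y P h = ∫ ω, exp (h * Y ω) ∂P := rfl
    _ ≤ ∫ ω, (1 + h * Y ω + h ^ 2 * exp (h * t) * Y ω ^ 2) ∂P := by
        refine integral_mono_ae (integrable_exp_mul_of_le h t hh hY hle)
          (hlin.add (hY2int.const_mul _)) ?_
        filter_upwards [h0, hle] with ω h0 hle
        refine (exp_le_one_add_add_sq_mul_exp (mul_nonneg hh h0)
          (mul_le_mul_of_nonneg_left hle hh)).trans_eq ?_
        ring
    _ = 1 + (h * ∫ ω, Y ω ∂P + h ^ 2 * exp (h * t) * ∫ ω, Y ω ^ 2 ∂P) := by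
        rw [integral_add hlin (hY2int.const_mul _),
          integral_add (integrable_const 1) (hYint.const_mul h), integral_const_mul,
          integral_const_mul]
        simp only [integral_const, probReal_univ, smul_eq_mul, one_mul]
        ring
    _ ≤ _ := by rw [add_comm]; exact add_one_le_exp _

lemma measureReal_sum_ge_le_exp_mul_mgf_pow [IsFiniteMeasure P] {Y : ℕ → Ω → ℝ}
    (hY : ∀ i, Measurable (Y i)) (hind : iIndepFun Y P)
    (hid : ∀ i, IdentDistrib (Y i) (Y 0) P P) {h : ℝ} (hh : 0 ≤ h)
    (hint : Integrable (fun ω => exp (h * Y 0 ω)) P) (n : ℕ) (a : ℝ) :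
    P.real {ω | a ≤ ∑ i ∈ range n, Y i ω} ≤ exp (-h * a) * mgf (Y 0) P h ^ n := by
  have hint_sum : Integrable (fun ω => exp (h * (∑ i ∈ range n, Y i) ω)) P :=
    hind.integrable_exp_mul_sum hY fun i _ =>
      ((hid i).comp (measurable_const_mul h).exp).integrable_iff.mpr hint
  have hmgf : mgf (∑ i ∈ range n, Y i) P h = mgf (Y 0) P h ^ n := by
    rw [hind.mgf_sum hY, prod_congr rfl fun i _ => mgf_congr_of_identDistrib _ _ (hid i) h,
      prod_const, card_range]
  simpa only [hmgf, Finset.sum_apply] using measure_ge_le_exp_mul_mgf a hh hint_sum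

lemma measureReal_sum_gt_le_mul_add_sum_min_ge [IsFiniteMeasure P] {X : ℕ → Ω → ℝ}
    (hid : ∀ i, IdentDistrib (X i) (X 0) P P) (n : ℕ) (a t : ℝ) :
    P.real {ω | a < ∑ i ∈ range n, X i ω} ≤
      n * P.real {ω | t < X 0 ω} + P.real {ω | a ≤ ∑ i ∈ range n, min (X i ω) t} := by
  have hsub : {ω | a < ∑ i ∈ range n, X i ω} ⊆
      (⋃ i ∈ range n, {ω | t < X i ω}) ∪ {ω | a ≤ ∑ i ∈ range n, min (X i ω) t} := by
    intro ω hω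
    by_cases hbig : ∃ i ∈ range n, t < X i ω
    · obtain ⟨i, hi, hti⟩ := hbig
      exact Or.inl (Set.mem_biUnion hi hti)
    · push Not at hbig
      refine Or.inr ?_
      rw [Set.mem_ofPred_eq, sum_congr rfl fun i hi => min_eq_left (hbig i hi)]
      exact hω.le
  have hcopy : ∀ i, P.real {ω | t < X i ω} = P.real {ω | t < X 0 ω} := fun i => by
    rw [measureReal_def, measureReal_def]
    exact congrArg ENNReal.toReal ((hid i).measure_mem_eq (measurableSet_Ioi (a := t)))
  calc P.real {ω | a < ∑ i ∈ range n, X i ω}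
      ≤ P.real (⋃ i ∈ range n, {ω | t < X i ω}) +
          P.real {ω | a ≤ ∑ i ∈ range n, min (X i ω) t} :=
        (measureReal_mono hsub).trans (measureReal_union_le _ _)
    _ ≤ ∑ i ∈ range n, P.real {ω | t < X i ω} +
          P.real {ω | a ≤ ∑ i ∈ range n, min (X i ω) t} := by
        gcongr
        exact measureReal_biUnion_finset_le _ _
    _ = _ := by simp only [hcopy, sum_const, card_range, nsmul_eq_mul]

lemma measureReal_sum_min_ge_le_exp [IsProbabilityMeasure P] {X : ℕ → Ω → ℝ}
    (hX : ∀ i, Measurable (X i)) (hind : iIndepFun X P)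
    (hid : ∀ i, IdentDistrib (X i) (X 0) P P) (hpos : 0 ≤ᵐ[P] X 0) (hint : Integrable (X 0) P)
    {s : ℝ} (hs0 : 0 ≤ s) (hs2 : s ≤ 2) (hmom : Integrable (fun ω => |X 0 ω| ^ s) P)
    {t h : ℝ} (ht : 0 ≤ t) (hh : 0 ≤ h) (n : ℕ) (x : ℝ) :
    P.real {ω | x + n * ∫ ω, X 0 ω ∂P ≤ ∑ i ∈ range n, min (X i ω) t} ≤
      exp (-h * x + n * (h ^ 2 * exp (h * t) * (t ^ (2 - s) * ∫ ω, |X 0 ω| ^ s ∂P))) := by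
  set Y : ℕ → Ω → ℝ := fun i ω => min (X i ω) t
  have htrunc : Measurable fun y : ℝ => min y t := measurable_id.min measurable_const
  have hYm : ∀ i, Measurable (Y i) := fun i => htrunc.comp (hX i)
  have hY0 : 0 ≤ᵐ[P] Y 0 := hpos.mono fun ω hω => le_min hω ht
  have hYle : ∀ᵐ ω ∂P, Y 0 ω ≤ t := ae_of_all _ fun ω => min_le_right _ _
  have hmean : ∫ ω, Y 0 ω ∂P ≤ ∫ ω, X 0 ω ∂P :=
    integral_mono_of_nonneg hY0 hint (ae_of_all _ fun ω => min_le_left _ _)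
  have hsq : ∫ ω, Y 0 ω ^ 2 ∂P ≤ t ^ (2 - s) * ∫ ω, |X 0 ω| ^ s ∂P := by
    rw [← integral_const_mul]
    refine integral_mono_of_nonneg (ae_of_all _ fun ω => sq_nonneg _) (hmom.const_mul _) ?_
    filter_upwards [hY0] with ω hω
    exact sq_le_rpow_sub_mul_rpow hω (min_le_right _ _)
      ((min_le_left _ _).trans (le_abs_self _)) hs0 hs2
  have hmgf := mgf_le_exp_of_nonneg_of_le (hYm 0).aemeasurable hY0 hYle hh
  calc P.real {ω | x + n * ∫ ω, X 0 ω ∂P ≤ ∑ i ∈ range n, Y i ω}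
      ≤ exp (-h * (x + n * ∫ ω, X 0 ω ∂P)) * mgf (Y 0) P h ^ n :=
        measureReal_sum_ge_le_exp_mul_mgf_pow hYm (hind.comp _ fun _ => htrunc)
          (fun i => (hid i).comp htrunc) hh
          (integrable_exp_mul_of_le h t hh (hYm 0).aemeasurable hYle) n _
    _ ≤ exp (-h * (x + n * ∫ ω, X 0 ω ∂P)) *
          exp (h * ∫ ω, Y 0 ω ∂P + h ^ 2 * exp (h * t) * ∫ ω, Y 0 ω ^ 2 ∂P) ^ n :=
        mul_le_mul_of_nonneg_left (pow_le_pow_left₀ mgf_nonneg hmgf n) (exp_pos _).le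
    _ ≤ _ := by
        rw [← exp_nat_mul, ← exp_add, exp_le_exp]
        have hn : (0 : ℝ) ≤ n := n.cast_nonneg
        linarith [mul_le_mul_of_nonneg_left (mul_le_mul_of_nonneg_left hmean hh) hn,
          mul_le_mul_of_nonneg_left
            (mul_le_mul_of_nonneg_left hsq (by positivity : 0 ≤ h ^ 2 * exp (h * t))) hn]

end

lemma natCast_mul_quadratic_term_le {q γ s μ M x : ℝ} {n : ℕ} (hq : 0 < q) (hγ : 0 < γ)
    (hs1 : 1 < s) (hs2 : s ≤ 2) (hμ : 0 ≤ μ) (hM : 0 ≤ M) (hx : 1 ≤ x) (hn : γ * n ≤ x) :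
    n * ((q * log x / x) ^ 2 * exp (q * log x / x * ((s - 1) / (2 * q) * x + μ)) *
        (((s - 1) / (2 * q) * x + μ) ^ (2 - s) * M)) ≤
      q ^ 2 * M * exp (q * μ) * ((s - 1) / (2 * q) + μ) ^ (2 - s) / γ * (4 / (s - 1)) ^ 2 := by
  set a := (s - 1) / 2 with ha_def
  set v := (s - 1) / (2 * q) with hv_def
  set L := log x
  set K := q ^ 2 * M * exp (q * μ) * (v + μ) ^ (2 - s) / γ with hK_def
  have hx0 : 0 < x := zero_lt_one.trans_le hx
  have ha : 0 < a := by rw [ha_def]; linarith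
  have hv : 0 ≤ v := by rw [hv_def]; exact div_nonneg (by linarith) (by positivity)
  have hL : 0 ≤ L := log_nonneg hx
  have hnx : (n : ℝ) ≤ x / γ := by rw [le_div_iff₀ hγ]; linarith
  have hexp : exp (q * L / x * (v * x + μ)) ≤ exp (q * μ) * x ^ a := by
    have hLx : L / x ≤ 1 := (div_le_one hx0).mpr ((log_le_sub_one_of_pos hx0).trans (by linarith))
    have hsplit : q * L / x * (v * x + μ) = q * μ * (L / x) + L * a := by
      rw [hv_def, ha_def]; field_simp; ring
    rw [hsplit, exp_add, rpow_def_of_pos hx0]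
    exact mul_le_mul_of_nonneg_right
      (exp_le_exp.mpr (mul_le_of_le_one_right (by positivity) hLx)) (exp_pos _).le
  have hpow : (v * x + μ) ^ (2 - s) ≤ (v + μ) ^ (2 - s) * x ^ (2 - s) := by
    rw [← mul_rpow (by positivity) hx0.le]
    gcongr
    nlinarith
  have hsum : a + (a + (2 - s)) = 1 := by rw [ha_def]; ring
  calc (n : ℝ) * ((q * L / x) ^ 2 * exp (q * L / x * (v * x + μ)) * ((v * x + μ) ^ (2 - s) * M))
      ≤ x / γ * ((q * L / x) ^ 2 * (exp (q * μ) * x ^ a) *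
          ((v + μ) ^ (2 - s) * x ^ (2 - s) * M)) := by
        gcongr
    _ = K / x * (L ^ 2 * (x ^ a * x ^ (2 - s))) := by
        rw [hK_def]
        field_simp
    _ ≤ K / x * ((2 / a) ^ 2 * x ^ a * (x ^ a * x ^ (2 - s))) := by
        gcongr
        exact sq_log_le_rpow hx ha
    _ = K * (4 / (s - 1)) ^ 2 := by
        rw [mul_assoc _ (x ^ a), ← rpow_add hx0, ← rpow_add hx0, hsum, rpow_one, ha_def]
        field_simp
        ring

/-- Lemma 2.1 (large-deviation bound of Tang): if `E[X₁^r] < ∞` for some `r > 1`, then for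
each `γ > 0` and `q > 0` there are constants `v, C > 0` such that for all `n ≥ 1` and
`x ≥ γ n`, `P[Sₙ - nμ > x] ≤ n P[X₁ - μ > v x] + C x^{-q}`. -/
theorem large_deviation_bound_Tang
    {Ω : Type*} [MeasureSpace Ω] [IsProbabilityMeasure (ℙ : Measure Ω)]
    (X : ℕ → Ω → ℝ) (hX : ∀ i, Measurable (X i))
    (hiid : iIndepFun X ℙ)
    (hid : ∀ i, IdentDistrib (X i) (X 0) ℙ ℙ)
    (hpos : ∀ i, 0 ≤ᵐ[ℙ] X i)
    (hint : Integrable (X 0) ℙ)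
    (μ : ℝ) (hμ : μ = ∫ ω, X 0 ω ∂ℙ)
    (r : ℝ) (hr : 1 < r)
    (hmom : Integrable (fun ω => |X 0 ω| ^ r) ℙ)
    (γ q : ℝ) (hγ : 0 < γ) (hq : 0 < q) :
    ∃ v C : ℝ, 0 < v ∧ 0 < C ∧ ∀ n : ℕ, 1 ≤ n → ∀ x : ℝ, γ * n ≤ x →
      (ℙ {ω | x < (∑ i ∈ Finset.range n, X i ω) - n * μ}).toReal
        ≤ n * (ℙ {ω | v * x < X 0 ω - μ}).toReal + C * x ^ (-q) := by
  obtain ⟨s, hs1, hs2, hsr⟩ : ∃ s, 1 < s ∧ s ≤ 2 ∧ s ≤ r :=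
    ⟨min r 2, lt_min hr one_lt_two, min_le_right _ _, min_le_left _ _⟩
  have hmom_s : Integrable (fun ω => |X 0 ω| ^ s) ℙ := by
    simpa only [Real.norm_eq_abs] using integrable_norm_rpow_of_le (hX 0).aestronglyMeasurable
      (by linarith) (by linarith) hsr (by simpa only [Real.norm_eq_abs] using hmom)
  have hμ0 : 0 ≤ μ := hμ ▸ integral_nonneg_of_ae (hpos 0)
  have hM : 0 ≤ ∫ ω, |X 0 ω| ^ s ∂ℙ := integral_nonneg fun ω => by positivity
  set v := (s - 1) / (2 * q)
  set A := q ^ 2 * (∫ ω, |X 0 ω| ^ s ∂ℙ) * exp (q * μ) * (v + μ) ^ (2 - s) / γ *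
    (4 / (s - 1)) ^ 2
  refine ⟨v, exp A, div_pos (by linarith) (by positivity), exp_pos A, fun n hn x hx => ?_⟩
  have hx0 : 0 < x := (mul_pos hγ (Nat.cast_pos.mpr hn)).trans_le hx
  simp_rw [← measureReal_def, lt_sub_iff_add_lt]
  rcases lt_or_ge x 1 with hx1 | hx1
  · have hA : 0 ≤ A := by positivity
    calc _ ≤ 1 := measureReal_le_one
      _ ≤ exp A * x ^ (-q) := one_le_mul_of_one_le_of_one_le (one_le_exp hA)
          (one_le_rpow_of_pos_of_le_one_of_nonpos hx0 hx1.le (by linarith))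
      _ ≤ _ := le_add_of_nonneg_left (by positivity)
  set h := q * log x / x with hh_def
  have hh : 0 ≤ h := div_nonneg (mul_nonneg hq.le (log_nonneg hx1)) hx0.le
  have htail := measureReal_sum_min_ge_le_exp hX hiid hid (hpos 0) hint (by linarith) hs2
    hmom_s (t := v * x + μ) (by positivity) hh n x
  rw [← hμ] at htail
  have hexp : exp (-h * x + n * (h ^ 2 * exp (h * (v * x + μ)) *
      ((v * x + μ) ^ (2 - s) * ∫ ω, |X 0 ω| ^ s ∂ℙ))) ≤ exp A * x ^ (-q) := by
    rw [rpow_def_of_pos hx0, ← exp_add, exp_le_exp]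
    have hhx : -h * x = log x * -q := by rw [hh_def]; field_simp
    linarith [natCast_mul_quadratic_term_le hq hγ hs1 hs2 hμ0 hM hx1 hx]
  refine (measureReal_sum_gt_le_mul_add_sum_min_ge hid n _ (v * x + μ)).trans ?_
  gcongr
  exact htail.trans hexp
end

section
/- If E[e^{tX_1}] < ∞ for some t > 0, then for any positive sequence a_n with a_n/n^{1/2} → ∞ and a_n/n → 0, one has P[S_n > nμ + a_n] = exp( −(a_n²/(2σ²n))·(1 + o(1)) ) and P[S_n < nμ − a_n] = exp( −(a_n²/(2σ²n))·(1 + o(1)) ) as n → ∞. -/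
/-!
Write `Λ` for the cumulant generating function of `X₁`, which is analytic near `0`. Its
derivative `Λ'(s)` is the mean of `X₁` under the law tilted by `e^{sX₁}`, and `Λ''(0) = σ²`, so
`Λ'(s) = μ + σ² s + o(s)` and, by L'Hôpital, `Λ(s) = μ s + σ² s² / 2 + o(s²)`. Put
`cₙ = aₙ² / (2σ²n)`; the hypotheses on `aₙ` say exactly that `cₙ → ∞` while the tilting parameters
`l = κ aₙ / (σ² n)` tend to `0`.

Upper bound: Chernoff's inequality at `l = aₙ / (σ² n)` gives
`P[Sₙ ≥ nμ + aₙ] ≤ e^{nΛ(l) - l(nμ + aₙ)}`, and the exponent is `-(1 + o(1)) cₙ`.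

Lower bound: tilt at `l = (1 + 2η) aₙ / (σ² n)`. Under the tilted law `Sₙ` has mean `nΛ'(l)`, which
is about `nμ + (1 + 2η) aₙ`, and variance `nΛ''(l) = O(n) = o(aₙ²)`; by Chebyshev it lies in the
window `|Sₙ - nΛ'(l)| < η aₙ`, inside `{Sₙ > nμ + aₙ}`, with probability close to `1`. On that
window the density of the tilted law is at most `e^{l(nΛ'(l) + η aₙ) - nΛ(l)}`, so
`P[Sₙ > nμ + aₙ] ≥ e^{-(1 + 2η)(1 + 4η + o(1)) cₙ}`; then let `η → 0`.
-/

open MeasureTheory ProbabilityTheory Filter Topology Real Finset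

section RealSequences

lemma exists_tendsto_zero_eq_exp_neg_mul {P c : ℕ → ℝ} (hc : ∀ᶠ n in atTop, 0 < c n)
    (h : ∀ ε > 0, ∀ᶠ n in atTop,
      exp (-(1 + ε) * c n) ≤ P n ∧ P n ≤ exp (-(1 - ε) * c n)) :
    ∃ e : ℕ → ℝ, Tendsto e atTop (𝓝 0) ∧ ∀ᶠ n in atTop, P n = exp (-c n * (1 + e n)) := by
  refine ⟨fun n ↦ -log (P n) / c n - 1, Metric.tendsto_nhds.mpr fun ε hε ↦ ?_, ?_⟩
  · filter_upwards [hc, h (ε / 2) (half_pos hε)] with n hcn ⟨hlo, hup⟩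
    have hlog_lo := log_le_log (exp_pos _) hlo
    have hlog_up := log_le_log ((exp_pos _).trans_le hlo) hup
    rw [log_exp] at hlog_lo hlog_up
    have : |-log (P n) / c n - 1| ≤ ε / 2 := by
      rw [abs_le, le_sub_iff_add_le, sub_le_iff_le_add, le_div_iff₀ hcn, div_le_iff₀ hcn]
      constructor <;> linarith
    rw [Real.dist_eq, sub_zero]
    linarith
  · filter_upwards [hc, h 1 one_pos] with n hcn hP
    rw [show -c n * (1 + (-log (P n) / c n - 1)) = log (P n) by field_simp; ring,
      exp_log ((exp_pos _).trans_le hP.1)]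

variable {a : ℕ → ℝ} (ha : Tendsto (fun n : ℕ ↦ a n / (n : ℝ) ^ ((1 : ℝ) / 2)) atTop atTop)
include ha

lemma tendsto_sq_div_mul_atTop {b : ℝ} (hb : 0 < b) :
    Tendsto (fun n : ℕ ↦ a n ^ 2 / (b * n)) atTop atTop := by
  refine (((tendsto_pow_atTop two_ne_zero).comp ha).atTop_div_const hb).congr fun n ↦ ?_
  rw [Function.comp_apply, div_pow, ← sqrt_eq_rpow, sq_sqrt n.cast_nonneg, div_div, mul_comm]

lemma eventually_pos_of_tendsto_div_rpow : ∀ᶠ n in atTop, 0 < a n := by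
  filter_upwards [ha.eventually_gt_atTop 0] with n hn
  exact ((div_pos_iff.mp hn).resolve_right fun h ↦ h.2.not_ge (by positivity)).1

lemma tendsto_const_mul_div_nhdsGT {b : ℝ} (hb : 0 < b)
    (ha' : Tendsto (fun n : ℕ ↦ a n / n) atTop (𝓝 0)) :
    Tendsto (fun n : ℕ ↦ b * (a n / n)) atTop (𝓝[>] 0) :=
  tendsto_nhdsWithin_iff.mpr ⟨by simpa using ha'.const_mul b, by
    filter_upwards [eventually_pos_of_tendsto_div_rpow ha, eventually_gt_atTop 0] with n han hn
    exact mul_pos hb (div_pos han (Nat.cast_pos.mpr hn))⟩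

end RealSequences

namespace ProbabilityTheory

variable {Ω : Type*} {mΩ : MeasurableSpace Ω} {μ : Measure Ω}

section IntegrableExpSet

variable {Y : Ω → ℝ}

lemma zero_mem_interior_integrableExpSet_of_nonneg [IsFiniteMeasure μ] (hY : AEMeasurable Y μ)
    (hnonneg : 0 ≤ᵐ[μ] Y) {t : ℝ} (ht : 0 < t) (h : Integrable (fun ω ↦ exp (t * Y ω)) μ) :
    0 ∈ interior (integrableExpSet Y μ) := by
  have hneg : Integrable (fun ω ↦ exp (-1 * Y ω)) μ := by
    refine (integrable_const 1).mono' (by fun_prop) ?_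
    filter_upwards [hnonneg] with ω hω
    simpa using hω
  exact mem_interior_iff_mem_nhds.mpr <| mem_of_superset (Ioo_mem_nhds (by norm_num) ht)
    fun s hs ↦ integrable_exp_mul_of_le_of_le hneg h hs.1.le hs.2.le

lemma zero_mem_interior_integrableExpSet_neg (h : 0 ∈ interior (integrableExpSet Y μ)) :
    0 ∈ interior (integrableExpSet (fun ω ↦ -Y ω) μ) := by
  have : integrableExpSet (fun ω ↦ -Y ω) μ = Neg.neg ⁻¹' integrableExpSet Y μ := by
    ext s
    simp [integrableExpSet]
  rw [this, mem_interior_iff_mem_nhds]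
  exact continuous_neg.continuousAt.preimage_mem_nhds
    (by simpa using mem_interior_iff_mem_nhds.mp h)

end IntegrableExpSet

section CgfNearZero

variable [IsProbabilityMeasure μ] {Y : Ω → ℝ} (h0 : 0 ∈ interior (integrableExpSet Y μ))
include h0

lemma iteratedDeriv_two_cgf_zero : iteratedDeriv 2 (cgf Y μ) 0 = Var[Y; μ] := by
  rw [← variance_tilted_mul h0]
  simp

lemma tendsto_iteratedDeriv_two_cgf :
    Tendsto (iteratedDeriv 2 (cgf Y μ)) (𝓝 0) (𝓝 Var[Y; μ]) := by
  rw [← iteratedDeriv_two_cgf_zero h0, iteratedDeriv_succ, iteratedDeriv_one]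
  exact (analyticAt_cgf h0).deriv.deriv.continuousAt

lemma tendsto_deriv_cgf_sub_div :
    Tendsto (fun s ↦ (deriv (cgf Y μ) s - μ[Y]) / s) (𝓝[≠] 0) (𝓝 Var[Y; μ]) := by
  have hd : HasDerivAt (deriv (cgf Y μ)) Var[Y; μ] 0 := by
    rw [← iteratedDeriv_two_cgf_zero h0, iteratedDeriv_succ, iteratedDeriv_one]
    exact (analyticAt_cgf h0).deriv.differentiableAt.hasDerivAt
  convert hasDerivAt_iff_tendsto_slope.mp hd using 2 with s
  simp [slope_def_field, deriv_cgf_zero h0]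

lemma tendsto_cgf_sub_mul_div_sq :
    Tendsto (fun s ↦ (cgf Y μ s - μ[Y] * s) / s ^ 2) (𝓝[≠] 0) (𝓝 (Var[Y; μ] / 2)) := by
  have hcgf : ∀ᶠ s in 𝓝 0, HasDerivAt (fun s ↦ cgf Y μ s - μ[Y] * s)
      (deriv (cgf Y μ) s - μ[Y]) s := by
    filter_upwards [isOpen_interior.mem_nhds h0] with s hs
    simpa using (analyticAt_cgf hs).differentiableAt.hasDerivAt.fun_sub
      ((hasDerivAt_id' s).const_mul μ[Y])
  refine HasDerivAt.lhopital_zero_nhdsNE (f' := fun s ↦ deriv (cgf Y μ) s - μ[Y])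
    (g' := fun s ↦ 2 * s) (eventually_nhdsWithin_of_eventually_nhds hcgf)
    (Eventually.of_forall fun s ↦ by simpa using hasDerivAt_pow 2 s)
    (eventually_nhdsWithin_of_forall fun s hs ↦ mul_ne_zero two_ne_zero hs) ?_ ?_ ?_
  · simpa using (analyticAt_cgf h0).continuousAt.tendsto.sub
      ((continuous_const_mul (μ[Y])).tendsto 0) |>.mono_left nhdsWithin_le_nhds
  · exact tendsto_nhdsWithin_of_tendsto_nhds (by simpa using (continuous_pow 2).tendsto (0 : ℝ))
  · simpa [div_mul_eq_div_div_swap] using (tendsto_deriv_cgf_sub_div h0).div_const 2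

end CgfNearZero

section TiltAsymptotics

variable {Y : Ω → ℝ} (h0 : 0 ∈ interior (integrableExpSet Y μ)) (hσ : 0 < Var[Y; μ])
  {a : ℕ → ℝ}
  (ha₁ : Tendsto (fun n : ℕ ↦ a n / (n : ℝ) ^ ((1 : ℝ) / 2)) atTop atTop)
  (ha₂ : Tendsto (fun n : ℕ ↦ a n / n) atTop (𝓝 0)) {κ : ℝ} (hκ : 0 < κ) {l : ℕ → ℝ}
  (hl : l = fun n ↦ κ / Var[Y; μ] * (a n / n))
include hσ ha₁ ha₂ hκ hl

lemma tendsto_tilt_nhdsGT : Tendsto l atTop (𝓝[>] 0) :=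
  hl ▸ tendsto_const_mul_div_nhdsGT ha₁ (by positivity) ha₂

variable [IsProbabilityMeasure μ]
include h0

lemma tendsto_chernoff_exponent_div :
    Tendsto (fun n : ℕ ↦ (n * cgf Y μ (l n) - l n * (n * μ[Y] + a n))
      / (a n ^ 2 / (2 * Var[Y; μ] * n))) atTop (𝓝 (κ * (κ - 2))) := by
  have hf := ((tendsto_cgf_sub_mul_div_sq h0).comp ((tendsto_tilt_nhdsGT hσ ha₁ ha₂ hκ hl)
    |>.mono_right (nhdsGT_le_nhdsNE 0))).const_mul (2 * κ ^ 2 / Var[Y; μ]) |>.sub_const (2 * κ)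
  rw [show 2 * κ ^ 2 / Var[Y; μ] * (Var[Y; μ] / 2) - 2 * κ = κ * (κ - 2) by field_simp] at hf
  refine hf.congr' ?_
  filter_upwards [eventually_pos_of_tendsto_div_rpow ha₁, eventually_ne_atTop 0] with n han hn
  subst hl
  simp only [Function.comp_apply]
  field_simp
  ring

lemma eventually_mul_le_mul_deriv_cgf_sub {η : ℝ} (hη : 1 + η < κ) :
    ∀ᶠ n : ℕ in atTop, (1 + η) * a n ≤ n * (deriv (cgf Y μ) (l n) - μ[Y]) := by
  have hD := ((tendsto_deriv_cgf_sub_div h0).comp ((tendsto_tilt_nhdsGT hσ ha₁ ha₂ hκ hl)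
    |>.mono_right (nhdsGT_le_nhdsNE 0))).const_mul (κ / Var[Y; μ])
  rw [div_mul_cancel₀ κ hσ.ne'] at hD
  filter_upwards [hD.eventually (lt_mem_nhds hη), eventually_pos_of_tendsto_div_rpow ha₁,
    eventually_ne_atTop 0] with n hn han hn0
  have : n * (deriv (cgf Y μ) (l n) - μ[Y])
      = a n * (κ / Var[Y; μ] * ((deriv (cgf Y μ) (l n) - μ[Y]) / l n)) := by
    subst hl
    field_simp
  simp only [Function.comp_apply] at hn
  nlinarith [mul_lt_mul_of_pos_left hn han]

lemma tendsto_tilted_exponent_div (η : ℝ) :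
    Tendsto (fun n : ℕ ↦ (n * cgf Y μ (l n) - l n * (n * deriv (cgf Y μ) (l n) + η * a n) - 1)
      / (a n ^ 2 / (2 * Var[Y; μ] * n))) atTop (𝓝 (-(κ * (κ + 2 * η)))) := by
  have hl' := (tendsto_tilt_nhdsGT hσ ha₁ ha₂ hκ hl).mono_right (nhdsGT_le_nhdsNE 0)
  have hf := ((((tendsto_cgf_sub_mul_div_sq h0).comp hl').sub
    ((tendsto_deriv_cgf_sub_div h0).comp hl')).const_mul (2 * κ ^ 2 / Var[Y; μ])).sub_const
      (2 * κ * η) |>.sub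
        (tendsto_sq_div_mul_atTop ha₁ (by positivity : 0 < 2 * Var[Y; μ])).inv_tendsto_atTop
  rw [show 2 * κ ^ 2 / Var[Y; μ] * (Var[Y; μ] / 2 - Var[Y; μ]) - 2 * κ * η - 0
    = -(κ * (κ + 2 * η)) by field_simp; ring] at hf
  refine hf.congr' ?_
  filter_upwards [eventually_pos_of_tendsto_div_rpow ha₁, eventually_ne_atTop 0] with n han hn
  subst hl
  simp only [Function.comp_apply, Pi.inv_apply]
  field_simp
  ring

end TiltAsymptotics

theorem exp_cgf_sub_mul_le_measureReal_gt [IsFiniteMeasure μ] [NeZero μ] {Z : Ω → ℝ} {l r : ℝ}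
    (hl : 0 ≤ l) (h : l ∈ interior (integrableExpSet Z μ)) (hr : 0 < r) :
    exp (cgf Z μ l - l * (deriv (cgf Z μ) l + r)) * (1 - iteratedDeriv 2 (cgf Z μ) l / r ^ 2)
      ≤ μ.real {ω | deriv (cgf Z μ) l - r < Z ω} := by
  have hint := interior_subset (s := integrableExpSet Z μ) h
  set ν := μ.tilted (l * Z ·)
  have : IsProbabilityMeasure ν := isProbabilityMeasure_tilted hint
  set m := deriv (cgf Z μ) l
  set B := {ω | |Z ω - m| < r}
  have hcheb : ν.real {ω | r ≤ |Z ω - m|} ≤ iteratedDeriv 2 (cgf Z μ) l / r ^ 2 := by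
    rw [← variance_tilted_mul h]
    refine ENNReal.toReal_le_of_le_ofReal (div_nonneg (variance_nonneg _ _) (sq_nonneg r)) ?_
    simpa only [integral_tilted_mul_self h] using
      meas_ge_le_variance_div_sq (memLp_tilted_mul h 2) hr
  have hcover : 1 ≤ ν.real B + ν.real {ω | r ≤ |Z ω - m|} := by
    rw [← probReal_univ (μ := ν)]
    refine (measureReal_mono (fun ω _ ↦ ?_)).trans (measureReal_union_le _ _)
    simpa [B] using lt_or_ge _ _
  have hdensity : ν.real B ≤ exp (l * (m + r) - cgf Z μ l) * μ.real B := by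
    have hle : ν B ≤ ENNReal.ofReal (exp (l * (m + r) - cgf Z μ l)) * μ B := by
      rw [tilted_mul_apply_cgf B hint, ← setLIntegral_const]
      refine setLIntegral_mono measurable_const fun ω hω ↦ ?_
      have hZω : Z ω < m + r := by linarith [(abs_lt.mp (show |Z ω - m| < r from hω)).2]
      gcongr
    simpa [Measure.real, ENNReal.toReal_mul, (exp_pos _).le] using
      ENNReal.toReal_mono (by simp [ENNReal.mul_eq_top]) hle
  have hB : B ⊆ {ω | m - r < Z ω} := fun ω hω ↦ by
    simp only [B, Set.mem_ofPred_eq, abs_lt] at hω ⊢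
    linarith
  calc exp (cgf Z μ l - l * (m + r)) * (1 - iteratedDeriv 2 (cgf Z μ) l / r ^ 2)
      ≤ exp (cgf Z μ l - l * (m + r)) * ν.real B := by gcongr; linarith
    _ ≤ exp (cgf Z μ l - l * (m + r)) * (exp (l * (m + r) - cgf Z μ l) * μ.real B) := by
        gcongr
    _ = μ.real B := by rw [← mul_assoc, ← exp_add]; simp
    _ ≤ μ.real {ω | m - r < Z ω} := measureReal_mono hB

section IIDSums

variable {X : ℕ → Ω → ℝ} (hX : ∀ i, Measurable (X i)) (hiid : iIndepFun X μ)
  (hid : ∀ i, IdentDistrib (X i) (X 0) μ μ)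
include hX hiid hid

lemma mgf_sum_range (n : ℕ) : mgf (∑ i ∈ range n, X i) μ = fun s ↦ mgf (X 0) μ s ^ n := by
  ext s
  rw [hiid.mgf_sum hX, prod_congr rfl fun i _ ↦ mgf_congr_of_identDistrib _ _ (hid i) s,
    prod_const, card_range]

lemma cgf_sum_range (n : ℕ) : cgf (∑ i ∈ range n, X i) μ = fun s ↦ n * cgf (X 0) μ s := by
  ext s
  simp [cgf, mgf_sum_range hX hiid hid, log_pow]

variable [IsProbabilityMeasure μ]

lemma integrableExpSet_subset_sum_range (n : ℕ) :
    integrableExpSet (X 0) μ ⊆ integrableExpSet (∑ i ∈ range n, X i) μ := fun s hs ↦ by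
  simp only [integrableExpSet, Set.mem_ofPred_eq, ← mgf_pos_iff,
    mgf_sum_range hX hiid hid] at hs ⊢
  positivity

theorem measureReal_le_sum_range_le_exp {l : ℝ} (hl : 0 ≤ l) (h : l ∈ integrableExpSet (X 0) μ)
    (n : ℕ) (x : ℝ) :
    μ.real {ω | x ≤ ∑ i ∈ range n, X i ω} ≤ exp (n * cgf (X 0) μ l - l * x) := by
  simpa [cgf_sum_range hX hiid hid, neg_mul, neg_add_eq_sub] using
    measure_ge_le_exp_cgf (X := ∑ i ∈ range n, X i) x hl
      (integrableExpSet_subset_sum_range hX hiid hid n h)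

theorem exp_mul_le_measureReal_lt_sum_range {l r x : ℝ} {n : ℕ} (hl : 0 ≤ l)
    (h : l ∈ interior (integrableExpSet (X 0) μ)) (hr : 0 < r)
    (hx : x ≤ n * deriv (cgf (X 0) μ) l - r) :
    exp (n * cgf (X 0) μ l - l * (n * deriv (cgf (X 0) μ) l + r))
        * (1 - n * iteratedDeriv 2 (cgf (X 0) μ) l / r ^ 2)
      ≤ μ.real {ω | x < ∑ i ∈ range n, X i ω} := by
  have hS := exp_cgf_sub_mul_le_measureReal_gt hl
    (interior_mono (integrableExpSet_subset_sum_range hX hiid hid n) h) hr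
  simp only [cgf_sum_range hX hiid hid, deriv_const_mul_field, iteratedDeriv_const_mul_field,
    Finset.sum_apply] at hS
  refine hS.trans (measureReal_mono (fun ω hω ↦ ?_) (measure_ne_top _ _))
  simp only [Set.mem_ofPred_eq] at hω ⊢
  linarith

end IIDSums

section UpperTail

variable [IsProbabilityMeasure μ] {X : ℕ → Ω → ℝ} (hX : ∀ i, Measurable (X i))
  (hiid : iIndepFun X μ) (hid : ∀ i, IdentDistrib (X i) (X 0) μ μ)
  (h0 : 0 ∈ interior (integrableExpSet (X 0) μ)) (hσ : 0 < Var[X 0; μ]) {a : ℕ → ℝ}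
  (ha₁ : Tendsto (fun n : ℕ ↦ a n / (n : ℝ) ^ ((1 : ℝ) / 2)) atTop atTop)
  (ha₂ : Tendsto (fun n : ℕ ↦ a n / n) atTop (𝓝 0))
include hX hiid hid h0 hσ ha₁ ha₂

theorem eventually_measureReal_lt_sum_range_le {ε : ℝ} (hε : 0 < ε) :
    ∀ᶠ n : ℕ in atTop, μ.real {ω | n * μ[X 0] + a n < ∑ i ∈ range n, X i ω}
      ≤ exp (-(1 - ε) * (a n ^ 2 / (2 * Var[X 0; μ] * n))) := by
  set l : ℕ → ℝ := fun n ↦ 1 / Var[X 0; μ] * (a n / n) with hl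
  have hl' := tendsto_tilt_nhdsGT hσ ha₁ ha₂ one_pos hl
  have hE := tendsto_chernoff_exponent_div h0 hσ ha₁ ha₂ one_pos hl
  filter_upwards [hE.eventually (gt_mem_nhds (show 1 * (1 - 2) < -(1 - ε) by linarith)),
    hl' self_mem_nhdsWithin, (hl'.mono_right nhdsWithin_le_nhds) (isOpen_interior.mem_nhds h0),
    (tendsto_sq_div_mul_atTop ha₁ (by positivity : 0 < 2 * Var[X 0; μ])).eventually_gt_atTop 0]
    with n hEn hln hlint hc
  rw [div_lt_iff₀ hc] at hEn
  calc μ.real {ω | n * μ[X 0] + a n < ∑ i ∈ range n, X i ω}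
      ≤ μ.real {ω | n * μ[X 0] + a n ≤ ∑ i ∈ range n, X i ω} :=
        measureReal_mono (Set.ofPred_subset_ofPred.mpr fun _ ↦ le_of_lt) (measure_ne_top _ _)
    _ ≤ exp (n * cgf (X 0) μ (l n) - l n * (n * μ[X 0] + a n)) :=
        measureReal_le_sum_range_le_exp hX hiid hid hln.le
          (interior_subset (s := integrableExpSet (X 0) μ) hlint) n _
    _ ≤ exp (-(1 - ε) * (a n ^ 2 / (2 * Var[X 0; μ] * n))) := exp_le_exp.mpr hEn.le

omit hσ ha₂ in
theorem eventually_exp_sub_one_le_measureReal_lt_sum_range {l : ℕ → ℝ} {η : ℝ} (hη : 0 < η)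
    (hl : Tendsto l atTop (𝓝[>] 0))
    (hwin : ∀ᶠ n : ℕ in atTop, (1 + η) * a n ≤ n * (deriv (cgf (X 0) μ) (l n) - μ[X 0])) :
    ∀ᶠ n : ℕ in atTop,
      exp (n * cgf (X 0) μ (l n) - l n * (n * deriv (cgf (X 0) μ) (l n) + η * a n) - 1)
        ≤ μ.real {ω | n * μ[X 0] + a n < ∑ i ∈ range n, X i ω} := by
  have hl0 : Tendsto l atTop (𝓝 0) := hl.mono_right nhdsWithin_le_nhds
  have hcheb : Tendsto (fun n : ℕ ↦ 1 - n * iteratedDeriv 2 (cgf (X 0) μ) (l n) / (η * a n) ^ 2)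
      atTop (𝓝 1) := by
    have := ((((tendsto_iteratedDeriv_two_cgf h0).comp hl0).mul
      (tendsto_sq_div_mul_atTop ha₁ one_pos).inv_tendsto_atTop).div_const (η ^ 2)).const_sub 1
    rw [mul_zero, zero_div, sub_zero] at this
    refine this.congr fun n ↦ ?_
    simp only [Function.comp_apply, Pi.inv_apply, inv_div, one_mul]
    ring
  filter_upwards [hwin, hcheb.eventually (lt_mem_nhds (show exp (-1) < 1 by norm_num)),
    hl self_mem_nhdsWithin, hl0 (isOpen_interior.mem_nhds h0),
    eventually_pos_of_tendsto_div_rpow ha₁] with n hwinn hchebn hln hlint han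
  calc exp (n * cgf (X 0) μ (l n) - l n * (n * deriv (cgf (X 0) μ) (l n) + η * a n) - 1)
      = exp (n * cgf (X 0) μ (l n) - l n * (n * deriv (cgf (X 0) μ) (l n) + η * a n))
          * exp (-1) := by rw [← exp_add, sub_eq_add_neg]
    _ ≤ exp (n * cgf (X 0) μ (l n) - l n * (n * deriv (cgf (X 0) μ) (l n) + η * a n))
          * (1 - n * iteratedDeriv 2 (cgf (X 0) μ) (l n) / (η * a n) ^ 2) := by gcongr
    _ ≤ _ := exp_mul_le_measureReal_lt_sum_range hX hiid hid hln.le hlint (by positivity)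
          (by linarith)

theorem eventually_exp_le_measureReal_lt_sum_range {ε : ℝ} (hε : 0 < ε) :
    ∀ᶠ n : ℕ in atTop, exp (-(1 + ε) * (a n ^ 2 / (2 * Var[X 0; μ] * n)))
      ≤ μ.real {ω | n * μ[X 0] + a n < ∑ i ∈ range n, X i ω} := by
  obtain ⟨η, hη, hηε⟩ : ∃ η > 0, (1 + 2 * η) * (1 + 2 * η + 2 * η) < 1 + ε :=
    ⟨min (ε / 16) 1, by positivity, by
      nlinarith [min_le_left (ε / 16) 1, min_le_right (ε / 16) 1,
        lt_min (by positivity : 0 < ε / 16) one_pos]⟩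
  set l : ℕ → ℝ := fun n ↦ (1 + 2 * η) / Var[X 0; μ] * (a n / n) with hl
  have hκ : 0 < 1 + 2 * η := by positivity
  filter_upwards [eventually_exp_sub_one_le_measureReal_lt_sum_range hX hiid hid h0 ha₁ hη
      (tendsto_tilt_nhdsGT hσ ha₁ ha₂ hκ hl)
      (eventually_mul_le_mul_deriv_cgf_sub h0 hσ ha₁ ha₂ hκ hl (by linarith)),
    (tendsto_tilted_exponent_div h0 hσ ha₁ ha₂ hκ hl η).eventually (lt_mem_nhds (neg_lt_neg hηε)),
    (tendsto_sq_div_mul_atTop ha₁ (by positivity : 0 < 2 * Var[X 0; μ])).eventually_gt_atTop 0]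
    with n hP hE hc
  rw [lt_div_iff₀ hc] at hE
  exact (exp_le_exp.mpr (by linarith)).trans hP

theorem exists_tendsto_zero_measureReal_lt_sum_range_eq_exp :
    ∃ e : ℕ → ℝ, Tendsto e atTop (𝓝 0) ∧ ∀ᶠ n : ℕ in atTop,
      μ.real {ω | n * μ[X 0] + a n < ∑ i ∈ range n, X i ω}
        = exp (-(a n ^ 2 / (2 * Var[X 0; μ] * n)) * (1 + e n)) :=
  exists_tendsto_zero_eq_exp_neg_mul
    ((tendsto_sq_div_mul_atTop ha₁ (by positivity : 0 < 2 * Var[X 0; μ])).eventually_gt_atTop 0)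
    fun _ hε ↦ (eventually_exp_le_measureReal_lt_sum_range hX hiid hid h0 hσ ha₁ ha₂ hε).and
      (eventually_measureReal_lt_sum_range_le hX hiid hid h0 hσ ha₁ ha₂ hε)

end UpperTail

end ProbabilityTheory

theorem cramer_large_deviations_general
    {Ω : Type*} [MeasureSpace Ω] [IsProbabilityMeasure (ℙ : Measure Ω)]
    (X : ℕ → Ω → ℝ) (hX : ∀ i, Measurable (X i))
    (hiid : iIndepFun X ℙ)
    (hid : ∀ i, IdentDistrib (X i) (X 0) ℙ ℙ)
    (hpos : ∀ i, 0 ≤ᵐ[ℙ] X i)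
    (μ : ℝ) (hμ : μ = ∫ ω, X 0 ω ∂ℙ)
    (σ2 : ℝ) (hσ2 : σ2 = variance (X 0) ℙ) (hσ2pos : 0 < σ2)
    (t : ℝ) (ht : 0 < t)
    (hexpmom : Integrable (fun ω => Real.exp (t * X 0 ω)) ℙ)
    (a : ℕ → ℝ)
    (ha1 : Tendsto (fun n : ℕ => a n / (n : ℝ) ^ ((1 : ℝ) / 2)) atTop atTop)
    (ha2 : Tendsto (fun n : ℕ => a n / (n : ℝ)) atTop (𝓝 0)) :
    ∃ e₁ e₂ : ℕ → ℝ, Tendsto e₁ atTop (𝓝 0) ∧ Tendsto e₂ atTop (𝓝 0) ∧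
      ∀ᶠ n : ℕ in atTop,
        (ℙ {ω | n * μ + a n < ∑ i ∈ Finset.range n, X i ω}).toReal
          = Real.exp (-(a n ^ 2 / (2 * σ2 * n)) * (1 + e₁ n)) ∧
        (ℙ {ω | ∑ i ∈ Finset.range n, X i ω < n * μ - a n}).toReal
          = Real.exp (-(a n ^ 2 / (2 * σ2 * n)) * (1 + e₂ n)) := by
  subst hμ hσ2
  have h0 := zero_mem_interior_integrableExpSet_of_nonneg (hX 0).aemeasurable (hpos 0) ht hexpmom
  obtain ⟨e₁, he₁, h₁⟩ :=
    exists_tendsto_zero_measureReal_lt_sum_range_eq_exp hX hiid hid h0 hσ2pos ha1 ha2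
  -- The lower tail of `X` is the upper tail of `-X`.
  obtain ⟨e₂, he₂, h₂⟩ := exists_tendsto_zero_measureReal_lt_sum_range_eq_exp
    (X := fun i ω ↦ -X i ω) (fun i ↦ (hX i).neg)
    (hiid.comp (fun _ ↦ Neg.neg) fun _ ↦ measurable_neg) (fun i ↦ (hid i).comp measurable_neg)
    (zero_mem_interior_integrableExpSet_neg h0) (by rwa [variance_fun_neg]) ha1 ha2
  refine ⟨e₁, e₂, he₁, he₂, ?_⟩
  filter_upwards [h₁, h₂] with n h₁ h₂
  rw [variance_fun_neg, integral_neg] at h₂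
  refine ⟨h₁, Eq.trans ?_ h₂⟩
  congr 2 with ω
  simp only [Set.mem_ofPred_eq, Finset.sum_neg_distrib]
  constructor <;> intro h <;> linarith

/-- Lemma 2.2 (Cramér large deviations): if `E[e^{tX₁}] < ∞` for some `t > 0` and
`aₙ/√n → ∞`, `aₙ/n → 0`, then
`P[Sₙ > nμ + aₙ] = exp(-(aₙ²/(2σ²n))(1+o(1)))` and
`P[Sₙ < nμ - aₙ] = exp(-(aₙ²/(2σ²n))(1+o(1)))`. -/
theorem cramer_large_deviations
    {Ω : Type*} [MeasureSpace Ω] [IsProbabilityMeasure (ℙ : Measure Ω)]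
    (X : ℕ → Ω → ℝ) (hX : ∀ i, Measurable (X i))
    (hiid : iIndepFun X ℙ)
    (hid : ∀ i, IdentDistrib (X i) (X 0) ℙ ℙ)
    (hpos : ∀ i, 0 ≤ᵐ[ℙ] X i)
    (hint : Integrable (X 0) ℙ)
    (μ : ℝ) (hμ : μ = ∫ ω, X 0 ω ∂ℙ)
    (σ2 : ℝ) (hσ2 : σ2 = variance (X 0) ℙ) (hσ2pos : 0 < σ2)
    (t : ℝ) (ht : 0 < t)
    (hexpmom : Integrable (fun ω => Real.exp (t * X 0 ω)) ℙ)
    (a : ℕ → ℝ) (hapos : ∀ n, 0 < a n)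
    (ha1 : Tendsto (fun n : ℕ => a n / (n : ℝ) ^ ((1 : ℝ) / 2)) atTop atTop)
    (ha2 : Tendsto (fun n : ℕ => a n / (n : ℝ)) atTop (𝓝 0)) :
    ∃ e₁ e₂ : ℕ → ℝ, Tendsto e₁ atTop (𝓝 0) ∧ Tendsto e₂ atTop (𝓝 0) ∧
      ∀ᶠ n : ℕ in atTop,
        (ℙ {ω | n * μ + a n < ∑ i ∈ Finset.range n, X i ω}).toReal
          = Real.exp (-(a n ^ 2 / (2 * σ2 * n)) * (1 + e₁ n)) ∧
        (ℙ {ω | ∑ i ∈ Finset.range n, X i ω < n * μ - a n}).toReal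
          = Real.exp (-(a n ^ 2 / (2 * σ2 * n)) * (1 + e₂ n)) :=
  cramer_large_deviations_general X hX hiid hid hpos μ hμ σ2 hσ2 hσ2pos t ht hexpmom a ha1 ha2
end

section
/- A distribution function F of dominated variation satisfies α_F < ∞ (finite upper Matuszewska index of 1/F̄), and consequently the upper order ρ_F = limsup_{x→∞} (−log F̄(x))/log x is finite, and for every ρ > ρ_F, x^{−ρ} = o(F̄(x)) as x → ∞. -/
open Filter Topology

/-- A distribution function `F` of dominated variation has a finite upper Matuszewska index
`αF` of `1/F̄`; consequently the upper order `ρF = limsup (-log F̄(x))/log x` is finite and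
for every `ρ > ρF` one has `x^{-ρ} = o(F̄(x))` as `x → ∞`. -/
theorem dominated_variation_finite_matuszewska_index
    (F : ℝ → ℝ) (hmono : Monotone F)
    (h0 : ∀ x, 0 ≤ F x) (h1 : ∀ x, F x ≤ 1)
    (htail : ∀ x, F x < 1)  -- the tail `F̄ = 1 - F` is everywhere positive
    -- dominatedly varying tail
    (hDV : ∀ y : ℝ, y ∈ Set.Ioo (0 : ℝ) 1 →
        ∃ M : ℝ, ∀ᶠ x : ℝ in atTop, (1 - F (x * y)) / (1 - F x) ≤ M) :
    -- the upper Matuszewska index `αF` of `1/F̄` is finite,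
    IsBoundedUnder (· ≤ ·) atTop (fun y : ℝ =>
        (-Real.log (liminf (fun x : ℝ => (1 - F (x * y)) / (1 - F x)) atTop)) / Real.log y) ∧
    -- the upper order `ρF` of `1/F̄` is finite,
    IsBoundedUnder (· ≤ ·) atTop (fun x : ℝ => (-Real.log (1 - F x)) / Real.log x) ∧
    -- and `x^{-ρ} = o(F̄(x))` for every `ρ` beyond the upper order `ρF`
    ∀ ρ : ℝ, limsup (fun x : ℝ => (-Real.log (1 - F x)) / Real.log x) atTop < ρ →
      (fun x : ℝ => x ^ (-ρ)) =o[atTop] (fun x : ℝ => 1 - F x) := by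
  have htp : ∀ x, 0 < 1 - F x := fun x => by linarith [htail x]
  obtain ⟨M₀, hM₀⟩ := hDV (1/2) ⟨by norm_num, by norm_num⟩
  set M : ℝ := max M₀ 2 with hMdef
  have hM2 : (2:ℝ) ≤ M := le_max_right _ _
  have hM1 : (1:ℝ) ≤ M := by linarith
  have hMpos : (0:ℝ) < M := by linarith
  have hlogM : 0 < Real.log M := Real.log_pos (by linarith)
  have hlog2 : 0 < Real.log 2 := Real.log_pos one_lt_two
  obtain ⟨x₁, hx₁⟩ := eventually_atTop.mp hM₀
  set x₀ : ℝ := max x₁ 1 with hx0def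
  have hx₀1 : (1:ℝ) ≤ x₀ := le_max_right _ _
  have hx₀pos : (0:ℝ) < x₀ := by linarith
  have hstep : ∀ x, x₀ ≤ x → 1 - F (x * (1/2)) ≤ M * (1 - F x) := by
    intro x hx
    have h := (hx₁ x (le_trans (le_max_left _ _) hx)).trans (le_max_left M₀ 2)
    have := (div_le_iff₀ (htp x)).mp h
    linarith [this]
  -- iteration of the one-step inequality
  have hiter : ∀ n : ℕ, ∀ x, x₀ ≤ x → 1 - F x ≤ M ^ n * (1 - F (2 ^ n * x)) := by
    intro n
    induction n with
    | zero => intro x hx; simp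
    | succ n ih =>
      intro x hx
      have hxpos : (0:ℝ) < x := lt_of_lt_of_le hx₀pos hx
      have h2x : x₀ ≤ 2 ^ (n+1) * x := by
        have h1 : (1:ℝ) ≤ 2 ^ (n+1) := one_le_pow₀ (by norm_num)
        nlinarith
      have hstep' := hstep (2 ^ (n+1) * x) h2x
      have heq : (2:ℝ) ^ (n+1) * x * (1/2) = 2 ^ n * x := by ring
      rw [heq] at hstep'
      calc 1 - F x ≤ M ^ n * (1 - F (2 ^ n * x)) := ih x hx
        _ ≤ M ^ n * (M * (1 - F (2 ^ (n+1) * x))) :=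
            mul_le_mul_of_nonneg_left hstep' (pow_nonneg hMpos.le n)
        _ = M ^ (n+1) * (1 - F (2 ^ (n+1) * x)) := by ring
  -- key scaling bound
  have hkey : ∀ y : ℝ, 1 ≤ y → ∀ x, x₀ ≤ x →
      1 - F x ≤ M ^ (⌈Real.logb 2 y⌉₊) * (1 - F (x * y)) := by
    intro y hy x hx
    have hxpos : (0:ℝ) < x := lt_of_lt_of_le hx₀pos hx
    set n := ⌈Real.logb 2 y⌉₊ with hn
    have hy2 : y ≤ 2 ^ n := by
      calc y = (2:ℝ) ^ (Real.logb 2 y) :=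
            (Real.rpow_logb two_pos (by norm_num) (by linarith)).symm
        _ ≤ (2:ℝ) ^ ((n:ℝ)) := Real.rpow_le_rpow_of_exponent_le one_le_two (Nat.le_ceil _)
        _ = 2 ^ n := Real.rpow_natCast 2 n
    have hxy : x * y ≤ 2 ^ n * x := by nlinarith
    have hF : 1 - F (2 ^ n * x) ≤ 1 - F (x * y) := by linarith [hmono hxy]
    calc 1 - F x ≤ M ^ n * (1 - F (2 ^ n * x)) := hiter n x hx
      _ ≤ M ^ n * (1 - F (x * y)) :=
          mul_le_mul_of_nonneg_left hF (pow_nonneg hMpos.le n)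
  -- Part 2: the upper order is finite
  have hbdd2 : IsBoundedUnder (· ≤ ·) atTop (fun x : ℝ => (-Real.log (1 - F x)) / Real.log x) := by
    refine ⟨|(-Real.log (1 - F x₀)) + Real.log M| + Real.log M / Real.log 2, ?_⟩
    rw [eventually_map, eventually_atTop]
    refine ⟨max x₀ (Real.exp 1), fun x hx => ?_⟩
    have hxx₀ : x₀ ≤ x := le_trans (le_max_left _ _) hx
    have hxpos : (0:ℝ) < x := lt_of_lt_of_le hx₀pos hxx₀
    have hlogx : 1 ≤ Real.log x := by
      rw [← Real.log_exp 1]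
      exact Real.log_le_log (Real.exp_pos 1) (le_trans (le_max_right _ _) hx)
    have hlogxpos : (0:ℝ) < Real.log x := by linarith
    have hy1 : (1:ℝ) ≤ x / x₀ := (one_le_div hx₀pos).mpr hxx₀
    have hk := hkey (x / x₀) hy1 x₀ le_rfl
    rw [mul_div_cancel₀ x (ne_of_gt hx₀pos)] at hk
    set n := ⌈Real.logb 2 (x / x₀)⌉₊ with hn
    have hnb : (n:ℝ) ≤ Real.logb 2 x + 1 := by
      have h1 : (n:ℝ) < Real.logb 2 (x / x₀) + 1 :=
        Nat.ceil_lt_add_one (Real.logb_nonneg one_lt_two hy1)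
      have h2 : Real.logb 2 (x / x₀) ≤ Real.logb 2 x :=
        Real.logb_le_logb_of_le one_lt_two (by linarith) (div_le_self hxpos.le hx₀1)
      linarith
    -- take logs in hk
    have hlogk : Real.log (1 - F x₀) ≤ (n:ℝ) * Real.log M + Real.log (1 - F x) := by
      have := Real.log_le_log (htp x₀) hk
      rwa [Real.log_mul (by positivity) (ne_of_gt (htp x)), Real.log_pow] at this
    have hnum : -Real.log (1 - F x) ≤
        (-Real.log (1 - F x₀) + Real.log M) + (Real.log M / Real.log 2) * Real.log x := by
      have hlb : Real.logb 2 x = Real.log x / Real.log 2 := rfl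
      have h3 : (n:ℝ) * Real.log M ≤ (Real.log x / Real.log 2 + 1) * Real.log M := by
        apply mul_le_mul_of_nonneg_right _ hlogM.le
        rw [← hlb]; exact hnb
      have h4 : (Real.log x / Real.log 2 + 1) * Real.log M =
          Real.log M + (Real.log M / Real.log 2) * Real.log x := by
        field_simp; ring
      nlinarith [hlogk]
    show _ ≤ _
    rw [div_le_iff₀ hlogxpos]
    have habs : -Real.log (1 - F x₀) + Real.log M ≤ |(-Real.log (1 - F x₀)) + Real.log M| :=
      le_abs_self _
    have habs0 : (0:ℝ) ≤ |(-Real.log (1 - F x₀)) + Real.log M| := abs_nonneg _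
    nlinarith [hnum]
  refine ⟨?_, hbdd2, ?_⟩
  -- Part 1: finite Matuszewska index
  · refine ⟨2 * (Real.log M / Real.log 2), ?_⟩
    rw [eventually_map, eventually_atTop]
    refine ⟨2, fun y hy => ?_⟩
    have hy1 : (1:ℝ) < y := by linarith
    have hlogy : Real.log 2 ≤ Real.log y := Real.log_le_log two_pos hy
    have hlogypos : (0:ℝ) < Real.log y := by linarith
    set n := ⌈Real.logb 2 y⌉₊ with hn
    set L := liminf (fun x : ℝ => (1 - F (x * y)) / (1 - F x)) atTop with hL
    have hMn : (0:ℝ) < M ^ n := pow_pos hMpos n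
    -- liminf lower bound
    have hLlow : (M ^ n)⁻¹ ≤ L := by
      apply le_liminf_of_le
      · apply isCoboundedUnder_ge_of_eventually_le atTop (x := 1)
        rw [eventually_atTop]
        refine ⟨1, fun x hx => ?_⟩
        have hxpos : (0:ℝ) < x := by linarith
        have hxy : x ≤ x * y := by nlinarith
        have := hmono hxy
        rw [div_le_one (htp x)]
        linarith
      · rw [eventually_atTop]
        refine ⟨x₀, fun x hx => ?_⟩
        have hk := hkey y (by linarith) x hx
        rw [le_div_iff₀ (htp x), inv_mul_le_iff₀ hMn]
        linarith
    have hLpos : (0:ℝ) < L := lt_of_lt_of_le (by positivity) hLlow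
    have hlogL : -Real.log L ≤ (n:ℝ) * Real.log M := by
      have := Real.log_le_log (by positivity) hLlow
      rw [Real.log_inv, Real.log_pow] at this
      linarith
    have hnb : (n:ℝ) ≤ Real.log y / Real.log 2 + 1 :=
      (Nat.ceil_lt_add_one (Real.logb_nonneg one_lt_two hy1.le)).le
    show _ ≤ _
    rw [div_le_iff₀ hlogypos]
    have h1 : (1:ℝ) ≤ Real.log y / Real.log 2 := (one_le_div hlog2).mpr hlogy
    have h2 : (Real.log M / Real.log 2) * Real.log y = Real.log M * (Real.log y / Real.log 2) := by
      ring
    nlinarith [mul_le_mul_of_nonneg_right hnb hlogM.le]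
  -- Part 3
  · intro ρ hρ
    set l := limsup (fun x : ℝ => (-Real.log (1 - F x)) / Real.log x) atTop with hl
    set ρ' := (l + ρ) / 2 with hρ'
    have hρ'1 : l < ρ' := by rw [hρ']; linarith
    have hρ'2 : ρ' < ρ := by rw [hρ']; linarith
    have hev := eventually_lt_of_limsup_lt hρ'1 hbdd2
    have hev2 : ∀ᶠ x : ℝ in atTop, x ^ (-ρ') ≤ 1 - F x := by
      filter_upwards [hev, eventually_ge_atTop (Real.exp 1)] with x h hx
      have hxpos : (0:ℝ) < x := lt_of_lt_of_le (Real.exp_pos 1) hx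
      have hlogx : 1 ≤ Real.log x := by
        rw [← Real.log_exp 1]; exact Real.log_le_log (Real.exp_pos 1) hx
      have h2 : -Real.log (1 - F x) < ρ' * Real.log x :=
        (div_lt_iff₀ (by linarith : (0:ℝ) < Real.log x)).mp h
      calc x ^ (-ρ') = Real.exp (Real.log x * (-ρ')) := Real.rpow_def_of_pos hxpos _
        _ ≤ Real.exp (Real.log (1 - F x)) := Real.exp_le_exp.mpr (by nlinarith)
        _ = 1 - F x := Real.exp_log (htp x)
    have ho : (fun x : ℝ => x ^ (-ρ)) =o[atTop] (fun x : ℝ => x ^ (-ρ')) := by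
      refine (Asymptotics.isLittleO_iff_tendsto' ?_).mpr ?_
      · filter_upwards [eventually_gt_atTop (0:ℝ)] with x hx h
        exact absurd h (by positivity)
      · have ht : Filter.Tendsto (fun x : ℝ => x ^ (-(ρ - ρ'))) atTop (𝓝 0) :=
          tendsto_rpow_neg_atTop (by linarith)
        apply ht.congr'
        filter_upwards [eventually_gt_atTop (0:ℝ)] with x hx
        rw [show -(ρ - ρ') = -ρ - -ρ' by ring, Real.rpow_sub hx]
    refine ho.trans_isBigO (Asymptotics.IsBigO.of_bound 1 ?_)
    filter_upwards [hev2, eventually_gt_atTop (0:ℝ)] with x h hx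
    rw [Real.norm_eq_abs, Real.norm_eq_abs, abs_of_pos (by positivity), abs_of_pos (htp x),
      one_mul]
    exact h
end

section
/- Suppose that conditionally on Λ = λ the random variable N is Poisson with mean βλ (β > 0 fixed), and that P[Λ > λ] = λ^{−α} L(λ) for a slowly varying function L and α > 0, with E[X_1^r] < ∞ and the other tail domination conditions permitting the application of the consistent-variation random sum theorem. Then P[N > x] ~ P[Λ > x/β] = (x/β)^{−α} L(x/β) as x → ∞. -/
/-!
Conditionally on `Λ`, the count `N` is Poisson with mean `βΛ`. Chernoff bounds show that a
Poisson variable with mean `m` exceeds `x` with probability at most `exp (-c x)` when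
`m ≤ (1 - ε) x`, and at least `1 - exp (-c x)` when `m ≥ (1 + ε) x`; integrating over `Λ`,
`P[Λ > (1 + ε) x / β] - exp (-c x) ≤ P[N > x] ≤ P[Λ > (1 - ε) x / β] + exp (-c x)`.
Regular variation gives `P[Λ > y x / β] / P[Λ > x / β] → y ^ (-α)`, and the doubling bound
`P[Λ > 2 l] ≥ 2 ^ (-γ) P[Λ > l]` makes the tail of `Λ` decay at most polynomially, so the
exponential errors are negligible. Letting `ε → 0` gives the claim.
-/

open MeasureTheory ProbabilityTheory Filter Topology Real Asymptotics
open scoped NNReal ENNReal Nat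

lemma measurable_poissonMeasure : Measurable fun r : ℝ≥0 => poissonMeasure r := by
  refine Measure.measurable_of_measurable_coe _ fun S hS => ?_
  simp_rw [poissonMeasure, Measure.sum_apply _ hS, Measure.smul_apply, smul_eq_mul]
  exact Measurable.tsum fun n => (by fun_prop : Measurable _).ennreal_ofReal.mul_const _

lemma hasSum_poissonMeasure_exp_mul (r : ℝ≥0) (t : ℝ) :
    HasSum (fun n : ℕ => exp (-r) * r ^ n / n ! * exp (t * n)) (exp (r * (exp t - 1))) := by
  have h := (NormedSpace.expSeries_div_hasSum_exp (r * exp t : ℝ)).mul_left (exp (-r))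
  rw [← exp_eq_exp_ℝ, ← exp_add, neg_add_eq_sub, ← mul_sub_one] at h
  have hterm : (fun n : ℕ => exp (-r) * r ^ n / n ! * exp (t * n))
      = fun n => exp (-r) * ((r * exp t) ^ n / n !) := by
    ext n
    rw [mul_pow, ← exp_nat_mul, mul_comm (n : ℝ) t]
    ring
  rw [hterm]
  exact h

lemma integrable_exp_mul_poissonMeasure (r : ℝ≥0) (t : ℝ) :
    Integrable (fun n : ℕ => exp (t * n)) (poissonMeasure r) := by
  simpa [integrable_poissonMeasure_iff] using (hasSum_poissonMeasure_exp_mul r t).summable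

lemma mgf_poissonMeasure (r : ℝ≥0) (t : ℝ) :
    mgf (fun n : ℕ => (n : ℝ)) (poissonMeasure r) t = exp (r * (exp t - 1)) := by
  rw [mgf, integral_poissonMeasure' (integrable_exp_mul_poissonMeasure r t)]
  exact (hasSum_poissonMeasure_exp_mul r t).tsum_eq

lemma poissonMeasure_real_ge_le_exp (r : ℝ≥0) (x : ℝ) {t : ℝ} (ht : 0 ≤ t) :
    (poissonMeasure r).real {n | x ≤ n} ≤ exp (r * (exp t - 1) - t * x) := by
  have := measure_ge_le_exp_mul_mgf x ht (integrable_exp_mul_poissonMeasure r t)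
  rw [mgf_poissonMeasure, ← exp_add] at this
  convert this using 2
  ring

lemma poissonMeasure_real_le_le_exp (r : ℝ≥0) (x : ℝ) {t : ℝ} (ht : t ≤ 0) :
    (poissonMeasure r).real {n | (n : ℝ) ≤ x} ≤ exp (r * (exp t - 1) - t * x) := by
  have := measure_le_le_exp_mul_mgf x ht (integrable_exp_mul_poissonMeasure r t)
  rw [mgf_poissonMeasure, ← exp_add] at this
  convert this using 2
  ring

lemma exists_poissonMeasure_real_gt_le_exp {ε : ℝ} (hε₀ : 0 < ε) (hε₁ : ε < 1) :
    ∃ c > 0, ∀ (r : ℝ≥0) (x : ℝ), r ≤ (1 - ε) * x →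
      (poissonMeasure r).real {n | x < n} ≤ exp (-c * x) := by
  have hε : 0 < 1 - ε := by linarith
  refine ⟨-(ε + log (1 - ε)), by linarith [log_lt_sub_one_of_pos hε (by linarith)],
    fun r x hr => ?_⟩
  -- Chernoff bound at `t = -log (1 - ε)`, where `exp t - 1 = ε / (1 - ε)`
  have hmean : r * ((1 - ε)⁻¹ - 1) ≤ ε * x := by
    rw [show (1 - ε)⁻¹ - 1 = ε / (1 - ε) by field_simp; ring, mul_div_assoc', div_le_iff₀ hε]
    nlinarith
  calc (poissonMeasure r).real {n | x < n}
      ≤ (poissonMeasure r).real {n | x ≤ n} := measureReal_mono fun n (hn : x < n) => hn.le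
    _ ≤ exp (r * (exp (-log (1 - ε)) - 1) - -log (1 - ε) * x) :=
      poissonMeasure_real_ge_le_exp r x (neg_nonneg.2 (log_nonpos hε.le (by linarith)))
    _ ≤ exp (-(-(ε + log (1 - ε))) * x) := by
      rw [exp_neg, exp_log hε]
      gcongr
      linarith

lemma exists_one_sub_exp_le_poissonMeasure_real_gt {ε : ℝ} (hε : 0 < ε) :
    ∃ c > 0, ∀ (r : ℝ≥0) (x : ℝ), (1 + ε) * x ≤ r →
      1 - exp (-c * x) ≤ (poissonMeasure r).real {n | x < n} := by
  have hε' : 0 < 1 + ε := by linarith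
  refine ⟨ε - log (1 + ε), by linarith [log_lt_sub_one_of_pos hε' (by linarith)],
    fun r x hr => ?_⟩
  -- Chernoff bound at `t = -log (1 + ε)`, where `exp t - 1 = -ε / (1 + ε)`
  have hmean : ε * x ≤ -(r * ((1 + ε)⁻¹ - 1)) := by
    rw [show (1 + ε)⁻¹ - 1 = -(ε / (1 + ε)) by field_simp; ring, mul_neg, neg_neg,
      mul_div_assoc', le_div_iff₀ hε']
    nlinarith
  have hcompl : {n : ℕ | x < n} = {n : ℕ | (n : ℝ) ≤ x}ᶜ := by ext; simp
  rw [hcompl, probReal_compl_eq_one_sub .of_discrete, sub_le_sub_iff_left]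
  calc (poissonMeasure r).real {n : ℕ | (n : ℝ) ≤ x}
      ≤ exp (r * (exp (-log (1 + ε)) - 1) - -log (1 + ε) * x) :=
      poissonMeasure_real_le_le_exp r x (neg_nonpos.2 (log_nonneg (by linarith)))
    _ ≤ exp (-(ε - log (1 + ε)) * x) := by
      rw [exp_neg, exp_log hε']
      gcongr
      linarith

section Measurability

variable {α : Type*} [MeasurableSpace α] {f : α → ℝ≥0}

lemma Measurable.poissonMeasure (hf : Measurable f) : Measurable fun a => poissonMeasure (f a) :=
  measurable_poissonMeasure.comp hf

lemma Measurable.poissonMeasure_apply (hf : Measurable f) (S : Set ℕ) :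
    Measurable fun a => ProbabilityTheory.poissonMeasure (f a) S :=
  (Measure.measurable_coe (.of_discrete)).comp hf.poissonMeasure

end Measurability

section Mixture

variable {Ω : Type*} [MeasurableSpace Ω] {μ : Measure Ω} {N : Ω → ℕ} {M : Ω → ℝ}

lemma map_eq_bind_poissonMeasure [IsFiniteMeasure μ] (hN : Measurable N) (hM : Measurable M)
    (hM₀ : 0 ≤ᵐ[μ] M)
    (hmix : ∀ n : ℕ, (μ {ω | N ω = n}).toReal = ∫ ω, exp (-M ω) * M ω ^ n / n.factorial ∂μ) :
    μ.map N = μ.bind fun ω => poissonMeasure (M ω).toNNReal := by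
  refine Measure.ext_iff_singleton.2 fun n => ?_
  have hfin : ∫⁻ ω, poissonMeasure (M ω).toNNReal {n} ∂μ ≠ ∞ :=
    ne_top_of_le_ne_top (measure_ne_top μ Set.univ)
      ((lintegral_mono fun _ => prob_le_one).trans_eq lintegral_one)
  rw [Measure.map_apply hN (measurableSet_singleton n),
    Measure.bind_apply (measurableSet_singleton n) hM.real_toNNReal.poissonMeasure.aemeasurable,
    ← ENNReal.toReal_eq_toReal_iff' (measure_ne_top _ _) hfin,
    ← integral_toReal (hM.real_toNNReal.poissonMeasure_apply {n}).aemeasurable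
      (ae_of_all _ fun _ => measure_lt_top _ _)]
  refine (hmix n).trans (integral_congr_ae ?_)
  filter_upwards [hM₀] with ω hω
  rw [← measureReal_def, poissonMeasure_real_singleton, Real.coe_toNNReal _ hω]

lemma measureReal_preimage_eq_integral_poissonMeasure (hN : Measurable N) (hM : Measurable M)
    (hlaw : μ.map N = μ.bind fun ω => poissonMeasure (M ω).toNNReal) (S : Set ℕ) :
    μ.real (N ⁻¹' S) = ∫ ω, (poissonMeasure (M ω).toNNReal).real S ∂μ := by
  rw [measureReal_def, ← Measure.map_apply hN .of_discrete, hlaw,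
    Measure.bind_apply .of_discrete hM.real_toNNReal.poissonMeasure.aemeasurable,
    ← integral_toReal (hM.real_toNNReal.poissonMeasure_apply S).aemeasurable
      (ae_of_all _ fun _ => measure_lt_top _ _)]
  rfl

lemma integrable_poissonMeasure_real [IsFiniteMeasure μ] {f : Ω → ℝ≥0} (hf : Measurable f)
    (S : Set ℕ) : Integrable (fun ω => (poissonMeasure (f ω)).real S) μ :=
  .of_bound (hf.poissonMeasure_apply S).ennreal_toReal.aestronglyMeasurable 1
    (ae_of_all _ fun _ => by rw [Real.norm_of_nonneg measureReal_nonneg]; exact measureReal_le_one)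

lemma measureReal_lt_le_add_exp [IsProbabilityMeasure μ] (hN : Measurable N) (hM : Measurable M)
    (hM₀ : 0 ≤ᵐ[μ] M) (hlaw : μ.map N = μ.bind fun ω => poissonMeasure (M ω).toNNReal) {ε : ℝ}
    (hε₀ : 0 < ε) (hε₁ : ε < 1) :
    ∃ c > 0, ∀ x : ℝ, μ.real {ω | x < N ω} ≤ μ.real {ω | (1 - ε) * x < M ω} + exp (-c * x) := by
  obtain ⟨c, hc, hPo⟩ := exists_poissonMeasure_real_gt_le_exp hε₀ hε₁
  refine ⟨c, hc, fun x => ?_⟩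
  set A := {ω | (1 - ε) * x < M ω}
  have hA : MeasurableSet A := hM measurableSet_Ioi
  calc μ.real {ω | x < N ω}
      = ∫ ω, (poissonMeasure (M ω).toNNReal).real {n | x < n} ∂μ :=
        measureReal_preimage_eq_integral_poissonMeasure hN hM hlaw {n : ℕ | x < n}
    _ ≤ ∫ ω, (A.indicator 1 ω + exp (-c * x)) ∂μ := by
        refine integral_mono_ae (integrable_poissonMeasure_real hM.real_toNNReal _)
          (((integrable_const 1).indicator hA).add (integrable_const _)) ?_
        filter_upwards [hM₀] with ω hω
        by_cases h : ω ∈ A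
        · rw [Set.indicator_of_mem h, Pi.one_apply]
          linarith [measureReal_le_one (μ := poissonMeasure (M ω).toNNReal) (s := {n : ℕ | x < n}),
            exp_pos (-c * x)]
        · rw [Set.indicator_of_notMem h, zero_add]
          exact hPo _ x (by rw [Real.coe_toNNReal _ hω]; exact not_lt.1 h)
    _ = μ.real A + exp (-c * x) := by
        rw [integral_add ((integrable_const 1).indicator hA) (integrable_const _),
          integral_indicator_one hA, integral_const, probReal_univ, one_smul]

lemma measureReal_sub_exp_le_lt [IsProbabilityMeasure μ] (hN : Measurable N) (hM : Measurable M)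
    (hM₀ : 0 ≤ᵐ[μ] M) (hlaw : μ.map N = μ.bind fun ω => poissonMeasure (M ω).toNNReal) {ε : ℝ}
    (hε : 0 < ε) :
    ∃ c > 0, ∀ x : ℝ, μ.real {ω | (1 + ε) * x < M ω} - exp (-c * x) ≤ μ.real {ω | x < N ω} := by
  obtain ⟨c, hc, hPo⟩ := exists_one_sub_exp_le_poissonMeasure_real_gt hε
  refine ⟨c, hc, fun x => ?_⟩
  set B := {ω | (1 + ε) * x < M ω}
  have hB : MeasurableSet B := hM measurableSet_Ioi
  calc μ.real B - exp (-c * x)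
      = ∫ ω, (B.indicator 1 ω - exp (-c * x)) ∂μ := by
        rw [integral_sub ((integrable_const 1).indicator hB) (integrable_const _),
          integral_indicator_one hB, integral_const, probReal_univ, one_smul]
    _ ≤ ∫ ω, (poissonMeasure (M ω).toNNReal).real {n | x < n} ∂μ := by
        refine integral_mono_ae (((integrable_const 1).indicator hB).sub (integrable_const _))
          (integrable_poissonMeasure_real hM.real_toNNReal _) ?_
        filter_upwards [hM₀] with ω hω
        by_cases h : ω ∈ B
        · rw [Set.indicator_of_mem h, Pi.one_apply]
          exact hPo _ x (by rw [Real.coe_toNNReal _ hω]; exact h.out.le)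
        · rw [Set.indicator_of_notMem h]
          linarith [measureReal_nonneg (μ := poissonMeasure (M ω).toNNReal) (s := {n : ℕ | x < n}),
            exp_pos (-c * x)]
    _ = μ.real {ω | x < N ω} :=
        (measureReal_preimage_eq_integral_poissonMeasure hN hM hlaw {n : ℕ | x < n}).symm

end Mixture

def SlowlyVarying (L : ℝ → ℝ) : Prop :=
  ∀ y : ℝ, 0 < y → Tendsto (fun x => L (x * y) / L x) atTop (𝓝 1)

lemma SlowlyVarying.tendsto_rpow_mul_div {L : ℝ → ℝ} (hL : SlowlyVarying L)
    (hLpos : ∀ᶠ x in atTop, 0 < L x) (α : ℝ) {y : ℝ} (hy : 0 < y) :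
    Tendsto (fun x => (x * y) ^ (-α) * L (x * y) / (x ^ (-α) * L x)) atTop (𝓝 (y ^ (-α))) := by
  have := (hL y hy).const_mul (y ^ (-α))
  rw [mul_one] at this
  refine this.congr' ?_
  filter_upwards [hLpos, eventually_gt_atTop 0] with x hLx hx
  rw [mul_rpow hx.le hy.le]
  field_simp

lemma exists_mul_rpow_neg_le_of_doubling {T : ℝ → ℝ} {l₀ γ : ℝ} (hT : Antitone T) (hl₀ : 0 < l₀)
    (hγ : 0 ≤ γ) (hT₀ : 0 < T l₀) (hdouble : ∀ l ≥ l₀, 2 ^ (-γ) * T l ≤ T (2 * l)) :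
    ∃ C > 0, ∀ x ≥ l₀, C * x ^ (-γ) ≤ T x := by
  have hpow : ∀ n : ℕ, (2 ^ n : ℝ) ^ (-γ) * T l₀ ≤ T (2 ^ n * l₀) := by
    intro n
    induction n with
    | zero => simp
    | succ n ih =>
      calc ((2 : ℝ) ^ (n + 1)) ^ (-γ) * T l₀ = 2 ^ (-γ) * ((2 ^ n : ℝ) ^ (-γ) * T l₀) := by
            rw [pow_succ', mul_rpow (by norm_num) (by positivity), mul_assoc]
        _ ≤ 2 ^ (-γ) * T (2 ^ n * l₀) := by gcongr
        _ ≤ T (2 ^ (n + 1) * l₀) := by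
            rw [pow_succ', mul_assoc]
            exact hdouble _ (le_mul_of_one_le_left hl₀.le (one_le_pow₀ one_le_two))
  refine ⟨(2 / l₀) ^ (-γ) * T l₀, by positivity, fun x hx => ?_⟩
  obtain ⟨n, hn₁, hn₂⟩ := exists_nat_pow_near ((one_le_div hl₀).2 hx) one_lt_two
  rw [le_div_iff₀ hl₀] at hn₁
  rw [div_lt_iff₀ hl₀] at hn₂
  calc (2 / l₀) ^ (-γ) * T l₀ * x ^ (-γ) = (2 * x / l₀) ^ (-γ) * T l₀ := by
        rw [mul_right_comm, ← mul_rpow (by positivity) (by linarith), div_mul_eq_mul_div]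
    _ ≤ ((2 : ℝ) ^ (n + 1)) ^ (-γ) * T l₀ := by
        refine mul_le_mul_of_nonneg_right (rpow_le_rpow_of_nonpos (by positivity) ?_
          (neg_nonpos.2 hγ)) hT₀.le
        rw [le_div_iff₀ hl₀, pow_succ']
        linarith
    _ ≤ T (2 ^ (n + 1) * l₀) := hpow (n + 1)
    _ ≤ T x := hT hn₂.le

lemma isLittleO_exp_neg_mul_of_regularlyVarying {T L : ℝ → ℝ} {α c : ℝ} (hT : Antitone T)
    (hTL : ∀ l > 0, T l = l ^ (-α) * L l) (hL : SlowlyVarying L)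
    (hLpos : ∀ᶠ x in atTop, 0 < L x) (hc : 0 < c) :
    (fun x => exp (-c * x)) =o[atTop] T := by
  have hTpos : ∀ᶠ l in atTop, 0 < T l := by
    filter_upwards [hLpos, eventually_gt_atTop 0] with l hLl hl
    rw [hTL l hl]
    positivity
  have hratio : Tendsto (fun l => T (l * 2) / T l) atTop (𝓝 (2 ^ (-α))) := by
    refine (hL.tendsto_rpow_mul_div hLpos α two_pos).congr' ?_
    filter_upwards [eventually_gt_atTop 0] with l hl
    rw [hTL l hl, hTL _ (by positivity)]
  -- `T (2 l) / T l → 2 ^ (-α)`, so any `γ > α` is eventually a doubling exponent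
  set γ := |α| + 1
  have hγα : (2 : ℝ) ^ (-γ) < 2 ^ (-α) :=
    rpow_lt_rpow_of_exponent_lt one_lt_two (by linarith [le_abs_self α])
  obtain ⟨l₀, hl₀⟩ := eventually_atTop.1
    (((hratio.eventually (eventually_gt_nhds hγα)).and hTpos).and (eventually_gt_atTop 0))
  have hdouble : ∀ l ≥ l₀, 2 ^ (-γ) * T l ≤ T (2 * l) := fun l hl => by
    obtain ⟨⟨h, hTl⟩, -⟩ := hl₀ l hl
    rw [mul_comm 2 l]
    exact ((lt_div_iff₀ hTl).1 h).le
  obtain ⟨C, hC, hCT⟩ := exists_mul_rpow_neg_le_of_doubling hT (hl₀ l₀ le_rfl).2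
    (by positivity) (hl₀ l₀ le_rfl).1.2 hdouble
  refine (isLittleO_exp_neg_mul_rpow_atTop hc (-γ)).trans_isBigO (IsBigO.of_bound C⁻¹ ?_)
  filter_upwards [eventually_ge_atTop l₀] with x hx
  have hx₀ : 0 < x := (hl₀ l₀ le_rfl).2.trans_le hx
  have hxγ : 0 < x ^ (-γ) := rpow_pos_of_pos hx₀ _
  rw [norm_of_nonneg hxγ.le, norm_of_nonneg ((mul_pos hC hxγ).le.trans (hCT x hx)),
    ← div_eq_inv_mul, le_div_iff₀ hC, mul_comm]
  exact hCT x hx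

lemma tendsto_of_squeeze_family {ι α : Type*} {p : Filter ι} [p.NeBot] {l : Filter α}
    {f : α → ℝ} {lo hi : ι → ℝ} {a : ℝ} (hlo : Tendsto lo p (𝓝 a)) (hhi : Tendsto hi p (𝓝 a))
    (hlower : ∀ᶠ ε in p, ∃ g : α → ℝ, Tendsto g l (𝓝 (lo ε)) ∧ g ≤ᶠ[l] f)
    (hupper : ∀ᶠ ε in p, ∃ g : α → ℝ, Tendsto g l (𝓝 (hi ε)) ∧ f ≤ᶠ[l] g) :
    Tendsto f l (𝓝 a) := by
  refine tendsto_order.2 ⟨fun b hb => ?_, fun b hb => ?_⟩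
  · obtain ⟨ε, hε, g, hg, hgf⟩ := ((hlo.eventually (eventually_gt_nhds hb)).and hlower).exists
    filter_upwards [hg.eventually (eventually_gt_nhds hε), hgf] with x h₁ h₂ using h₁.trans_le h₂
  · obtain ⟨ε, hε, g, hg, hfg⟩ := ((hhi.eventually (eventually_lt_nhds hb)).and hupper).exists
    filter_upwards [hg.eventually (eventually_lt_nhds hε), hfg] with x h₁ h₂ using h₂.trans_lt h₁

lemma tendsto_div_of_sandwich {T L P : ℝ → ℝ} {α β : ℝ} (hβ : 0 < β) (hT : Antitone T)
    (hTL : ∀ l > 0, T l = l ^ (-α) * L l) (hL : SlowlyVarying L)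
    (hLpos : ∀ᶠ x in atTop, 0 < L x)
    (hlower : ∀ ε > 0, ∃ c > 0, ∀ x, T ((1 + ε) * x / β) - exp (-c * x) ≤ P x)
    (hupper : ∀ ε, 0 < ε → ε < 1 → ∃ c > 0, ∀ x, P x ≤ T ((1 - ε) * x / β) + exp (-c * x)) :
    Tendsto (fun x => P x / T (x / β)) atTop (𝓝 1) := by
  have hβx : Tendsto (fun x => x / β) atTop atTop := tendsto_id.atTop_div_const hβ
  have hTpos : ∀ᶠ x in atTop, 0 < T (x / β) := by
    filter_upwards [hβx.eventually hLpos, eventually_gt_atTop 0] with x hLx hx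
    rw [hTL _ (div_pos hx hβ)]
    positivity
  have hratio : ∀ y > 0, Tendsto (fun x => T (y * x / β) / T (x / β)) atTop (𝓝 (y ^ (-α))) := by
    intro y hy
    refine ((hL.tendsto_rpow_mul_div hLpos α hy).comp hβx).congr' ?_
    filter_upwards [eventually_gt_atTop 0] with x hx
    rw [Function.comp_apply, show y * x / β = x / β * y by ring, hTL _ (div_pos hx hβ),
      hTL _ (by positivity)]
  have hnegl : ∀ c > 0, Tendsto (fun x => exp (-c * x) / T (x / β)) atTop (𝓝 0) := by
    intro c hc
    have h := isLittleO_exp_neg_mul_of_regularlyVarying hT hTL hL hLpos (mul_pos hc hβ)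
    refine ((h.comp_tendsto hβx).tendsto_div_nhds_zero).congr fun x => ?_
    simp only [Function.comp_apply]
    congr 2
    field_simp
  have hlo : Tendsto (fun ε : ℝ => (1 + ε) ^ (-α)) (𝓝[>] 0) (𝓝 1) := by
    have : ContinuousAt (fun ε : ℝ => (1 + ε) ^ (-α)) 0 := by fun_prop (disch := norm_num)
    simpa using this.tendsto.mono_left nhdsWithin_le_nhds
  have hhi : Tendsto (fun ε : ℝ => (1 - ε) ^ (-α)) (𝓝[>] 0) (𝓝 1) := by
    have : ContinuousAt (fun ε : ℝ => (1 - ε) ^ (-α)) 0 := by fun_prop (disch := norm_num)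
    simpa using this.tendsto.mono_left nhdsWithin_le_nhds
  refine tendsto_of_squeeze_family hlo hhi ?_ ?_
  · filter_upwards [self_mem_nhdsWithin] with ε (hε : 0 < ε)
    obtain ⟨c, hc, h⟩ := hlower ε hε
    refine ⟨_, by simpa only [sub_zero] using (hratio (1 + ε) (by linarith)).sub (hnegl c hc), ?_⟩
    filter_upwards [hTpos] with x hx
    rw [← sub_div]
    exact div_le_div_of_nonneg_right (h x) hx.le
  · filter_upwards [Ioo_mem_nhdsGT one_pos] with ε ⟨hε₀, hε₁⟩
    obtain ⟨c, hc, h⟩ := hupper ε hε₀ hε₁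
    refine ⟨_, by simpa only [add_zero] using (hratio (1 - ε) (by linarith)).add (hnegl c hc), ?_⟩
    filter_upwards [hTpos] with x hx
    rw [← add_div]
    exact div_le_div_of_nonneg_right (h x) hx.le

theorem mixed_poisson_regularly_varying_tail_general
    {Ω : Type*} [MeasureSpace Ω] [IsProbabilityMeasure (ℙ : Measure Ω)]
    (N : Ω → ℕ) (hN : Measurable N)
    (Λ : Ω → ℝ) (hΛ : Measurable Λ) (hΛpos : 0 ≤ᵐ[ℙ] Λ)
    (β : ℝ) (hβ : 0 < β)
    -- conditionally on `Λ = λ`, `N` is Poisson with mean `βλ`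
    (hmixed : ∀ n : ℕ, (ℙ {ω | N ω = n}).toReal
        = ∫ ω, Real.exp (-(β * Λ ω)) * (β * Λ ω) ^ n / n.factorial ∂ℙ)
    -- Gutenberg–Richter law: `P[Λ > λ] = λ^{-α} L(λ)` with `L` slowly varying
    (α : ℝ)
    (L : ℝ → ℝ) (hLpos : ∀ᶠ x in atTop, 0 < L x)
    (hL : ∀ y : ℝ, 0 < y → Tendsto (fun x : ℝ => L (x * y) / L x) atTop (𝓝 1))
    (htailΛ : ∀ l : ℝ, 0 < l → (ℙ {ω | l < Λ ω}).toReal = l ^ (-α) * L l) :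
    Tendsto (fun x : ℝ =>
        (ℙ {ω | x < (N ω : ℝ)}).toReal / ((x / β) ^ (-α) * L (x / β)))
      atTop (𝓝 1) := by
  have hM : Measurable fun ω => β * Λ ω := hΛ.const_mul β
  have hM₀ : 0 ≤ᵐ[ℙ] fun ω => β * Λ ω := by
    filter_upwards [hΛpos] with ω hω using mul_nonneg hβ.le hω
  have hlaw := map_eq_bind_poissonMeasure hN hM hM₀ hmixed
  have hset : ∀ a : ℝ, {ω | a < β * Λ ω} = {ω | a / β < Λ ω} := fun a => by
    ext ω
    exact (div_lt_iff₀' hβ).symm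
  have hT : Antitone fun l => (ℙ {ω | l < Λ ω}).toReal := fun a b hab =>
    ENNReal.toReal_mono (measure_ne_top _ _) (measure_mono fun ω (h : b < Λ ω) => hab.trans_lt h)
  refine (tendsto_div_of_sandwich (P := fun x => (ℙ {ω | x < (N ω : ℝ)}).toReal) hβ hT htailΛ hL
    hLpos (fun ε hε => ?_) (fun ε hε₀ hε₁ => ?_)).congr' ?_
  · simpa only [hset, measureReal_def] using measureReal_sub_exp_le_lt hN hM hM₀ hlaw hε
  · simpa only [hset, measureReal_def] using measureReal_lt_le_add_exp hN hM hM₀ hlaw hε₀ hε₁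
  · filter_upwards [eventually_gt_atTop 0] with x hx
    rw [← htailΛ _ (div_pos hx hβ)]

/-- Earthquake insurance example: if `N` is mixed Poisson with random mean `βΛ` and
`P[Λ > λ] = λ^{-α} L(λ)` with `L` slowly varying, then
`P[N > x] ~ P[Λ > x/β] = (x/β)^{-α} L(x/β)` as `x → ∞`. -/
theorem mixed_poisson_regularly_varying_tail
    {Ω : Type*} [MeasureSpace Ω] [IsProbabilityMeasure (ℙ : Measure Ω)]
    (N : Ω → ℕ) (hN : Measurable N)
    (Λ : Ω → ℝ) (hΛ : Measurable Λ) (hΛpos : 0 ≤ᵐ[ℙ] Λ)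
    (β : ℝ) (hβ : 0 < β)
    -- conditionally on `Λ = λ`, `N` is Poisson with mean `βλ`
    (hmixed : ∀ n : ℕ, (ℙ {ω | N ω = n}).toReal
        = ∫ ω, Real.exp (-(β * Λ ω)) * (β * Λ ω) ^ n / n.factorial ∂ℙ)
    -- Gutenberg–Richter law: `P[Λ > λ] = λ^{-α} L(λ)` with `L` slowly varying
    (α : ℝ) (hα : 0 < α)
    (L : ℝ → ℝ) (hLpos : ∀ᶠ x in atTop, 0 < L x)
    (hL : ∀ y : ℝ, 0 < y → Tendsto (fun x : ℝ => L (x * y) / L x) atTop (𝓝 1))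
    (htailΛ : ∀ l : ℝ, 0 < l → (ℙ {ω | l < Λ ω}).toReal = l ^ (-α) * L l) :
    Tendsto (fun x : ℝ =>
        (ℙ {ω | x < (N ω : ℝ)}).toReal / ((x / β) ^ (-α) * L (x / β)))
      atTop (𝓝 1) :=
  mixed_poisson_regularly_varying_tail_general N hN Λ hΛ hΛpos β hβ hmixed α L hLpos hL htailΛ
end
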